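/- arXiv:1903.08069 — 8 statements merged into one kernel-verified Lean document; each statement's English description precedes it below -/
import Mathlib

section
/- If ω(z) = c₁z + c₂z² + c₃z³ + ⋯ is analytic on the unit disk with ω(0) = 0 and |ω(z)| < 1, then |c₃(1 - |c₁|²) + conj(c₁)·c₂²| ≤ (1 - |c₁|²)² - |c₂|². -/
open Metric

section Helpers

open Complex Set

private lemma mobius_normSq (a w : ℂ) :
    normSq (1 - (starRingEnd ℂ) a * w) - normSq (w - a)
      = (1 - normSq a) * (1 - normSq w) := by
  simp only [normSq_apply, Complex.sub_re, Complex.sub_im, Complex.mul_re, Complex.mul_im,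
    Complex.one_re, Complex.one_im, Complex.conj_re, Complex.conj_im]
  ring

private lemma mobius_lt_one {a w : ℂ} (ha : ‖a‖ < 1) (hw : ‖w‖ < 1) :
    ‖(w - a) / (1 - (starRingEnd ℂ) a * w)‖ < 1 := by
  have hd : ‖1 - (starRingEnd ℂ) a * w‖ > 0 := by
    have : ‖(starRingEnd ℂ) a * w‖ < 1 := by
      rw [norm_mul, Complex.norm_conj]
      nlinarith [norm_nonneg a, norm_nonneg w]
    have h1 : (1 : ℂ) - (starRingEnd ℂ) a * w ≠ 0 := by
      intro h
      rw [sub_eq_zero] at h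
      rw [← h] at this
      simp at this
    simpa [norm_pos_iff] using h1
  rw [norm_div, div_lt_one hd]
  have hkey := mobius_normSq a w
  have h1 : normSq (w - a) < normSq (1 - (starRingEnd ℂ) a * w) := by
    have hna : normSq a < 1 := by
      nlinarith [Complex.sq_norm a, norm_nonneg a]
    have hnw : normSq w < 1 := by
      nlinarith [Complex.sq_norm w, norm_nonneg w]
    have hpos : (1 - normSq a) * (1 - normSq w) > 0 :=
      mul_pos (by linarith) (by linarith)
    linarith
  rw [Complex.norm_def, Complex.norm_def]
  exact Real.sqrt_lt_sqrt (normSq_nonneg _) h1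

private lemma maxmod_strict {f : ℂ → ℂ} (hd : DifferentiableOn ℂ f (ball 0 1))
    (hb : ∀ z ∈ ball (0:ℂ) 1, ‖f z‖ ≤ 1)
    (h0 : ‖f 0‖ < 1) :
    ∀ z ∈ ball (0:ℂ) 1, ‖f z‖ < 1 := by
  intro z hz
  by_contra hzc
  push_neg at hzc
  have heq : ‖f z‖ = 1 := le_antisymm (hb z hz) hzc
  have hmax : IsMaxOn (norm ∘ f) (ball (0:ℂ) 1) z := by
    intro y hy
    simp only [Function.comp_apply, Set.mem_setOf_eq, heq]
    exact hb y hy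
  have := Complex.eqOn_of_isPreconnected_of_isMaxOn_norm
    (convex_ball (0:ℂ) 1).isPreconnected isOpen_ball hd hz hmax
    (mem_ball_self one_pos)
  rw [this] at h0
  simp only [Function.const_apply, heq] at h0
  exact absurd h0 (lt_irrefl 1)

private lemma olt_one_sub_sq {a : ℂ} (h : ‖a‖ < 1) :
    ‖1 - (starRingEnd ℂ) a * a‖ = 1 - ‖a‖ ^ 2 ∧
    (0:ℝ) < 1 - ‖a‖ ^ 2 := by
  constructor
  · have habs : (1 : ℂ) - (starRingEnd ℂ) a * a = ((1 - ‖a‖ ^ 2 : ℝ) : ℂ) := by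
      rw [Complex.sq_norm, Complex.ofReal_sub, Complex.ofReal_one,
        Complex.normSq_eq_conj_mul_self]
    rw [habs, Complex.norm_real, Real.norm_eq_abs, _root_.abs_of_nonneg]
    nlinarith [norm_nonneg a]
  · nlinarith [norm_nonneg a]

private lemma schwarz_pick_center {f : ℂ → ℂ} (hd : DifferentiableOn ℂ f (ball 0 1))
    (hb : ∀ z ∈ ball (0:ℂ) 1, ‖f z‖ ≤ 1) :
    ‖deriv f 0‖ ≤ 1 - ‖f 0‖ ^ 2 := by
  have h0m : (0:ℂ) ∈ ball (0:ℂ) 1 := mem_ball_self one_pos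
  rcases lt_or_eq_of_le (hb 0 h0m) with h0 | h0
  · have hstrict := maxmod_strict hd hb h0
    set a := f 0 with ha_def
    have hden : ∀ z ∈ ball (0:ℂ) 1, (1 - (starRingEnd ℂ) a * f z) ≠ 0 := by
      intro z hz h
      rw [sub_eq_zero] at h
      have : ‖(starRingEnd ℂ) a * f z‖ = 1 := by rw [← h]; simp
      rw [norm_mul, Complex.norm_conj] at this
      nlinarith [norm_nonneg a, norm_nonneg (f z), hstrict z hz, h0]
    set H : ℂ → ℂ := fun z => (f z - a) / (1 - (starRingEnd ℂ) a * f z) with hH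
    have hHd : DifferentiableOn ℂ H (ball 0 1) := by
      apply DifferentiableOn.div
      · exact hd.sub (differentiableOn_const a)
      · exact (differentiableOn_const 1).sub ((differentiableOn_const _).mul hd)
      · exact hden
    have hH0 : H 0 = 0 := by simp [hH, ha_def]
    have hmaps : MapsTo H (ball (0:ℂ) 1) (ball (H 0) 1) := by
      intro z hz
      rw [hH0, mem_ball_zero_iff]
      exact mobius_lt_one h0 (hstrict z hz)
    have hSch : ‖deriv H 0‖ ≤ 1 / 1 :=
      Complex.norm_deriv_le_div_of_mapsTo_ball hHd (hmaps.mono_right ball_subset_closedBall) one_pos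
    have hfd : HasDerivAt f (deriv f 0) 0 :=
      (hd.differentiableAt (isOpen_ball.mem_nhds h0m)).hasDerivAt
    have hden0 : (1 - (starRingEnd ℂ) a * f 0) ≠ 0 := hden 0 h0m
    have hHder : HasDerivAt H
        ((deriv f 0 * (1 - (starRingEnd ℂ) a * f 0) -
          (f 0 - a) * (0 - ((starRingEnd ℂ) a * deriv f 0))) /
          (1 - (starRingEnd ℂ) a * f 0) ^ 2) 0 := by
      exact HasDerivAt.div (hfd.sub_const a)
        ((hasDerivAt_const 0 (1:ℂ)).sub ((hfd.const_mul _))) hden0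
    have hval : deriv H 0 = deriv f 0 / (1 - (starRingEnd ℂ) a * f 0) := by
      rw [hHder.deriv, ← ha_def]
      rw [← ha_def] at hden0
      rw [div_eq_div_iff (pow_ne_zero 2 hden0) hden0]
      ring
    obtain ⟨habs, hpos⟩ := olt_one_sub_sq h0
    rw [hval, ← ha_def] at hSch
    rw [norm_div, habs] at hSch
    rw [div_le_div_iff₀ hpos one_pos] at hSch
    calc ‖deriv f 0‖ ≤ 1 - ‖a‖ ^ 2 := by linarith
      _ = 1 - ‖f 0‖ ^ 2 := by rw [ha_def]
  · have hmax : IsMaxOn (norm ∘ f) (ball (0:ℂ) 1) 0 := by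
      intro y hy
      simp only [Function.comp_apply, Set.mem_setOf_eq, h0]
      exact hb y hy
    have hconst := Complex.eqOn_of_isPreconnected_of_isMaxOn_norm
      (convex_ball (0:ℂ) 1).isPreconnected isOpen_ball hd h0m hmax
    have hev : f =ᶠ[nhds (0:ℂ)] (fun _ => f 0) := by
      filter_upwards [isOpen_ball.mem_nhds h0m] with z hz
      exact hconst hz
    rw [hev.deriv_eq, deriv_const]
    simp [h0]

private lemma coeff_eq_iteratedDeriv {f : ℂ → ℂ} {p : FormalMultilinearSeries ℂ ℂ ℂ}
    (hp : HasFPowerSeriesAt f p 0) (n : ℕ) :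
    p.coeff n = iteratedDeriv n f 0 / n.factorial := by
  obtain ⟨r, hr⟩ := hp
  have h := hr.factorial_smul (1:ℂ) n
  have h2 : (n.factorial : ℂ) * p.coeff n = iteratedDeriv n f 0 := by
    rw [iteratedDeriv_eq_iteratedFDeriv, ← h, FormalMultilinearSeries.apply_eq_pow_smul_coeff,
      one_pow, one_smul, nsmul_eq_mul]
  rw [← h2, mul_comm, mul_div_assoc, div_self (by exact_mod_cast n.factorial_ne_zero), mul_one]

end Helpers

/-- Schwarz function third coefficient inequality (Prokhorov–Szynal). -/
theorem schwarz_third_coeff (ω : ℂ → ℂ) (c : ℕ → ℂ)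
    (hω : AnalyticOn ℂ ω (ball 0 1))
    (h0 : ω 0 = 0)
    (hb : ∀ z ∈ ball (0:ℂ) 1, ‖ω z‖ < 1)
    (hc : ∀ n, c n = iteratedDeriv n ω 0 / n.factorial) :
    ‖c 3 * (1 - ((‖c 1‖ : ℝ) : ℂ) ^ 2) + (starRingEnd ℂ) (c 1) * c 2 ^ 2‖
      ≤ (1 - ‖c 1‖ ^ 2) ^ 2 - ‖c 2‖ ^ 2 := by
  have h0m : (0:ℂ) ∈ ball (0:ℂ) 1 := mem_ball_self one_pos
  have hωnhd : AnalyticOnNhd ℂ ω (ball 0 1) :=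
    (isOpen_ball.analyticOn_iff_analyticOnNhd).mp hω
  have hωdiff : DifferentiableOn ℂ ω (ball 0 1) := fun z hz =>
    ((hωnhd z hz).differentiableAt).differentiableWithinAt
  obtain ⟨p, hp⟩ := hωnhd 0 h0m
  have hcp : ∀ n, c n = p.coeff n := fun n => by
    rw [hc n, coeff_eq_iteratedDeriv hp n]
  set g : ℂ → ℂ := dslope ω 0 with hgdef
  have hgp : HasFPowerSeriesAt g p.fslope 0 := hp.has_fpower_series_dslope_fslope
  have hgd : DifferentiableOn ℂ g (ball 0 1) :=
    (Complex.differentiableOn_dslope (ball_mem_nhds (0:ℂ) one_pos)).mpr hωdiff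
  have hg0 : g 0 = c 1 := by
    have : p.fslope.coeff 0 = g 0 := hgp.coeff_zero 1
    rw [← this, FormalMultilinearSeries.coeff_fslope, ← hcp 1]
  have hdg0 : deriv g 0 = c 2 := by
    have : deriv g 0 = p.fslope.coeff 1 := hgp.deriv
    rw [this, FormalMultilinearSeries.coeff_fslope, ← hcp 2]
  have hg2c : iteratedDeriv 2 g 0 = 2 * c 3 := by
    have h1 : p.coeff 3 = iteratedDeriv 2 g 0 / 2 := by
      have := coeff_eq_iteratedDeriv hgp 2
      norm_num at this
      exact this
    rw [← hcp 3] at h1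
    rw [h1]; ring
  -- Schwarz: |g| ≤ 1 on the ball
  have hmapsω : Set.MapsTo ω (ball 0 1) (ball (ω 0) 1) := by
    intro z hz
    rw [h0, mem_ball_zero_iff]
    exact hb z hz
  have hgb : ∀ z ∈ ball (0:ℂ) 1, ‖g z‖ ≤ 1 := by
    intro z hz
    have := Complex.norm_dslope_le_div_of_mapsTo_ball hωdiff (hmapsω.mono_right ball_subset_closedBall) hz
    rwa [div_one] at this
  have hc1le : ‖c 1‖ ≤ 1 := by
    rw [← hg0]; exact hgb 0 h0m
  rcases lt_or_eq_of_le hc1le with hc1 | hc1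
  · -- main case : |c 1| < 1
    have hgs : ∀ z ∈ ball (0:ℂ) 1, ‖g z‖ < 1 :=
      maxmod_strict hgd hgb (by rw [hg0]; exact hc1)
    set k : ℂ := (starRingEnd ℂ) (c 1) with hk
    have hden : ∀ z ∈ ball (0:ℂ) 1, (1 - k * g z) ≠ 0 := by
      intro z hz h
      rw [sub_eq_zero] at h
      have : ‖k * g z‖ = 1 := by rw [← h]; simp
      rw [hk, norm_mul, Complex.norm_conj] at this
      nlinarith [norm_nonneg (c 1), norm_nonneg (g z), hgs z hz, hc1]
    set G : ℂ → ℂ := fun z => (g z - c 1) / (1 - k * g z) with hG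
    have hGd : DifferentiableOn ℂ G (ball 0 1) := by
      apply DifferentiableOn.div
      · exact hgd.sub (differentiableOn_const _)
      · exact (differentiableOn_const 1).sub ((differentiableOn_const _).mul hgd)
      · exact hden
    have hG0 : G 0 = 0 := by simp [hG, hg0]
    have hGmaps : Set.MapsTo G (ball (0:ℂ) 1) (ball (G 0) 1) := by
      intro z hz
      rw [hG0, mem_ball_zero_iff]
      exact mobius_lt_one hc1 (hgs z hz)
    -- h = dslope G 0
    have hhd : DifferentiableOn ℂ (dslope G 0) (ball 0 1) :=
      (Complex.differentiableOn_dslope (ball_mem_nhds (0:ℂ) one_pos)).mpr hGd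
    have hhb : ∀ z ∈ ball (0:ℂ) 1, ‖dslope G 0 z‖ ≤ 1 := by
      intro z hz
      have := Complex.norm_dslope_le_div_of_mapsTo_ball hGd (hGmaps.mono_right ball_subset_closedBall) hz
      rwa [div_one] at this
    have hSP : ‖deriv (dslope G 0) 0‖
        ≤ 1 - ‖dslope G 0 0‖ ^ 2 := schwarz_pick_center hhd hhb
    -- power series of G
    have hGa : AnalyticAt ℂ G 0 := by
      apply AnalyticAt.div
      · exact hgp.analyticAt.sub analyticAt_const
      · exact analyticAt_const.sub (analyticAt_const.mul hgp.analyticAt)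
      · exact hden 0 h0m
    obtain ⟨q, hq⟩ := hGa
    have hq1 : q.coeff 1 = deriv G 0 := hq.deriv.symm
    have hq2 : q.coeff 2 = iteratedDeriv 2 G 0 / 2 := by
      have := coeff_eq_iteratedDeriv hq 2
      norm_num at this
      exact this
    have hds0 : dslope G 0 0 = deriv G 0 := dslope_same G 0
    have hdds : deriv (dslope G 0) 0 = q.coeff 2 := by
      have h1 : deriv (dslope G 0) 0 = q.fslope.coeff 1 :=
        (hq.has_fpower_series_dslope_fslope).deriv
      rw [h1, FormalMultilinearSeries.coeff_fslope]
    -- compute deriv G 0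
    set S : ℂ := 1 - k * c 1 with hSdef
    have hS0 : S ≠ 0 := by
      have := hden 0 h0m
      rwa [hg0, ← hSdef] at this
    obtain ⟨hSabs, hspos⟩ := olt_one_sub_sq hc1
    have hSabs' : ‖S‖ = 1 - ‖c 1‖ ^ 2 := by
      rw [hSdef, hk]; exact hSabs
    have hgder : HasDerivAt g (c 2) 0 := by
      rw [← hdg0]
      exact (hgd.differentiableAt (isOpen_ball.mem_nhds h0m)).hasDerivAt
    have hGder : HasDerivAt G
        ((c 2 * (1 - k * g 0) - (g 0 - c 1) * (0 - k * c 2)) / (1 - k * g 0) ^ 2) 0 :=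
      HasDerivAt.div (hgder.sub_const _)
        ((hasDerivAt_const 0 (1:ℂ)).sub (hgder.const_mul k)) (hden 0 h0m)
    have hdG0 : deriv G 0 = c 2 / S := by
      rw [hGder.deriv, hg0, ← hSdef]
      field_simp
      ring
    -- second derivative of G
    have hev : deriv G =ᶠ[nhds (0:ℂ)] fun z => S * deriv g z / (1 - k * g z) ^ 2 := by
      have h1 : ∀ᶠ z in nhds (0:ℂ), AnalyticAt ℂ g z := hgp.analyticAt.eventually_analyticAt
      have hcont : ContinuousAt (fun z => 1 - k * g z) 0 :=
        (continuousAt_const.sub (continuousAt_const.mul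
          (hgd.continuousOn.continuousAt (isOpen_ball.mem_nhds h0m))))
      have h2 : ∀ᶠ z in nhds (0:ℂ), (1 - k * g z) ≠ 0 := by
        apply hcont.eventually_ne
        rw [hg0, ← hSdef]; exact hS0
      filter_upwards [h1, h2] with z hz1 hz2
      have hgz : HasDerivAt g (deriv g z) z := hz1.differentiableAt.hasDerivAt
      have hGz : HasDerivAt G
          ((deriv g z * (1 - k * g z) - (g z - c 1) * (0 - k * deriv g z)) /
            (1 - k * g z) ^ 2) z :=
        HasDerivAt.div (hgz.sub_const _)
          ((hasDerivAt_const z (1:ℂ)).sub (hgz.const_mul k)) hz2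
      rw [hGz.deriv, hSdef]
      field_simp
      ring
    have hdg2 : HasDerivAt (deriv g) (2 * c 3) 0 := by
      obtain ⟨U, hUmem, hUan⟩ := hgp.analyticAt.exists_mem_nhds_analyticOnNhd
      have hda : AnalyticAt ℂ (deriv g) 0 := hUan.deriv 0 (mem_of_mem_nhds hUmem)
      have : deriv (deriv g) 0 = 2 * c 3 := by
        rw [← hg2c, iteratedDeriv_succ, iteratedDeriv_one]
      rw [← this]
      exact hda.differentiableAt.hasDerivAt
    have hFder : HasDerivAt (fun z => S * deriv g z / (1 - k * g z) ^ 2)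
        ((S * (2 * c 3) * (1 - k * g 0) ^ 2 -
          S * deriv g 0 * ((2:ℂ) * (1 - k * g 0) ^ 1 * (0 - k * c 2))) /
          ((1 - k * g 0) ^ 2) ^ 2) 0 := by
      apply HasDerivAt.div (hdg2.const_mul S)
      · exact ((hasDerivAt_const 0 (1:ℂ)).sub (hgder.const_mul k)).pow 2
      · exact pow_ne_zero 2 (hden 0 h0m)
    have hq2val : q.coeff 2 = (c 3 * S + k * c 2 ^ 2) / S ^ 2 := by
      rw [hq2]
      rw [show iteratedDeriv 2 G 0 = deriv (deriv G) 0 by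
        rw [iteratedDeriv_succ, iteratedDeriv_one]]
      rw [hev.deriv_eq, hFder.deriv, hg0, hdg0, ← hSdef]
      field_simp
      ring
    -- assemble
    have hScast : (1:ℂ) - ((‖c 1‖ : ℝ) : ℂ) ^ 2 = S := by
      rw [hSdef, hk,
        show ((‖c 1‖ : ℂ)) ^ 2 = ((‖c 1‖ ^ 2 : ℝ) : ℂ) by push_cast; ring,
        Complex.sq_norm, Complex.normSq_eq_conj_mul_self]
    rw [hds0, hdG0, hdds, hq2val] at hSP
    rw [norm_div, norm_div, norm_pow, hSabs', div_pow] at hSP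
    rw [hScast]
    have hs2 : (0:ℝ) < (1 - ‖c 1‖ ^ 2) ^ 2 := by positivity
    have hsum : (‖c 3 * S + k * c 2 ^ 2‖ + ‖c 2‖ ^ 2)
        / (1 - ‖c 1‖ ^ 2) ^ 2 ≤ 1 := by
      rw [add_div]
      linarith
    rw [div_le_one hs2] at hsum
    linarith
  · -- boundary case: |c 1| = 1, then g is constant and c 2 = c 3 = 0
    have hmax : IsMaxOn (norm ∘ g) (ball (0:ℂ) 1) 0 := by
      intro y hy
      simp only [Function.comp_apply, Set.mem_setOf_eq, hg0, hc1]
      exact hgb y hy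
    have hconst := Complex.eqOn_of_isPreconnected_of_isMaxOn_norm
      (convex_ball (0:ℂ) 1).isPreconnected isOpen_ball hgd h0m hmax
    have hevg : g =ᶠ[nhds (0:ℂ)] (fun _ => g 0) := by
      filter_upwards [isOpen_ball.mem_nhds h0m] with z hz
      exact hconst hz
    have hc2 : c 2 = 0 := by
      rw [← hdg0, hevg.deriv_eq, deriv_const]
    have hc3 : c 3 = 0 := by
      have h1 : iteratedDeriv 2 g 0 = 0 := by
        rw [iteratedDeriv_succ, iteratedDeriv_one]
        rw [(hevg.deriv).deriv_eq]
        simp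
      rw [h1] at hg2c
      field_simp at hg2c
      exact (mul_eq_zero.mp hg2c.symm).resolve_left two_ne_zero
    rw [hc2, hc3, hc1]
    simp
end

section
/- If ω(z) = c₁z + c₂z² + c₃z³ + ⋯ is analytic on the unit disk with ω(0) = 0, |ω(z)| < 1, and c₁ ≥ 0 is real, then |c₃| ≤ 1 - c₁² - |c₂|²/(1 + c₁). -/
open Metric Set Function

private lemma aux_coeff {f : ℂ → ℂ} {p : FormalMultilinearSeries ℂ ℂ ℂ}
    (h : HasFPowerSeriesAt f p 0) (n : ℕ) :
    p.coeff n = iteratedDeriv n f 0 / n.factorial := by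
  obtain ⟨r, hr⟩ := h
  have h1 := hr.factorial_smul (1 : ℂ) n
  rw [← iteratedDeriv_eq_iteratedFDeriv] at h1
  have h2 : (n.factorial : ℂ) * p.coeff n = iteratedDeriv n f 0 := by
    rw [← h1, nsmul_eq_mul]; rfl
  rw [← h2, mul_comm, mul_div_assoc, div_self (by exact_mod_cast n.factorial_ne_zero), mul_one]

private lemma aux_mobius (m w : ℂ) (hm : ‖m‖ ≤ 1) (hw : ‖w‖ ≤ 1) :
    ‖w - m‖ ≤ ‖1 - (starRingEnd ℂ) m * w‖ := by
  have key : Complex.normSq (1 - (starRingEnd ℂ) m * w) - Complex.normSq (w - m)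
      = (1 - Complex.normSq m) * (1 - Complex.normSq w) := by
    simp [Complex.normSq_apply, Complex.mul_re, Complex.mul_im]; ring
  have hm2 : Complex.normSq m ≤ 1 := by
    have h := Complex.sq_norm m; nlinarith [norm_nonneg m]
  have hw2 : Complex.normSq w ≤ 1 := by
    have h := Complex.sq_norm w; nlinarith [norm_nonneg w]
  rw [Complex.norm_def, Complex.norm_def]
  apply Real.sqrt_le_sqrt; nlinarith [Complex.normSq_nonneg m, Complex.normSq_nonneg w]

private lemma aux_dslope_le {f : ℂ → ℂ} (hd : DifferentiableOn ℂ f (ball 0 1)) (h0 : f 0 = 0)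
    (hle : ∀ z ∈ ball (0:ℂ) 1, ‖f z‖ ≤ 1) {z : ℂ} (hz : z ∈ ball (0:ℂ) 1) :
    ‖dslope f 0 z‖ ≤ 1 := by
  refine le_of_forall_pos_le_add fun ε hε => ?_
  have maps : MapsTo f (ball 0 1) (ball (f 0) (1 + ε)) := fun w hw => by
    rw [h0, mem_ball_zero_iff]
    exact lt_of_le_of_lt (hle w hw) (by linarith)
  have := Complex.norm_dslope_le_div_of_mapsTo_ball hd (maps.mono_right ball_subset_closedBall) hz
  rw [div_one] at this; linarith

private lemma aux_const {f : ℂ → ℂ} {v : ℂ} (h : EqOn f (fun _ => v) (ball (0:ℂ) 1)) :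
    deriv f 0 = 0 ∧ iteratedDeriv 2 f 0 = 0 := by
  have hmem : (0:ℂ) ∈ ball (0:ℂ) 1 := mem_ball_self one_pos
  have hder : ∀ z ∈ ball (0:ℂ) 1, deriv f z = 0 := fun z hz => by
    have : f =ᶠ[nhds z] fun _ => v := Filter.eventuallyEq_of_mem (isOpen_ball.mem_nhds hz) h
    rw [this.deriv_eq, deriv_const]
  refine ⟨hder 0 hmem, ?_⟩
  have : deriv f =ᶠ[nhds (0:ℂ)] fun _ => 0 :=
    Filter.eventuallyEq_of_mem (isOpen_ball.mem_nhds hmem) hder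
  rw [show (2:ℕ) = 1 + 1 from rfl, iteratedDeriv_succ, iteratedDeriv_one, this.deriv_eq,
    deriv_const]

set_option maxHeartbeats 1600000 in
/-- If the first Schwarz coefficient c₁ is real and nonnegative, then
|c₃| ≤ 1 - c₁² - |c₂|²/(1 + c₁). -/
theorem schwarz_third_coeff_real (ω : ℂ → ℂ) (c : ℕ → ℂ)
    (hω : AnalyticOn ℂ ω (ball 0 1))
    (h0 : ω 0 = 0)
    (hb : ∀ z ∈ ball (0:ℂ) 1, ‖ω z‖ < 1)
    (hc : ∀ n, c n = iteratedDeriv n ω 0 / n.factorial)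
    (hreal : (c 1).im = 0) (hpos : 0 ≤ (c 1).re) :
    ‖c 3‖ ≤ 1 - (c 1).re ^ 2 - ‖c 2‖ ^ 2 / (1 + (c 1).re) := by
  set a := (c 1).re with ha_def
  have h01 : (0:ℂ) ∈ ball (0:ℂ) 1 := mem_ball_self one_pos
  have hωA : AnalyticOnNhd ℂ ω (ball 0 1) := isOpen_ball.analyticOn_iff_analyticOnNhd.mp hω
  have hωd : DifferentiableOn ℂ ω (ball 0 1) := hωA.differentiableOn
  obtain ⟨p, hp⟩ : AnalyticAt ℂ ω 0 := hωA 0 h01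
  have cp : ∀ n, c n = p.coeff n := fun n => by rw [hc n, aux_coeff hp n]
  set g := dslope ω 0 with hg_def
  have hg : HasFPowerSeriesAt g p.fslope 0 := hp.has_fpower_series_dslope_fslope
  have hgd : DifferentiableOn ℂ g (ball 0 1) :=
    (Complex.differentiableOn_dslope (isOpen_ball.mem_nhds h01)).mpr hωd
  have hgA : AnalyticOnNhd ℂ g (ball 0 1) := by
    intro z hz
    rcases eq_or_ne z 0 with rfl | hz0
    · exact hg.analyticAt
    · have h1 : AnalyticAt ℂ (fun w => (ω w - ω 0) / (w - 0)) z :=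
        ((hωA z hz).sub analyticAt_const).div (analyticAt_id.sub analyticAt_const)
          (by simpa using hz0)
      refine h1.congr ?_
      filter_upwards [eventually_ne_nhds hz0] with w hw
      rw [hg_def, dslope_of_ne _ hw, slope_def_field]
  have hg0 : g 0 = c 1 := by
    rw [hg_def, dslope_same, hc 1, iteratedDeriv_one]; simp
  have hk : c 1 = (a : ℂ) := by
    apply Complex.ext <;> simp [hreal, ha_def]
  have hgle : ∀ z ∈ ball (0:ℂ) 1, ‖g z‖ ≤ 1 := by
    intro z hz
    have maps : MapsTo ω (ball 0 1) (ball (ω 0) 1) := fun w hw => by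
      rw [h0, mem_ball_zero_iff]; exact hb w hw
    have := Complex.norm_dslope_le_div_of_mapsTo_ball hωd (maps.mono_right ball_subset_closedBall) hz
    rwa [div_one] at this
  have ha1 : a ≤ 1 := by
    have h1 := hgle 0 h01
    rw [hg0, hk, Complex.norm_real, Real.norm_eq_abs, abs_of_nonneg hpos] at h1
    exact h1
  have hc2 : deriv g 0 = c 2 := by
    rw [hg.deriv, cp 2, ← FormalMultilinearSeries.coeff_fslope]
    rfl
  have hc3 : iteratedDeriv 2 g 0 = 2 * c 3 := by
    have h2 := aux_coeff hg 2
    rw [FormalMultilinearSeries.coeff_fslope, ← cp 3] at h2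
    rw [h2]
    simp [Nat.factorial]
    ring
  rcases eq_or_lt_of_le ha1 with haeq | halt
  · -- a = 1 : ω is z ↦ z, so c₂ = c₃ = 0
    have hmax : IsMaxOn (norm ∘ g) (ball 0 1) 0 := by
      intro z hz
      simp only [comp_apply, Set.mem_setOf_eq]
      rw [hg0, hk, Complex.norm_real, Real.norm_eq_abs, abs_of_nonneg hpos, haeq]
      exact hgle z hz
    have hconst := Complex.eqOn_of_isPreconnected_of_isMaxOn_norm
      (convex_ball (0:ℂ) 1).isPreconnected isOpen_ball hgd h01 hmax
    obtain ⟨hd1, hd2⟩ := aux_const hconst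
    have hc20 : c 2 = 0 := by rw [← hc2, hd1]
    have hc30 : c 3 = 0 := by
      have h3 : 2 * c 3 = 0 := by rw [← hc3, hd2]
      simpa using (mul_eq_zero.mp h3).resolve_left two_ne_zero
    rw [hc20, hc30, haeq]
    simp
  · -- main case : a < 1
    set s : ℝ := 1 - a ^ 2 with hs_def
    have hs : 0 < s := by nlinarith
    have hsC : ((s:ℝ):ℂ) ≠ 0 := Complex.ofReal_ne_zero.mpr (ne_of_gt hs)
    set D : ℂ → ℂ := fun z => 1 - (a:ℂ) * g z with hD_def
    have hD : ∀ z ∈ ball (0:ℂ) 1, D z ≠ 0 := by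
      intro z hz hcontra
      have h1 : ‖(a:ℂ) * g z‖ < 1 := by
        rw [norm_mul, Complex.norm_real, Real.norm_eq_abs, abs_of_nonneg hpos]
        nlinarith [hgle z hz, norm_nonneg (g z)]
      have h2 : (1:ℂ) = (a:ℂ) * g z := by
        have := sub_eq_zero.mp hcontra; exact this
      rw [← h2] at h1; simp at h1
    have hD0 : D 0 = (s : ℂ) := by
      rw [hD_def]; simp only []
      rw [hg0, hk, hs_def]; push_cast; ring
    set ψ : ℂ → ℂ := fun z => (g z - (a:ℂ)) / D z with hψ_def
    have hψA : AnalyticOnNhd ℂ ψ (ball 0 1) := fun z hz =>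
      ((hgA z hz).sub analyticAt_const).div
        (analyticAt_const.sub (analyticAt_const.mul (hgA z hz))) (hD z hz)
    have hψd : DifferentiableOn ℂ ψ (ball 0 1) := hψA.differentiableOn
    have hψ0 : ψ 0 = 0 := by
      rw [hψ_def]; simp only []
      rw [hg0, hk]; simp
    have hψle : ∀ z ∈ ball (0:ℂ) 1, ‖ψ z‖ ≤ 1 := by
      intro z hz
      have hmob := aux_mobius ((a:ℂ)) (g z)
        (by rw [Complex.norm_real, Real.norm_eq_abs, abs_of_nonneg hpos]; linarith) (hgle z hz)
      rw [Complex.conj_ofReal] at hmob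
      rw [hψ_def]; simp only []
      rw [norm_div, div_le_one ((norm_pos_iff.mpr (hD z hz)))]
      exact hmob
    have hψ' : ∀ z ∈ ball (0:ℂ) 1,
        HasDerivAt ψ ((1 - (a:ℂ)^2) * deriv g z / (D z)^2) z := by
      intro z hz
      have hgz : HasDerivAt g (deriv g z) z := (hgA z hz).differentiableAt.hasDerivAt
      have h1 : HasDerivAt (fun w => g w - (a:ℂ)) (deriv g z) z := hgz.sub_const _
      have h2 : HasDerivAt (fun w => 1 - (a:ℂ) * g w) (-((a:ℂ) * deriv g z)) z := by
        simpa using (hgz.const_mul ((a:ℂ))).const_sub 1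
      have h3 := h1.div h2 (hD z hz)
      have heq : (1 - (a:ℂ)^2) * deriv g z / (D z)^2
          = (deriv g z * (1 - (a:ℂ) * g z) - (g z - (a:ℂ)) * -((a:ℂ) * deriv g z))
            / (1 - (a:ℂ) * g z)^2 := by
        rw [hD_def]; congr 1; ring
      rw [heq]
      exact h3
    have hcast : (1 : ℂ) - (a:ℂ)^2 = ((s:ℝ):ℂ) := by rw [hs_def]; push_cast; ring
    have hderψ0 : deriv ψ 0 = c 2 / (s:ℂ) := by
      rw [(hψ' 0 h01).deriv, hD0, hc2, hcast, pow_two, mul_div_mul_left _ _ hsC]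
    -- second derivative of ψ at 0
    have hdgA : AnalyticOnNhd ℂ (deriv g) (ball 0 1) := hgA.deriv
    have hg2 : HasDerivAt (deriv g) (2 * c 3) 0 := by
      have h4 : deriv (deriv g) 0 = iteratedDeriv 2 g 0 := by
        rw [show (2:ℕ) = 1 + 1 from rfl, iteratedDeriv_succ, iteratedDeriv_one]
      have := (hdgA 0 h01).differentiableAt.hasDerivAt
      rwa [h4, hc3] at this
    have hg00 : HasDerivAt g (c 2) 0 := by
      have := (hgA 0 h01).differentiableAt.hasDerivAt
      rwa [hc2] at this
    have hF : HasDerivAt (fun z => (1 - (a:ℂ)^2) * deriv g z / (D z)^2)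
        ((2 * c 3 * (s:ℂ) + 2*(a:ℂ)*(c 2)^2)/(s:ℂ)^2) 0 := by
      have hN : HasDerivAt (fun z => (1 - (a:ℂ)^2) * deriv g z)
          ((1-(a:ℂ)^2) * (2 * c 3)) 0 := hg2.const_mul _
      have hD' : HasDerivAt D (-((a:ℂ) * c 2)) 0 := by
        rw [hD_def]
        simpa using (hg00.const_mul ((a:ℂ))).const_sub 1
      have hDen : HasDerivAt (fun z => (D z)^2) ((2:ℕ) * D 0 ^ 1 * -((a:ℂ) * c 2)) 0 :=
        hD'.pow 2
      have hden0 : (D 0)^2 ≠ 0 := pow_ne_zero _ (hD 0 h01)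
      have h5 := hN.div hDen hden0
      refine HasDerivAt.congr_deriv h5 ?_
      rw [hc2, hD0, hcast]
      field_simp
      ring
    have hitψ : iteratedDeriv 2 ψ 0 = (2 * c 3 * (s:ℂ) + 2*(a:ℂ)*(c 2)^2)/(s:ℂ)^2 := by
      have hev : deriv ψ =ᶠ[nhds (0:ℂ)] (fun z => (1 - (a:ℂ)^2) * deriv g z / (D z)^2) := by
        filter_upwards [isOpen_ball.eventually_mem h01] with z hz using (hψ' z hz).deriv
      rw [show (2:ℕ) = 1 + 1 from rfl, iteratedDeriv_succ, iteratedDeriv_one, hev.deriv_eq,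
        hF.deriv]
    obtain ⟨q, hq⟩ : AnalyticAt ℂ ψ 0 := hψA 0 h01
    set d₁ : ℂ := c 2 / (s:ℂ) with hd₁_def
    set d₂ : ℂ := (c 3 * (s:ℂ) + (a:ℂ)*(c 2)^2)/(s:ℂ)^2 with hd₂_def
    have hq2 : q.coeff 2 = d₂ := by
      rw [aux_coeff hq 2, hitψ, hd₂_def]
      rw [show ((Nat.factorial 2 : ℕ) : ℂ) = 2 by norm_num [Nat.factorial]]
      field_simp
    set χ := dslope ψ 0 with hχ_def
    have hχ : HasFPowerSeriesAt χ q.fslope 0 := hq.has_fpower_series_dslope_fslope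
    have hχd : DifferentiableOn ℂ χ (ball 0 1) :=
      (Complex.differentiableOn_dslope (isOpen_ball.mem_nhds h01)).mpr hψd
    have hχ0 : χ 0 = d₁ := by rw [hχ_def, dslope_same, hderψ0]
    have hχle : ∀ z ∈ ball (0:ℂ) 1, ‖χ z‖ ≤ 1 := fun z hz =>
      aux_dslope_le hψd hψ0 hψle hz
    have hdχ : deriv χ 0 = d₂ := by
      rw [hχ.deriv, show (q.fslope 1 fun _ => 1) = q.fslope.coeff 1 from rfl,
        FormalMultilinearSeries.coeff_fslope, hq2]
    have hd₁le : ‖d₁‖ ≤ 1 := by rw [← hχ0]; exact hχle 0 h01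
    -- the key Schur inequality |d₂| ≤ 1 - |d₁|²
    have key : ‖d₂‖ ≤ 1 - (‖d₁‖)^2 := by
      rcases eq_or_lt_of_le hd₁le with h1 | h1
      · -- |d₁| = 1 : χ is constant, d₂ = 0
        have hmaxχ : IsMaxOn (norm ∘ χ) (ball 0 1) 0 := by
          intro z hz
          simp only [comp_apply, Set.mem_setOf_eq]
          rw [hχ0, h1]
          exact hχle z hz
        have hconstχ := Complex.eqOn_of_isPreconnected_of_isMaxOn_norm
          (convex_ball (0:ℂ) 1).isPreconnected isOpen_ball hχd h01 hmaxχ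
        obtain ⟨hd1', _⟩ := aux_const hconstχ
        have : d₂ = 0 := by rw [← hdχ, hd1']
        rw [this, norm_zero, h1]
        norm_num
      · -- |d₁| < 1 : one more Möbius + Schwarz step
        set ρ : ℂ → ℂ := fun z => (χ z - d₁) / (1 - (starRingEnd ℂ) d₁ * χ z) with hρ_def
        have hdenρ : ∀ z ∈ ball (0:ℂ) 1, (1 - (starRingEnd ℂ) d₁ * χ z) ≠ 0 := by
          intro z hz hcontra
          have habs : ‖(starRingEnd ℂ) d₁ * χ z‖ < 1 := by
            rw [norm_mul, Complex.norm_conj]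
            nlinarith [hχle z hz, norm_nonneg (χ z), norm_nonneg d₁]
          have h2 : (1:ℂ) = (starRingEnd ℂ) d₁ * χ z := sub_eq_zero.mp hcontra
          rw [← h2] at habs; simp at habs
        have hρd : DifferentiableOn ℂ ρ (ball 0 1) :=
          (hχd.sub (differentiableOn_const _)).div
            ((differentiableOn_const _).sub ((differentiableOn_const _).mul hχd)) hdenρ
        have hρ0 : ρ 0 = 0 := by
          rw [hρ_def]; simp only []
          rw [hχ0]; simp
        have hρle : ∀ z ∈ ball (0:ℂ) 1, ‖ρ z‖ ≤ 1 := by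
          intro z hz
          have hmob := aux_mobius d₁ (χ z) (le_of_lt h1) (hχle z hz)
          rw [hρ_def]; simp only []
          rw [norm_div, div_le_one ((norm_pos_iff.mpr (hdenρ z hz)))]
          exact hmob
        have hune : ((1 - (‖d₁‖)^2 : ℝ) : ℂ) ≠ 0 :=
          Complex.ofReal_ne_zero.mpr (by nlinarith [norm_nonneg d₁])
        have hu : (1:ℂ) - (starRingEnd ℂ) d₁ * d₁ = ((1 - (‖d₁‖)^2 : ℝ) : ℂ) := by
          rw [mul_comm, Complex.mul_conj, ← Complex.sq_norm]
          push_cast; ring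
        have hχ0' : HasDerivAt χ d₂ 0 := by
          have := hχ.hasDerivAt
          rwa [show (q.fslope 1 fun _ => 1) = q.fslope.coeff 1 from rfl,
            FormalMultilinearSeries.coeff_fslope, hq2] at this
        have hderρ : deriv ρ 0 = d₂ / ((1 - (‖d₁‖)^2 : ℝ) : ℂ) := by
          have h1' : HasDerivAt (fun z => χ z - d₁) d₂ 0 := hχ0'.sub_const _
          have h2' : HasDerivAt (fun z => 1 - (starRingEnd ℂ) d₁ * χ z)
              (-((starRingEnd ℂ) d₁ * d₂)) 0 := by
            simpa using (hχ0'.const_mul ((starRingEnd ℂ) d₁)).const_sub 1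
          have h3' : deriv (fun z => (χ z - d₁) / (1 - (starRingEnd ℂ) d₁ * χ z)) 0 = _ :=
            (h1'.div h2' (hdenρ 0 h01)).deriv
          rw [hρ_def]
          rw [h3', hχ0, hu]
          rw [sub_self, zero_mul, sub_zero]
          generalize hgen : ((1 - (‖d₁‖)^2 : ℝ) : ℂ) = t at hune ⊢
          field_simp [hune]
          try ring
        have hbound : ‖deriv ρ 0‖ ≤ 1 := by
          have := aux_dslope_le hρd hρ0 hρle h01
          rwa [dslope_same] at this
        rw [hderρ, norm_div, Complex.norm_real, Real.norm_eq_abs] at hbound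
        have hpos' : (0:ℝ) < 1 - (‖d₁‖)^2 := by
          nlinarith [norm_nonneg d₁]
        rw [abs_of_pos hpos', div_le_one hpos'] at hbound
        exact hbound
    -- final algebra
    have habs1 : ‖d₁‖ = ‖c 2‖ / s := by
      rw [hd₁_def, norm_div, Complex.norm_real, Real.norm_eq_abs, abs_of_pos hs]
    have habs2 : ‖d₂‖
        = ‖c 3 * (s:ℂ) + (a:ℂ)*(c 2)^2‖ / s^2 := by
      rw [hd₂_def, norm_div, norm_pow, Complex.norm_real, Real.norm_eq_abs, abs_of_pos hs]
    set A2 := ‖c 2‖ with hA2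
    set A3 := ‖c 3‖ with hA3
    set K := ‖c 3 * (s:ℂ) + (a:ℂ)*(c 2)^2‖ with hK_def
    have hK : K ≤ s^2 - A2^2 := by
      rw [habs2, habs1, div_pow] at key
      have hs2 : (0:ℝ) < s^2 := by positivity
      rw [div_le_iff₀ hs2] at key
      calc K ≤ (1 - A2^2/s^2) * s^2 := key
        _ = s^2 - A2^2 := by field_simp
    have htri : A3 * s ≤ K + a * A2^2 := by
      have h6 := norm_sub_le (c 3 * (s:ℂ) + (a:ℂ) * (c 2)^2) ((a:ℂ) * (c 2)^2)
      simp only [add_sub_cancel_right] at h6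
      rw [norm_mul, Complex.norm_real, Real.norm_eq_abs, abs_of_pos hs] at h6
      rw [norm_mul, norm_pow, Complex.norm_real, Real.norm_eq_abs, abs_of_nonneg hpos] at h6
      exact h6
    have hfinal : A3 * s ≤ s^2 - (1-a)*A2^2 := by linarith
    have h1a : (0:ℝ) < 1 + a := by linarith
    have h1ma : (0:ℝ) < 1 - a := by linarith
    have hsplit : s - A2^2/(1+a) = (s*(1+a) - A2^2)/(1+a) := by
      field_simp
    rw [hsplit, le_div_iff₀ h1a]
    have hs' : s = (1-a)*(1+a) := by rw [hs_def]; ring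
    rw [hs'] at hfinal ⊢
    nlinarith [hfinal, h1ma, h1a, norm_nonneg (c 2), norm_nonneg (c 3)]
end

section
/- If f(z) = z + a₂z² + a₃z³ + ⋯ is analytic on the unit disk and satisfies Re(zf'(z)/f(z)) > α there, where 0 ≤ α < 1, then |a₂a₄ - a₃²| ≤ (1-α)². -/
open Metric Set Filter Topology

/-- Schwarz lemma variant with closed bound. -/
lemma lemA {g : ℂ → ℂ} (hg : DifferentiableOn ℂ g (ball 0 1)) (hg0 : g 0 = 0)
    (hb : ∀ z ∈ ball (0:ℂ) 1, ‖g z‖ ≤ 1) :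
    ∀ z ∈ ball (0:ℂ) 1, ‖dslope g 0 z‖ ≤ 1 := by
  intro z hz
  have key : ∀ ε : ℝ, 0 < ε → ‖dslope g 0 z‖ ≤ 1 + ε := by
    intro ε hε
    have maps : MapsTo g (ball 0 1) (closedBall (g 0) (1 + ε)) := by
      intro w hw
      rw [hg0, mem_closedBall, dist_zero_right]
      exact le_trans (hb w hw) (by linarith)
    have := Complex.norm_dslope_le_div_of_mapsTo_ball hg maps hz
    rwa [div_one] at this
  by_contra hcon
  push_neg at hcon
  have := key ((‖dslope g 0 z‖ - 1)/2) (by linarith)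
  linarith

/-- key quadratic identity -/
lemma normSq_mobius (c w : ℂ) :
    Complex.normSq (1 - (starRingEnd ℂ) c * w) - Complex.normSq (w - c)
      = (1 - Complex.normSq c) * (1 - Complex.normSq w) := by
  simp only [Complex.normSq_apply, Complex.sub_re, Complex.sub_im, Complex.mul_re,
    Complex.mul_im, Complex.one_re, Complex.one_im, Complex.conj_re, Complex.conj_im]
  ring

lemma abs_mobius_le {c w : ℂ} (hc : ‖c‖ ≤ 1) (hw : ‖w‖ ≤ 1) :
    ‖w - c‖ ≤ ‖1 - (starRingEnd ℂ) c * w‖ := by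
  have h1 : Complex.normSq c ≤ 1 := by
    rw [← Complex.sq_norm]; nlinarith [norm_nonneg c]
  have h2 : Complex.normSq w ≤ 1 := by
    rw [← Complex.sq_norm]; nlinarith [norm_nonneg w]
  have := normSq_mobius c w
  have hle : Complex.normSq (w - c) ≤ Complex.normSq (1 - (starRingEnd ℂ) c * w) := by nlinarith
  have := Real.sqrt_le_sqrt hle
  rwa [← Complex.norm_def, ← Complex.norm_def] at this

/-- Schwarz–Pick at the origin, closed version. -/
lemma lemB {g : ℂ → ℂ} (hg : DifferentiableOn ℂ g (ball 0 1))
    (hb : ∀ z ∈ ball (0:ℂ) 1, ‖g z‖ ≤ 1) :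
    ‖deriv g 0‖ ≤ 1 - ‖g 0‖ ^ 2 := by
  have h0 : (0:ℂ) ∈ ball (0:ℂ) 1 := mem_ball_self one_pos
  have hg0le : ‖g 0‖ ≤ 1 := hb 0 h0
  rcases lt_or_eq_of_le hg0le with hlt | heq
  · -- |g 0| < 1
    set c := g 0 with hc
    have hden : ∀ z ∈ ball (0:ℂ) 1, (1 - (starRingEnd ℂ) c * g z) ≠ 0 := by
      intro z hz h
      have h1 : ‖(starRingEnd ℂ) c * g z‖ < 1 := by
        rw [norm_mul, Complex.norm_conj]
        calc ‖c‖ * ‖g z‖ ≤ ‖c‖ * 1 :=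
              mul_le_mul_of_nonneg_left (hb z hz) (norm_nonneg c)
        _ = ‖c‖ := mul_one _
        _ < 1 := hlt
      rw [sub_eq_zero] at h
      rw [← h] at h1
      simp at h1
    set ρ := fun z => (g z - c) / (1 - (starRingEnd ℂ) c * g z) with hρ
    have hρd : DifferentiableOn ℂ ρ (ball 0 1) := by
      apply DifferentiableOn.div
      · exact hg.sub_const c
      · exact (differentiableOn_const _).sub ((differentiableOn_const _).mul hg)
      · exact hden
    have hρ0 : ρ 0 = 0 := by simp [hρ, hc]
    have hρb : ∀ z ∈ ball (0:ℂ) 1, ‖ρ z‖ ≤ 1 := by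
      intro z hz
      rw [hρ, norm_div]
      rw [div_le_one (by
        have := norm_nonneg (1 - (starRingEnd ℂ) c * g z)
        rcases this.lt_or_eq with h | h
        · exact h
        · exact absurd (norm_eq_zero.mp h.symm) (hden z hz))]
      exact abs_mobius_le hlt.le (hb z hz)
    have := lemA hρd hρ0 hρb 0 h0
    rw [dslope_same] at this
    -- compute deriv ρ 0
    have hgd : DifferentiableAt ℂ g 0 := hg.differentiableAt (isOpen_ball.mem_nhds h0)
    have hnum : HasDerivAt (fun z => g z - c) (deriv g 0) 0 := by
      simpa using (hgd.hasDerivAt.sub_const c)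
    have hdenf : HasDerivAt (fun z => 1 - (starRingEnd ℂ) c * g z)
        (-((starRingEnd ℂ) c * deriv g 0)) 0 := by
      simpa using ((hgd.hasDerivAt.const_mul ((starRingEnd ℂ) c)).const_sub 1)
    have hdval : (1 - (starRingEnd ℂ) c * g 0) = ((1 - ‖c‖ ^2 : ℝ) : ℂ) := by
      rw [← hc]
      rw [show (starRingEnd ℂ) c * c = (Complex.normSq c : ℂ) by
        rw [mul_comm]; exact Complex.mul_conj c]
      rw [Complex.sq_norm]
      push_cast
      ring
    have hder : HasDerivAt ρ
        ((deriv g 0 * (1 - (starRingEnd ℂ) c * g 0) -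
          (g 0 - c) * (-((starRingEnd ℂ) c * deriv g 0))) /
          (1 - (starRingEnd ℂ) c * g 0) ^ 2) 0 := hnum.div hdenf (hden 0 h0)
    have hne0 : ((1 - ‖c‖ ^2 : ℝ) : ℂ) ≠ 0 := by
      rw [Complex.ofReal_ne_zero]
      nlinarith [hlt, norm_nonneg c]
    have hval : deriv ρ 0 = deriv g 0 / ((1 - ‖c‖ ^2 : ℝ) : ℂ) := by
      rw [hder.deriv, ← hc, sub_self, zero_mul, sub_zero, hdval]
      generalize hX : ((1 - ‖c‖ ^2 : ℝ) : ℂ) = X at hne0 ⊢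
      rw [pow_two, ← div_div, mul_div_cancel_right₀ _ hne0]
    rw [hval] at this
    rw [norm_div] at this
    have habs : ‖((1 - ‖c‖ ^2 : ℝ) : ℂ)‖ = 1 - ‖c‖ ^2 := by
      rw [Complex.norm_real, Real.norm_eq_abs, abs_of_nonneg (by nlinarith [hlt, norm_nonneg c])]
    rw [habs, div_le_one (by nlinarith [hlt, norm_nonneg c])] at this
    simpa using this
  · -- |g 0| = 1 : g is constant
    have hmax : IsMaxOn (norm ∘ g) (ball (0:ℂ) 1) 0 := by
      intro z hz
      simpa [heq] using hb z hz
    have heqon := Complex.eqOn_of_isPreconnected_of_isMaxOn_norm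
      (convex_ball (0:ℂ) 1).isPreconnected isOpen_ball hg h0 hmax
    have hev : g =ᶠ[𝓝 (0:ℂ)] (fun _ => g 0) :=
      heqon.eventuallyEq_of_mem (isOpen_ball.mem_nhds h0)
    rw [hev.deriv_eq, deriv_const, norm_zero, heq]
    norm_num
open Metric Set Filter Topology

lemma deriv_congr_on {F G : ℂ → ℂ} {s : Set ℂ} (hs : IsOpen s)
    (hFG : ∀ z ∈ s, F z = G z) {z : ℂ} (hz : z ∈ s) : deriv F z = deriv G z :=
  Filter.EventuallyEq.deriv_eq (Filter.eventuallyEq_of_mem (hs.mem_nhds hz) hFG)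

lemma deriv_id_mul {k : ℂ → ℂ} {z : ℂ} (hk : DifferentiableAt ℂ k z) :
    deriv (fun w => w * k w) z = k z + z * deriv k z := by
  have h1 : HasDerivAt (fun w : ℂ => w * k w) (1 * k z + z * deriv k z) z :=
    (hasDerivAt_id z).mul hk.hasDerivAt
  rw [h1.deriv]; ring

lemma deriv_shape {g : ℂ → ℂ} {z : ℂ} (c : ℂ) (hg : DifferentiableAt ℂ g z)
    (hg' : DifferentiableAt ℂ (deriv g) z) :
    deriv (fun w => c * g w + w * deriv g w) z
      = (c + 1) * deriv g z + z * deriv (deriv g) z := by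
  rw [deriv_fun_add (hg.const_mul c) (differentiableAt_fun_id.fun_mul hg'),
    deriv_const_mul c hg, deriv_id_mul hg']
  ring
lemma lemC {g : ℂ → ℂ} (hg : DifferentiableOn ℂ g (ball 0 1))
    (hb : ∀ z ∈ ball (0:ℂ) 1, ‖g z‖ ≤ 1)
    (hlt : ‖g 0‖ < 1) :
    ∃ d₁ d₂ : ℂ, ‖d₁‖ ≤ 1 ∧ ‖d₂‖ ≤ 1 - ‖d₁‖ ^ 2 ∧
      deriv g 0 = ((1 - ‖g 0‖ ^ 2 : ℝ) : ℂ) * d₁ ∧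
      deriv (deriv g) 0 = 2 * ((1 - ‖g 0‖ ^ 2 : ℝ) : ℂ) * d₂
        - 2 * (starRingEnd ℂ) (g 0) * ((1 - ‖g 0‖ ^ 2 : ℝ) : ℂ) * d₁ ^ 2 := by
  have h0 : (0:ℂ) ∈ ball (0:ℂ) 1 := mem_ball_self one_pos
  set c := g 0 with hc
  have hgN : AnalyticOnNhd ℂ g (ball 0 1) := hg.analyticOnNhd isOpen_ball
  have hden : ∀ z ∈ ball (0:ℂ) 1, (1 - (starRingEnd ℂ) c * g z) ≠ 0 := by
    intro z hz h
    have h1 : ‖(starRingEnd ℂ) c * g z‖ < 1 := by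
      rw [norm_mul, Complex.norm_conj]
      calc ‖c‖ * ‖g z‖ ≤ ‖c‖ * 1 :=
            mul_le_mul_of_nonneg_left (hb z hz) (norm_nonneg c)
      _ = ‖c‖ := mul_one _
      _ < 1 := hlt
    rw [sub_eq_zero] at h
    rw [← h] at h1
    simp at h1
  set ψ := fun z => (g z - c) / (1 - (starRingEnd ℂ) c * g z) with hψdef
  have hψd : DifferentiableOn ℂ ψ (ball 0 1) := by
    apply DifferentiableOn.div
    · exact hg.sub_const c
    · exact (differentiableOn_const _).sub ((differentiableOn_const _).mul hg)
    · exact hden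
  have hψN : AnalyticOnNhd ℂ ψ (ball 0 1) := hψd.analyticOnNhd isOpen_ball
  have hψ0 : ψ 0 = 0 := by simp [hψdef, hc]
  have hψb : ∀ z ∈ ball (0:ℂ) 1, ‖ψ z‖ ≤ 1 := by
    intro z hz
    rw [hψdef]
    simp only
    rw [norm_div, div_le_one (norm_pos_iff.mpr (hden z hz))]
    exact abs_mobius_le hlt.le (hb z hz)
  have hI : ∀ z ∈ ball (0:ℂ) 1, ψ z * (1 - (starRingEnd ℂ) c * g z) = g z - c := by
    intro z hz
    rw [hψdef]
    exact div_mul_cancel₀ _ (hden z hz)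
  set χ := dslope ψ 0 with hχdef
  have hχd : DifferentiableOn ℂ χ (ball 0 1) :=
    (Complex.differentiableOn_dslope (isOpen_ball.mem_nhds h0)).mpr hψd
  have hχN : AnalyticOnNhd ℂ χ (ball 0 1) := hχd.analyticOnNhd isOpen_ball
  have hχb : ∀ z ∈ ball (0:ℂ) 1, ‖χ z‖ ≤ 1 := lemA hψd hψ0 hψb
  have hψzχ : ∀ z ∈ ball (0:ℂ) 1, ψ z = z * χ z := by
    intro z hz
    have := sub_smul_dslope ψ 0 z
    rw [hψ0, sub_zero, sub_zero, smul_eq_mul] at this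
    rw [← this, hχdef]
  clear_value ψ χ
  clear hψdef hχdef
  have hψ' : ∀ z ∈ ball (0:ℂ) 1, deriv ψ z = χ z + z * deriv χ z := by
    intro z hz
    rw [deriv_congr_on isOpen_ball hψzχ hz, deriv_id_mul (hχN z hz).differentiableAt]
  have hψ'0 : deriv ψ 0 = χ 0 := by rw [hψ' 0 h0]; ring
  have hψ''0 : deriv (deriv ψ) 0 = 2 * deriv χ 0 := by
    rw [deriv_congr_on isOpen_ball hψ' h0,
      deriv_fun_add (hχN 0 h0).differentiableAt
        (differentiableAt_fun_id.fun_mul (hχN.deriv 0 h0).differentiableAt),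
      deriv_id_mul (hχN.deriv 0 h0).differentiableAt]
    ring
  have hdenD : ∀ z ∈ ball (0:ℂ) 1,
      HasDerivAt (fun w => 1 - (starRingEnd ℂ) c * g w)
        (-((starRingEnd ℂ) c * deriv g z)) z := by
    intro z hz
    simpa using (((hgN z hz).differentiableAt.hasDerivAt.const_mul
      ((starRingEnd ℂ) c)).const_sub 1)
  have hI1 : ∀ z ∈ ball (0:ℂ) 1,
      deriv ψ z * (1 - (starRingEnd ℂ) c * g z)
        - ψ z * ((starRingEnd ℂ) c * deriv g z) = deriv g z := by
    intro z hz
    have e1 : deriv (fun w => ψ w * (1 - (starRingEnd ℂ) c * g w)) z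
        = deriv (fun w => g w - c) z := deriv_congr_on isOpen_ball hI hz
    rw [deriv_sub_const] at e1
    rw [((hψN z hz).differentiableAt.hasDerivAt.fun_mul (hdenD z hz)).deriv] at e1
    linear_combination e1
  have hu : (1 - (starRingEnd ℂ) c * c) = ((1 - ‖c‖ ^ 2 : ℝ) : ℂ) := by
    rw [show (starRingEnd ℂ) c * c = (Complex.normSq c : ℂ) by
      rw [mul_comm]; exact Complex.mul_conj c]
    rw [Complex.sq_norm]
    push_cast
    ring
  have hg0 : deriv g 0 = ((1 - ‖c‖ ^ 2 : ℝ) : ℂ) * χ 0 := by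
    have := hI1 0 h0
    rw [hψ0, hψ'0, ← hc, hu] at this
    rw [← this]; ring
  refine ⟨χ 0, deriv χ 0, hχb 0 h0, lemB hχd hχb, hg0, ?_⟩
  have hI2 : deriv (fun w => deriv ψ w * (1 - (starRingEnd ℂ) c * g w)
      - ψ w * ((starRingEnd ℂ) c * deriv g w)) 0 = deriv (deriv g) 0 :=
    deriv_congr_on isOpen_ball hI1 h0
  have hd2 : DifferentiableAt ℂ (fun w => (starRingEnd ℂ) c * deriv g w) 0 :=
    (hgN.deriv 0 h0).differentiableAt.const_mul _
  rw [deriv_fun_sub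
      ((hψN.deriv 0 h0).differentiableAt.fun_mul (hdenD 0 h0).differentiableAt)
      ((hψN 0 h0).differentiableAt.fun_mul hd2),
    ((hψN.deriv 0 h0).differentiableAt.hasDerivAt.fun_mul (hdenD 0 h0)).deriv,
    deriv_fun_mul (hψN 0 h0).differentiableAt hd2,
    deriv_const_mul _ (hgN.deriv 0 h0).differentiableAt] at hI2
  rw [hψ0, hψ'0, hψ''0, ← hc, hu] at hI2
  linear_combination -hI2 - 2 * χ 0 * (starRingEnd ℂ) c * hg0
set_option maxHeartbeats 1000000 in
lemma final_bound (b d₁ d₂ γc : ℂ) {t s1 s2 : ℝ}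
    (htd : ‖b‖ = t) (hs1 : ‖d₁‖ = s1) (hs2 : ‖d₂‖ = s2)
    (htle : t ≤ 1) (hd1 : s1 ≤ 1) (hd2 : s2 ≤ 1 - s1 ^ 2) (hγ : ‖γc‖ ≤ 1) :
    ‖(4/3) * (1 - ((t:ℝ):ℂ)^2) * b * d₂
      - (4/3) * ((t:ℝ):ℂ)^2 * (1 - ((t:ℝ):ℂ)^2) * d₁^2
      + (2/3) * (1 - ((t:ℝ):ℂ)^2) * b^2 * d₁
      - (1 - ((t:ℝ):ℂ)^2)^2 * d₁^2
      + γc * b^4‖ ≤ 1 := by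
  have htn : 0 ≤ t := htd ▸ norm_nonneg b
  have hs1n : 0 ≤ s1 := hs1 ▸ norm_nonneg d₁
  have hs2n : 0 ≤ s2 := hs2 ▸ norm_nonneg d₂
  have hurn : 0 ≤ 1 - t^2 := by nlinarith
  have hover : ((1:ℂ) - ((t:ℝ):ℂ)^2) = (((1 - t^2 : ℝ)):ℂ) := by push_cast; ring
  have c43 : ‖(4:ℂ)/3‖ = 4/3 := by
    rw [norm_div, Complex.norm_ofNat, Complex.norm_ofNat]
  have c23 : ‖(2:ℂ)/3‖ = 2/3 := by
    rw [norm_div, Complex.norm_ofNat, Complex.norm_ofNat]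
  have tri2 : ∀ x y : ℂ, ‖x - y‖ ≤ ‖x‖ + ‖y‖ := fun x y => by
    simpa [sub_eq_add_neg] using norm_add_le x (-y)
  set T1 : ℂ := (4/3) * (1 - ((t:ℝ):ℂ)^2) * b * d₂ with hT1
  set T2 : ℂ := (4/3) * ((t:ℝ):ℂ)^2 * (1 - ((t:ℝ):ℂ)^2) * d₁^2 with hT2
  set T3 : ℂ := (2/3) * (1 - ((t:ℝ):ℂ)^2) * b^2 * d₁ with hT3
  set T4 : ℂ := (1 - ((t:ℝ):ℂ)^2)^2 * d₁^2 with hT4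
  set T5 : ℂ := γc * b^4 with hT5
  have e1 : ‖T1‖ = 4/3*(1-t^2)*t*s2 := by
    rw [hT1, norm_mul, norm_mul, norm_mul, hover, Complex.norm_real, Real.norm_eq_abs, abs_of_nonneg hurn,
      htd, hs2, c43]
  have e2 : ‖T2‖ = 4/3*t^2*(1-t^2)*s1^2 := by
    rw [hT2, norm_mul, norm_mul, norm_mul, norm_pow, norm_pow, hover, Complex.norm_real, Real.norm_eq_abs,
      Complex.norm_real, Real.norm_eq_abs, abs_of_nonneg hurn, abs_of_nonneg htn, hs1, c43]
  have e3 : ‖T3‖ = 2/3*(1-t^2)*t^2*s1 := by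
    rw [hT3, norm_mul, norm_mul, norm_mul, norm_pow, hover, Complex.norm_real, Real.norm_eq_abs,
      abs_of_nonneg hurn, htd, hs1, c23]
  have e4 : ‖T4‖ = (1-t^2)^2*s1^2 := by
    rw [hT4, norm_mul, norm_pow, norm_pow, hover, Complex.norm_real, Real.norm_eq_abs, abs_of_nonneg hurn, hs1]
  have e5 : ‖T5‖ ≤ t^4 := by
    rw [hT5, norm_mul, norm_pow, htd]
    exact mul_le_of_le_one_left (pow_nonneg htn 4) hγ
  have hsum : ‖T1 - T2 + T3 - T4 + T5‖
      ≤ 4/3*(1-t^2)*t*s2 + 4/3*t^2*(1-t^2)*s1^2 + 2/3*(1-t^2)*t^2*s1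
        + (1-t^2)^2*s1^2 + t^4 := by
    calc ‖T1 - T2 + T3 - T4 + T5‖
        ≤ ‖T1 - T2 + T3 - T4‖ + ‖T5‖ := norm_add_le _ _
      _ ≤ (‖T1 - T2 + T3‖ + ‖T4‖) + ‖T5‖ :=
          add_le_add_left (tri2 _ _) _
      _ ≤ ((‖T1 - T2‖ + ‖T3‖) + ‖T4‖) + ‖T5‖ :=
          add_le_add_left (add_le_add_left (norm_add_le _ _) _) _
      _ ≤ (((‖T1‖ + ‖T2‖) + ‖T3‖) + ‖T4‖)
            + ‖T5‖ :=
          add_le_add_left (add_le_add_left (add_le_add_left (tri2 _ _) _) _) _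
      _ ≤ 4/3*(1-t^2)*t*s2 + 4/3*t^2*(1-t^2)*s1^2 + 2/3*(1-t^2)*t^2*s1
            + (1-t^2)^2*s1^2 + t^4 := by
          rw [e1, e2, e3, e4]
          exact add_le_add_right e5 _
  refine hsum.trans ?_
  -- the scalar inequality
  have n1 : 0 ≤ 4*(3+s1)*t*(1-t^2)*(1-s1^2-s2) := by
    have : 0 ≤ 1 - s1^2 - s2 := by nlinarith
    have h1 : (0:ℝ) ≤ 4*(3+s1) := by linarith
    positivity
  have n2 : 0 ≤ (1-t^2)*(1-s1)*(((3+s1)*t-2*(1+s1))^2) :=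
    mul_nonneg (mul_nonneg hurn (by linarith)) (sq_nonneg _)
  have n3 : 0 ≤ (1-t^2)*(1-s1)*((1+s1)*(5-s1)) :=
    mul_nonneg (mul_nonneg hurn (by linarith))
      (mul_nonneg (by linarith) (by linarith))
  set P : ℝ := 4/3*(1-t^2)*t*s2 + 4/3*t^2*(1-t^2)*s1^2 + 2/3*(1-t^2)*t^2*s1
    + (1-t^2)^2*s1^2 + t^4 with hPdef
  have hiden : 3*(3+s1)*(1-P)
      = 4*(3+s1)*t*(1-t^2)*(1-s1^2-s2)
        + (1-t^2)*(1-s1)*(((3+s1)*t-2*(1+s1))^2)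
        + (1-t^2)*(1-s1)*((1+s1)*(5-s1)) := by rw [hPdef]; ring
  have hkey : 0 ≤ 3*(3+s1)*(1-P) := by rw [hiden]; linarith [n1, n2, n3]
  have h9 : (0:ℝ) < 3*(3+s1) := by linarith
  nlinarith [hkey, h9]
/-- Sharp bound for the second Hankel determinant of starlike functions of order α. -/
theorem hankel_starlike (α : ℝ) (hα0 : 0 ≤ α) (hα1 : α < 1)
    (f : ℂ → ℂ) (a : ℕ → ℂ)
    (hf : AnalyticOn ℂ f (ball 0 1))
    (hf0 : f 0 = 0) (hf1 : deriv f 0 = 1)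
    (hst : ∀ z ∈ ball (0:ℂ) 1, z ≠ 0 → α < (z * deriv f z / f z).re)
    (ha : ∀ n, a n = iteratedDeriv n f 0 / n.factorial) :
    ‖a 2 * a 4 - a 3 ^ 2‖ ≤ (1 - α) ^ 2 := by
  have h0S : (0:ℂ) ∈ ball (0:ℂ) 1 := mem_ball_self one_pos
  have hfN : AnalyticOnNhd ℂ f (ball 0 1) := isOpen_ball.analyticOn_iff_analyticOnNhd.mp hf
  have hfd : DifferentiableOn ℂ f (ball 0 1) := hfN.differentiableOn
  have fne : ∀ z ∈ ball (0:ℂ) 1, z ≠ 0 → f z ≠ 0 := by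
    intro z hz hz0 hfz
    have := hst z hz hz0
    rw [hfz, div_zero] at this
    simp only [Complex.zero_re] at this
    linarith
  -- the function h with f z = z * h z
  set h : ℂ → ℂ := dslope f 0 with hhdef
  have hhd : DifferentiableOn ℂ h (ball 0 1) :=
    (Complex.differentiableOn_dslope (isOpen_ball.mem_nhds h0S)).mpr hfd
  have hhN : AnalyticOnNhd ℂ h (ball 0 1) := hhd.analyticOnNhd isOpen_ball
  have h00 : h 0 = 1 := by rw [hhdef, dslope_same, hf1]
  have hzh : ∀ z ∈ ball (0:ℂ) 1, f z = z * h z := by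
    intro z hz
    have := sub_smul_dslope f 0 z
    rw [hf0, sub_zero, sub_zero, smul_eq_mul] at this
    rw [← this, hhdef]
  clear_value h
  clear hhdef
  have hne : ∀ z ∈ ball (0:ℂ) 1, h z ≠ 0 := by
    intro z hz
    rcases eq_or_ne z 0 with rfl | hz0
    · rw [h00]; exact one_ne_zero
    · intro hh
      exact fne z hz hz0 (by rw [hzh z hz, hh, mul_zero])
  -- first derivative of f
  have hD1 : ∀ z ∈ ball (0:ℂ) 1, deriv f z = 1 * h z + z * deriv h z := by
    intro z hz
    rw [deriv_congr_on isOpen_ball hzh hz, deriv_id_mul (hhN z hz).differentiableAt]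
    ring
  -- the function F = f'/h with Re F > α
  set F : ℂ → ℂ := fun z => deriv f z / h z with hFdef
  have hF0 : F 0 = 1 := by rw [hFdef]; simp only; rw [hf1, h00, div_one]
  have hFre : ∀ z ∈ ball (0:ℂ) 1, α < (F z).re := by
    intro z hz
    rcases eq_or_ne z 0 with rfl | hz0
    · rw [hF0]; simpa using hα1
    · have : F z = z * deriv f z / f z := by
        rw [hFdef]; simp only
        rw [hzh z hz, mul_div_mul_left _ _ hz0]
      rw [this]
      exact hst z hz hz0
  have hFh : ∀ z ∈ ball (0:ℂ) 1, F z * h z = deriv f z := by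
    intro z hz
    rw [hFdef]
    exact div_mul_cancel₀ _ (hne z hz)
  have hFd : DifferentiableOn ℂ F (ball 0 1) :=
    (hfN.deriv.differentiableOn).div hhd hne
  have hFden : ∀ z ∈ ball (0:ℂ) 1, F z + 1 - 2*(α:ℂ) ≠ 0 := by
    intro z hz hcon
    have := congrArg Complex.re hcon
    simp only [Complex.add_re, Complex.sub_re, Complex.one_re, Complex.zero_re,
      Complex.mul_re, Complex.re_ofNat, Complex.ofReal_re, Complex.im_ofNat,
      Complex.ofReal_im, mul_zero, sub_zero] at this
    have := hFre z hz
    linarith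
  -- the Schwarz function ω
  set ω : ℂ → ℂ := fun z => (F z - 1) / (F z + 1 - 2*(α:ℂ)) with hωdef
  have hωd : DifferentiableOn ℂ ω (ball 0 1) := by
    apply DifferentiableOn.div
    · exact hFd.sub_const 1
    · exact (hFd.add_const 1).sub_const _
    · exact hFden
  have hω0 : ω 0 = 0 := by rw [hωdef]; simp only; rw [hF0]; simp
  have hωiden : ∀ z ∈ ball (0:ℂ) 1, ω z * (F z + 1 - 2*(α:ℂ)) = F z - 1 := by
    intro z hz
    rw [hωdef]
    exact div_mul_cancel₀ _ (hFden z hz)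
  have hωle : ∀ z ∈ ball (0:ℂ) 1, ‖ω z‖ ≤ 1 := by
    intro z hz
    have hlt : Complex.normSq (F z - 1) < Complex.normSq (F z + 1 - 2*(α:ℂ)) := by
      have hre := hFre z hz
      simp only [Complex.normSq_apply, Complex.sub_re, Complex.sub_im, Complex.add_re,
        Complex.add_im, Complex.one_re, Complex.one_im, Complex.mul_re, Complex.mul_im,
        Complex.re_ofNat, Complex.im_ofNat, Complex.ofReal_re, Complex.ofReal_im,
        mul_zero, zero_mul, sub_zero, add_zero, zero_sub, zero_add]
      nlinarith [hα1]
    have habs : ‖F z - 1‖ ≤ ‖F z + 1 - 2*(α:ℂ)‖ := by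
      rw [Complex.norm_def, Complex.norm_def]
      exact Real.sqrt_le_sqrt hlt.le
    rw [hωdef]
    simp only
    rw [norm_div, div_le_one (norm_pos_iff.mpr (hFden z hz))]
    exact habs
  clear_value ω F
  -- φ = ω / z
  set φ : ℂ → ℂ := dslope ω 0 with hφdef
  have hφd : DifferentiableOn ℂ φ (ball 0 1) :=
    (Complex.differentiableOn_dslope (isOpen_ball.mem_nhds h0S)).mpr hωd
  have hφN : AnalyticOnNhd ℂ φ (ball 0 1) := hφd.analyticOnNhd isOpen_ball
  have hφb : ∀ z ∈ ball (0:ℂ) 1, ‖φ z‖ ≤ 1 := lemA hωd hω0 hωle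
  have hωzφ : ∀ z ∈ ball (0:ℂ) 1, ω z = z * φ z := by
    intro z hz
    have := sub_smul_dslope ω 0 z
    rw [hω0, sub_zero, sub_zero, smul_eq_mul] at this
    rw [← this, hφdef]
  clear_value φ
  clear hφdef
  -- the master identity
  have hQz : ∀ z ∈ ball (0:ℂ) 1,
      deriv h z - φ z * ((2 - 2*(α:ℂ)) * h z + z * deriv h z) = 0 := by
    have base : ∀ z ∈ ball (0:ℂ) 1, z ≠ 0 →
        deriv h z - φ z * ((2 - 2*(α:ℂ)) * h z + z * deriv h z) = 0 := by
      intro z hz hz0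
      have hb := hωiden z hz
      have hb2 := congrArg (fun t => t * h z) hb
      rw [mul_assoc] at hb2
      have hexp : (F z + 1 - 2*(α:ℂ)) * h z = deriv f z + (1 - 2*(α:ℂ)) * h z := by
        have := hFh z hz
        linear_combination this
      rw [hexp] at hb2
      have hb3 : ω z * (deriv f z + (1 - 2*(α:ℂ)) * h z) = deriv f z - h z := by
        rw [hb2]
        have := hFh z hz
        linear_combination this
      rw [hωzφ z hz, hD1 z hz] at hb3
      have hz2 : z * (φ z * ((2 - 2*(α:ℂ)) * h z + z * deriv h z) - deriv h z) = 0 := by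
        linear_combination hb3
      have := (mul_eq_zero.mp hz2).resolve_left hz0
      linear_combination -this
    intro z hz
    rcases eq_or_ne z 0 with rfl | hz0
    · -- continuity argument
      set Q : ℂ → ℂ := fun z => deriv h z - φ z * ((2 - 2*(α:ℂ)) * h z + z * deriv h z)
        with hQdef
      have hQa : AnalyticAt ℂ Q 0 := by
        apply AnalyticAt.sub
        · exact hhN.deriv 0 h0S
        · exact (hφN 0 h0S).mul ((analyticAt_const.mul (hhN 0 h0S)).add
            (analyticAt_id.mul (hhN.deriv 0 h0S)))
      have h1 : Tendsto Q (𝓝[≠] (0:ℂ)) (𝓝 (Q 0)) :=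
        hQa.continuousAt.continuousWithinAt
      have h2 : Tendsto Q (𝓝[≠] (0:ℂ)) (𝓝 0) := by
        apply Tendsto.congr' _ tendsto_const_nhds
        filter_upwards [self_mem_nhdsWithin,
          mem_nhdsWithin_of_mem_nhds (isOpen_ball.mem_nhds h0S)] with w hw1 hw2
        exact (base w hw2 hw1).symm
      exact (tendsto_nhds_unique h1 h2)
    · exact base z hz hz0
  have hmain : ∀ z ∈ ball (0:ℂ) 1,
      deriv h z = φ z * ((2 - 2*(α:ℂ)) * h z + z * deriv h z) := by
    intro z hz
    have := hQz z hz
    linear_combination this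
  -- coefficient extraction
  have hUd : ∀ z ∈ ball (0:ℂ) 1,
      DifferentiableAt ℂ (fun w => (2 - 2*(α:ℂ)) * h w + w * deriv h w) z := by
    intro z hz
    exact ((hhN z hz).differentiableAt.const_mul _).add
      (differentiableAt_fun_id.mul (hhN.deriv z hz).differentiableAt)
  have hE1 : ∀ z ∈ ball (0:ℂ) 1, deriv (deriv h) z
      = deriv φ z * ((2 - 2*(α:ℂ)) * h z + z * deriv h z)
        + φ z * (((2 - 2*(α:ℂ)) + 1) * deriv h z + z * deriv (deriv h) z) := by
    intro z hz
    have e := deriv_congr_on isOpen_ball hmain hz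
    rw [deriv_fun_mul (hφN z hz).differentiableAt (hUd z hz),
      deriv_shape (2 - 2*(α:ℂ)) (hhN z hz).differentiableAt
        (hhN.deriv z hz).differentiableAt] at e
    exact e
  have hVd : DifferentiableAt ℂ
      (fun w => ((2 - 2*(α:ℂ)) + 1) * deriv h w + w * deriv (deriv h) w) 0 :=
    ((hhN.deriv 0 h0S).differentiableAt.const_mul _).add
      (differentiableAt_fun_id.mul (hhN.deriv.deriv 0 h0S).differentiableAt)
  have hE2 : deriv (deriv (deriv h)) 0
      = (2 - 2*(α:ℂ)) * deriv (deriv φ) 0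
        + 2 * ((2 - 2*(α:ℂ)) + 1) * deriv φ 0 * deriv h 0
        + ((2 - 2*(α:ℂ)) + 2) * φ 0 * deriv (deriv h) 0 := by
    have hstep := deriv_congr_on isOpen_ball hE1 h0S
    rw [hstep,
      deriv_fun_add ((hφN.deriv 0 h0S).differentiableAt.fun_mul (hUd 0 h0S))
        ((hφN 0 h0S).differentiableAt.fun_mul hVd),
      deriv_fun_mul (hφN.deriv 0 h0S).differentiableAt (hUd 0 h0S),
      deriv_fun_mul (hφN 0 h0S).differentiableAt hVd,
      deriv_shape (2 - 2*(α:ℂ)) (hhN 0 h0S).differentiableAt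
        (hhN.deriv 0 h0S).differentiableAt,
      deriv_shape ((2 - 2*(α:ℂ)) + 1) (hhN.deriv 0 h0S).differentiableAt
        (hhN.deriv.deriv 0 h0S).differentiableAt,
      h00]
    ring
  have hE0 : deriv h 0 = (2 - 2*(α:ℂ)) * φ 0 := by
    have := hmain 0 h0S
    rw [h00] at this
    rw [this]; ring
  have hE1v : deriv (deriv h) 0 = (2 - 2*(α:ℂ)) * deriv φ 0
      + ((2 - 2*(α:ℂ)) + 1) * φ 0 * deriv h 0 := by
    have := hE1 0 h0S
    rw [h00] at this
    rw [this]; ring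
  -- iterated derivatives of f
  have e2 : iteratedDeriv 2 f 0 = deriv (deriv f) 0 := by
    rw [show (2:ℕ) = 1 + 1 from rfl, iteratedDeriv_succ, iteratedDeriv_one]
  have e3 : iteratedDeriv 3 f 0 = deriv (deriv (deriv f)) 0 := by
    rw [show (3:ℕ) = 2 + 1 from rfl, iteratedDeriv_succ,
      show (2:ℕ) = 1 + 1 from rfl, iteratedDeriv_succ, iteratedDeriv_one]
  have e4 : iteratedDeriv 4 f 0 = deriv (deriv (deriv (deriv f))) 0 := by
    rw [show (4:ℕ) = 3 + 1 from rfl, iteratedDeriv_succ,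
      show (3:ℕ) = 2 + 1 from rfl, iteratedDeriv_succ,
      show (2:ℕ) = 1 + 1 from rfl, iteratedDeriv_succ, iteratedDeriv_one]
  have hD2 : ∀ z ∈ ball (0:ℂ) 1,
      deriv (deriv f) z = 2 * deriv h z + z * deriv (deriv h) z := by
    intro z hz
    rw [deriv_congr_on isOpen_ball hD1 hz,
      deriv_shape 1 (hhN z hz).differentiableAt (hhN.deriv z hz).differentiableAt]
    norm_num
  have hD3 : ∀ z ∈ ball (0:ℂ) 1,
      deriv (deriv (deriv f)) z = 3 * deriv (deriv h) z
        + z * deriv (deriv (deriv h)) z := by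
    intro z hz
    rw [deriv_congr_on isOpen_ball hD2 hz,
      deriv_shape 2 (hhN.deriv z hz).differentiableAt
        (hhN.deriv.deriv z hz).differentiableAt]
    norm_num
  have hD4 : deriv (deriv (deriv (deriv f))) 0 = 4 * deriv (deriv (deriv h)) 0 := by
    rw [deriv_congr_on isOpen_ball hD3 h0S,
      deriv_shape 3 (hhN.deriv.deriv 0 h0S).differentiableAt
        (hhN.deriv.deriv.deriv 0 h0S).differentiableAt]
    norm_num
  have hva2 : a 2 = deriv h 0 := by
    rw [ha 2, e2, hD2 0 h0S]
    norm_num [Nat.factorial]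
  have hva3 : a 3 = deriv (deriv h) 0 / 2 := by
    rw [ha 3, e3, hD3 0 h0S]
    norm_num [Nat.factorial]
    ring
  have hva4 : a 4 = deriv (deriv (deriv h)) 0 / 6 := by
    rw [ha 4, e4, hD4]
    norm_num [Nat.factorial]
    ring
  -- Schur-type coefficient data for φ
  obtain ⟨d₁, d₂, hd1, hd2, r1, r2⟩ : ∃ d₁ d₂ : ℂ,
      ‖d₁‖ ≤ 1 ∧ ‖d₂‖ ≤ 1 - ‖d₁‖ ^ 2 ∧
      deriv φ 0 = ((1 - ‖φ 0‖ ^ 2 : ℝ) : ℂ) * d₁ ∧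
      deriv (deriv φ) 0 = 2 * ((1 - ‖φ 0‖ ^ 2 : ℝ) : ℂ) * d₂
        - 2 * (starRingEnd ℂ) (φ 0) * ((1 - ‖φ 0‖ ^ 2 : ℝ) : ℂ) * d₁ ^ 2 := by
    rcases lt_or_eq_of_le (hφb 0 h0S) with hlt | heq
    · exact lemC hφd hφb hlt
    · have hmax : IsMaxOn (norm ∘ φ) (ball (0:ℂ) 1) 0 := by
        intro z hz
        simpa [← heq] using hφb z hz
      have heqon := Complex.eqOn_of_isPreconnected_of_isMaxOn_norm
        (convex_ball (0:ℂ) 1).isPreconnected isOpen_ball hφd h0S hmax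
      have hev : φ =ᶠ[𝓝 (0:ℂ)] (fun _ => φ 0) :=
        heqon.eventuallyEq_of_mem (isOpen_ball.mem_nhds h0S)
      have hc2 : deriv φ 0 = 0 := by rw [hev.deriv_eq, deriv_const]
      have hc3 : deriv (deriv φ) 0 = 0 := by
        rw [(hev.deriv).deriv_eq, deriv_const']
        simp
      exact ⟨0, 0, by simp, by simp, by rw [hc2]; ring, by rw [hc3]; ring⟩
  -- the Hankel determinant identity
  have hbb : (starRingEnd ℂ) (φ 0) * (φ 0) = ((‖φ 0‖ : ℝ) : ℂ) ^ 2 := by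
    rw [mul_comm, Complex.mul_conj]
    norm_cast
    exact (Complex.sq_norm _).symm
  have hcast : ((1 - ‖φ 0‖ ^ 2 : ℝ) : ℂ)
      = 1 - ((‖φ 0‖ : ℝ) : ℂ) ^ 2 := by
    push_cast
    ring
  rw [hcast] at r1 r2
  have hA : a 2 * a 4 - a 3 ^ 2 = (((1 - α : ℝ)) : ℂ) ^ 2 *
      ((4/3) * (1 - ((‖φ 0‖ : ℝ) : ℂ) ^ 2) * (φ 0) * d₂
        - (4/3) * ((‖φ 0‖ : ℝ) : ℂ)^2 * (1 - ((‖φ 0‖ : ℝ) : ℂ) ^ 2) * d₁^2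
        + (2/3) * (1 - ((‖φ 0‖ : ℝ) : ℂ) ^ 2) * (φ 0)^2 * d₁
        - (1 - ((‖φ 0‖ : ℝ) : ℂ) ^ 2)^2 * d₁^2
        + ((1 - 4 * (((1 - α : ℝ)) : ℂ)^2)/3) * (φ 0)^4) := by
    rw [hva2, hva3, hva4, hE2, hE1v, hE0, r1, r2]
    push_cast
    linear_combination (-(4:ℂ)/3) * (1 - (α:ℂ))^2
      * (1 - ((‖φ 0‖ : ℝ) : ℂ) ^ 2) * d₁^2 * hbb
  have hγ : ‖(1 - 4*(((1-α:ℝ)):ℂ)^2)/3‖ ≤ 1 := by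
    have he : (1 - 4*(((1-α:ℝ)):ℂ)^2)/3 = (((1 - 4*(1-α)^2)/3 : ℝ):ℂ) := by
      push_cast; ring
    rw [he, Complex.norm_real, Real.norm_eq_abs, abs_le]
    constructor <;> nlinarith
  have hfb := final_bound (φ 0) d₁ d₂ ((1 - 4*(((1-α:ℝ)):ℂ)^2)/3)
    rfl rfl rfl (hφb 0 h0S) hd1 hd2 hγ
  rw [hA, norm_mul]
  have hb2 : ‖(((1-α:ℝ)):ℂ)^2‖ = (1-α)^2 := by
    rw [norm_pow, Complex.norm_real, Real.norm_eq_abs, abs_of_pos (by linarith)]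
  rw [hb2]
  exact le_trans (mul_le_mul_of_nonneg_left hfb (by positivity)) (le_of_eq (mul_one _))
end

section
/- The bound (1-α)² for the second Hankel determinant on the class of starlike functions of order α is sharp: the function f_α defined by zf_α'(z)/f_α(z) = α + (1-α)(1+z²)/(1-z²) satisfies Re(zf_α'(z)/f_α(z)) > α on the unit disk and has |a₂a₄ - a₃²| = (1-α)². -/
open Metric Complex Filter

/-- Sharpness of the bound (1-α)²: the function f_α(z) = z(1-z²)^(α-1) is starlike of
order α and attains |a₂a₄ - a₃²| = (1-α)². -/
theorem hankel_starlike_sharp (α : ℝ) (hα0 : 0 ≤ α) (hα1 : α < 1)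
    (f : ℂ → ℂ) (hfdef : ∀ z, f z = z * (1 - z ^ 2) ^ ((α : ℂ) - 1))
    (a : ℕ → ℂ) (ha : ∀ n, a n = iteratedDeriv n f 0 / n.factorial) :
    (∀ z ∈ ball (0:ℂ) 1, z ≠ 0 → α < (z * deriv f z / f z).re) ∧
    ‖a 2 * a 4 - a 3 ^ 2‖ = (1 - α) ^ 2 := by
  have hfeq : f = fun z => z * (1 - z ^ 2) ^ ((α : ℂ) - 1) := funext hfdef
  subst hfeq
  set c : ℂ := (α : ℂ) - 1 with hc
  set e1 : ℂ := c - 1 with he1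
  set e2 : ℂ := e1 - 1 with he2
  set e3 : ℂ := e2 - 1 with he3
  -- the open set where things are nice
  have hball : ∀ z : ℂ, ‖z‖ < 1 → 0 < (1 - z ^ 2).re := by
    intro z hz
    have h1 : (z ^ 2).re ≤ ‖z ^ 2‖ := Complex.re_le_norm _
    have h2 : ‖z ^ 2‖ < 1 := by
      rw [norm_pow]
      have h3 : ‖z‖ < 1 := hz
      exact pow_lt_one₀ (norm_nonneg z) h3 two_ne_zero
    simp only [Complex.sub_re, Complex.one_re]
    linarith
  have hU : IsOpen {z : ℂ | 0 < (1 - z ^ 2).re} := by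
    apply isOpen_lt continuous_const
    exact (Complex.continuous_re.comp (by continuity))
  have hU0 : {z : ℂ | 0 < (1 - z ^ 2).re} ∈ nhds (0 : ℂ) :=
    hU.mem_nhds (by norm_num)
  -- derivative builders
  have hcpow : ∀ (e : ℂ) (z : ℂ), 0 < (1 - z ^ 2).re →
      HasDerivAt (fun z : ℂ => (1 - z ^ 2) ^ e) (e * (1 - z ^ 2) ^ (e - 1) * (-(2 * z))) z := by
    intro e z hz
    have hb : HasDerivAt (fun z : ℂ => 1 - z ^ 2) (-(2 * z)) z := by
      simpa using ((hasDerivAt_pow 2 z).const_sub 1)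
    exact hb.cpow_const (Or.inl hz)
  have hF1 : ∀ z : ℂ, 0 < (1 - z ^ 2).re →
      HasDerivAt (fun z : ℂ => z * (1 - z ^ 2) ^ c)
        ((1 - z ^ 2) ^ c - 2 * c * z ^ 2 * (1 - z ^ 2) ^ e1) z := by
    intro z hz
    have := (hasDerivAt_id z).mul (hcpow c z hz)
    refine this.congr_deriv ?_
    try simp only [id_eq]
    rw [he1]; push_cast; ring
  have hF2 : ∀ z : ℂ, 0 < (1 - z ^ 2).re →
      HasDerivAt (fun z : ℂ => (1 - z ^ 2) ^ c - 2 * c * z ^ 2 * (1 - z ^ 2) ^ e1)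
        (-6 * c * z * (1 - z ^ 2) ^ e1 + 4 * c * e1 * z ^ 3 * (1 - z ^ 2) ^ e2) z := by
    intro z hz
    have h1 := hcpow c z hz
    have h2 := (((hasDerivAt_pow 2 z).const_mul (2 * c)).mul (hcpow e1 z hz))
    have := h1.sub h2
    refine this.congr_deriv ?_
    try simp only [id_eq]
    rw [he2, he1]; push_cast; ring
  have hF3 : ∀ z : ℂ, 0 < (1 - z ^ 2).re →
      HasDerivAt (fun z : ℂ => -6 * c * z * (1 - z ^ 2) ^ e1 + 4 * c * e1 * z ^ 3 * (1 - z ^ 2) ^ e2)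
        (-6 * c * (1 - z ^ 2) ^ e1 + 24 * c * e1 * z ^ 2 * (1 - z ^ 2) ^ e2
          - 8 * c * e1 * e2 * z ^ 4 * (1 - z ^ 2) ^ e3) z := by
    intro z hz
    have h1 := (((hasDerivAt_id z).const_mul (-6 * c)).mul (hcpow e1 z hz))
    have h2 := (((hasDerivAt_pow 3 z).const_mul (4 * c * e1)).mul (hcpow e2 z hz))
    have h3 := h1.add h2
    refine h3.congr_deriv ?_
    try simp only [id_eq]
    rw [he3, he2, he1]; push_cast; ring
  have hF4 : HasDerivAt (fun z : ℂ => -6 * c * (1 - z ^ 2) ^ e1 + 24 * c * e1 * z ^ 2 * (1 - z ^ 2) ^ e2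
          - 8 * c * e1 * e2 * z ^ 4 * (1 - z ^ 2) ^ e3) 0 0 := by
    have h0 : (0:ℝ) < (1 - (0:ℂ) ^ 2).re := by norm_num
    have h1 := (hcpow e1 0 h0).const_mul (-6 * c)
    have h2 := ((hasDerivAt_pow 2 (0:ℂ)).const_mul (24 * c * e1)).mul (hcpow e2 0 h0)
    have h3 := ((hasDerivAt_pow 4 (0:ℂ)).const_mul (8 * c * e1 * e2)).mul (hcpow e3 0 h0)
    have H := (h1.add h2).sub h3
    refine H.congr_deriv ?_
    norm_num
  -- eventual equalities
  have h1 : deriv (fun z : ℂ => z * (1 - z ^ 2) ^ c) =ᶠ[nhds 0]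
      (fun z : ℂ => (1 - z ^ 2) ^ c - 2 * c * z ^ 2 * (1 - z ^ 2) ^ e1) :=
    eventually_of_mem hU0 fun z hz => (hF1 z hz).deriv
  have h2 : deriv (fun z : ℂ => (1 - z ^ 2) ^ c - 2 * c * z ^ 2 * (1 - z ^ 2) ^ e1) =ᶠ[nhds 0]
      (fun z : ℂ => -6 * c * z * (1 - z ^ 2) ^ e1 + 4 * c * e1 * z ^ 3 * (1 - z ^ 2) ^ e2) :=
    eventually_of_mem hU0 fun z hz => (hF2 z hz).deriv
  have h3 : deriv (fun z : ℂ => -6 * c * z * (1 - z ^ 2) ^ e1 + 4 * c * e1 * z ^ 3 * (1 - z ^ 2) ^ e2)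
      =ᶠ[nhds 0]
      (fun z : ℂ => -6 * c * (1 - z ^ 2) ^ e1 + 24 * c * e1 * z ^ 2 * (1 - z ^ 2) ^ e2
          - 8 * c * e1 * e2 * z ^ 4 * (1 - z ^ 2) ^ e3) :=
    eventually_of_mem hU0 fun z hz => (hF3 z hz).deriv
  have h12 : deriv (deriv (fun z : ℂ => z * (1 - z ^ 2) ^ c)) =ᶠ[nhds 0]
      (fun z : ℂ => -6 * c * z * (1 - z ^ 2) ^ e1 + 4 * c * e1 * z ^ 3 * (1 - z ^ 2) ^ e2) :=
    h1.deriv.trans h2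
  have h123 : deriv (deriv (deriv (fun z : ℂ => z * (1 - z ^ 2) ^ c))) =ᶠ[nhds 0]
      (fun z : ℂ => -6 * c * (1 - z ^ 2) ^ e1 + 24 * c * e1 * z ^ 2 * (1 - z ^ 2) ^ e2
          - 8 * c * e1 * e2 * z ^ 4 * (1 - z ^ 2) ^ e3) :=
    h12.deriv.trans h3
  constructor
  · -- starlikeness
    intro z hz hz0
    have hzn : ‖z‖ < 1 := by simpa [dist_eq_norm] using hz
    have hzU := hball z hzn
    have hb : (1 : ℂ) - z ^ 2 ≠ 0 := by
      intro h; rw [h] at hzU; simp at hzU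
    have hp : (1 - z ^ 2) ^ c ≠ 0 := by
      rw [Ne, Complex.cpow_eq_zero_iff]; tauto
    have hd : deriv (fun z : ℂ => z * (1 - z ^ 2) ^ c) z
        = (1 - z ^ 2) ^ c - 2 * c * z ^ 2 * (1 - z ^ 2) ^ e1 := (hF1 z hzU).deriv
    have hsub : (1 - z ^ 2) ^ e1 = (1 - z ^ 2) ^ c / (1 - z ^ 2) := by
      rw [he1, Complex.cpow_sub _ _ hb, Complex.cpow_one]
    have key : z * deriv (fun z : ℂ => z * (1 - z ^ 2) ^ c) z / (z * (1 - z ^ 2) ^ c)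
        = 1 - ((2 * α - 2 : ℝ) : ℂ) * (z ^ 2 / (1 - z ^ 2)) := by
      rw [hd, hsub]
      field_simp
      rw [hc]
      push_cast
      ring
    simp only [key]
    rw [Complex.sub_re, Complex.one_re, Complex.re_ofReal_mul, Complex.div_re]
    have hw1 : ((1 : ℂ) - z ^ 2).re = 1 - (z ^ 2).re := by simp
    have hw2 : ((1 : ℂ) - z ^ 2).im = -(z ^ 2).im := by simp
    have hNval : Complex.normSq (1 - z ^ 2)
        = (1 - (z ^ 2).re) * (1 - (z ^ 2).re) + (z ^ 2).im * (z ^ 2).im := by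
      rw [Complex.normSq_apply, hw1, hw2]; ring
    have hN : 0 < Complex.normSq (1 - z ^ 2) := Complex.normSq_pos.mpr hb
    have hwn : (z ^ 2).re * (z ^ 2).re + (z ^ 2).im * (z ^ 2).im < 1 := by
      have h1 : Complex.normSq (z ^ 2) < 1 := by
        rw [Complex.normSq_eq_norm_sq, norm_pow]
        have h3 : ‖z‖ < 1 := hzn
        calc (‖z‖ ^ 2) ^ 2 = ‖z‖ ^ 4 := by ring
          _ < 1 := pow_lt_one₀ (norm_nonneg z) h3 (by norm_num)
      rwa [Complex.normSq_apply] at h1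
    rw [hw1, hw2, ← add_div, ← sub_pos]
    have hid : 1 - (2 * α - 2) * (((z ^ 2).re * (1 - (z ^ 2).re) + (z ^ 2).im * -(z ^ 2).im) /
          Complex.normSq (1 - z ^ 2)) - α
        = (1 - α) * (1 - ((z ^ 2).re * (z ^ 2).re + (z ^ 2).im * (z ^ 2).im)) /
          Complex.normSq (1 - z ^ 2) := by
      have hD : (1 - (z ^ 2).re) * (1 - (z ^ 2).re) + (z ^ 2).im * (z ^ 2).im ≠ 0 := by
        rw [← hNval]; exact hN.ne'
      rw [hNval]
      linear_combination (α - 1) * mul_inv_cancel₀ hD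
    rw [hid]
    apply div_pos _ hN
    have : (0:ℝ) < 1 - α := by linarith
    nlinarith
  · -- coefficient computation
    have ha2 : a 2 = 0 := by
      rw [ha]
      have : iteratedDeriv 2 (fun z : ℂ => z * (1 - z ^ 2) ^ c) 0 = 0 := by
        rw [show (2:ℕ) = 0 + 1 + 1 by rfl, iteratedDeriv_succ, iteratedDeriv_succ,
          iteratedDeriv_zero]
        rw [h12.eq_of_nhds]
        simp
      rw [this]; simp
    have ha4 : a 4 = 0 := by
      rw [ha]
      have : iteratedDeriv 4 (fun z : ℂ => z * (1 - z ^ 2) ^ c) 0 = 0 := by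
        rw [show (4:ℕ) = 0 + 1 + 1 + 1 + 1 by rfl, iteratedDeriv_succ, iteratedDeriv_succ,
          iteratedDeriv_succ, iteratedDeriv_succ, iteratedDeriv_zero]
        rw [h123.deriv_eq, hF4.deriv]
      rw [this]; simp
    have ha3 : a 3 = 1 - (α : ℂ) := by
      rw [ha]
      have : iteratedDeriv 3 (fun z : ℂ => z * (1 - z ^ 2) ^ c) 0 = -6 * c := by
        rw [show (3:ℕ) = 0 + 1 + 1 + 1 by rfl, iteratedDeriv_succ, iteratedDeriv_succ,
          iteratedDeriv_succ, iteratedDeriv_zero]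
        rw [h123.eq_of_nhds]
        simp
      rw [this, hc]
      norm_num [Nat.factorial]
      ring
    rw [ha2, ha3, ha4]
    have h2 : (0 : ℂ) * 0 - (1 - (α:ℂ)) ^ 2 = -((((1 - α) ^ 2 : ℝ)) : ℂ) := by
      push_cast; ring
    rw [h2, norm_neg, Complex.norm_real, Real.norm_eq_abs]
    exact abs_of_nonneg (by positivity)
end

section
/- If f(z) = z + a₂z² + a₃z³ + ⋯ is analytic on the unit disk and Re(1 + zf''(z)/f'(z)) > -1/2 there, then |a₂a₄ - a₃²| ≤ 21/64. -/
open Metric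

open Set Filter Complex

local notation "B" => Metric.ball (0:ℂ) 1

lemma eqOn_deriv {F G : ℂ → ℂ} (h : Set.EqOn F G B) :
    Set.EqOn (deriv F) (deriv G) B := fun z hz =>
  Filter.EventuallyEq.deriv_eq (Filter.eventuallyEq_of_mem (isOpen_ball.mem_nhds hz) h)

lemma eq_at_zero_of_ne {F G : ℂ → ℂ} (hF : ContinuousAt F 0) (hG : ContinuousAt G 0)
    (h : ∀ z ∈ B, z ≠ 0 → F z = G z) : F 0 = G 0 := by
  have hne : F =ᶠ[nhdsWithin (0:ℂ) {(0:ℂ)}ᶜ] G := by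
    have hball : ∀ᶠ z in nhdsWithin (0:ℂ) {(0:ℂ)}ᶜ, z ∈ B :=
      eventually_nhdsWithin_of_eventually_nhds (isOpen_ball.eventually_mem (by simp))
    filter_upwards [hball, self_mem_nhdsWithin] with z hz hz'
    exact h z hz hz'
  exact tendsto_nhds_unique
    (hF.continuousWithinAt.tendsto.congr' hne)
    hG.continuousWithinAt.tendsto

lemma final_ineq (t s w : ℝ) (ht0 : 0 ≤ t) (hs0 : 0 ≤ s) (hw0 : 0 ≤ w) (ht : t ≤ 1)
    (hs : s ≤ 1 - t^2) (hw : w * (1+t) ≤ (1 - t^2)*(1+t) - s^2) :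
    3/8*t*w + 7/16*t^2*s + s^2/4 + t^4/4 ≤ 21/64 := by
  have hss : s^2 ≤ (1-t^2)^2 := by nlinarith
  have P1 : 0 ≤ t * ((1-t^2)*(1+t) - s^2 - w*(1+t)) := mul_nonneg ht0 (by linarith)
  have P2 : 0 ≤ (2 - t) * ((1-t^2)^2 - s^2) := by nlinarith
  have P3 : 0 ≤ t^2*(1+t)*((1-t^2) - s) := mul_nonneg (mul_nonneg (sq_nonneg t) (by linarith)) (by linarith)
  have P4 : 0 ≤ (1+t)*(t^2 - 1/2)^2 := by positivity
  have key : (3/8*t*w + 7/16*t^2*s + s^2/4 + t^4/4 - 21/64) * (1+t) ≤ 0 := by nlinarith [P1,P2,P3,P4]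
  have h1t : (0:ℝ) < 1 + t := by linarith
  nlinarith [key, h1t]

-- dslope of analytic function is analytic on the ball
lemma analytic_dslope {g : ℂ → ℂ} (hg : AnalyticOnNhd ℂ g B) :
    AnalyticOnNhd ℂ (dslope g 0) B := by
  intro z hz
  rcases eq_or_ne z 0 with rfl | hne
  · obtain ⟨p, hp⟩ := hg 0 (by simp)
    exact (hp.has_fpower_series_dslope_fslope).analyticAt
  · have hslope : AnalyticAt ℂ (slope g 0) z := by
      have : AnalyticAt ℂ (fun w => (w - 0)⁻¹ • (g w - g 0)) z := by
        apply AnalyticAt.fun_smul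
        · exact ((analyticAt_id.sub analyticAt_const).inv (by simpa using hne))
        · exact (hg z hz).sub analyticAt_const
      exact this.congr (by filter_upwards with w; rw [slope_def_field]; simp [div_eq_inv_mul])
    exact hslope.congr (dslope_eventuallyEq_slope_of_ne g hne).symm

-- Moebius inequality
lemma moebius_lt {a w : ℂ} (ha : norm a < 1) (hw : norm w < 1) :
    norm ((w - a) / (1 - (starRingEnd ℂ) a * w)) < 1 := by
  have key : Complex.normSq (1 - (starRingEnd ℂ) a * w) - Complex.normSq (w - a)
      = (1 - Complex.normSq a) * (1 - Complex.normSq w) := by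
    simp [Complex.normSq_apply, Complex.sub_re, Complex.sub_im, Complex.mul_re, Complex.mul_im,
      Complex.conj_re, Complex.conj_im, Complex.one_re, Complex.one_im]
    ring
  have hna : Complex.normSq a < 1 := by
    rw [← Complex.sq_norm]; nlinarith [norm_nonneg a]
  have hnw : Complex.normSq w < 1 := by
    rw [← Complex.sq_norm]; nlinarith [norm_nonneg w]
  have hpos : 0 < Complex.normSq (1 - (starRingEnd ℂ) a * w) := by
    nlinarith [Complex.normSq_nonneg (w - a)]
  have hden : (1 - (starRingEnd ℂ) a * w) ≠ 0 := by
    intro h; rw [h] at hpos; simp at hpos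
  rw [norm_div, div_lt_one (norm_pos_iff.mpr hden)]
  have h2 : norm (w - a) ^ 2 < norm (1 - (starRingEnd ℂ) a * w) ^ 2 := by
    rw [Complex.sq_norm, Complex.sq_norm]; nlinarith
  nlinarith [norm_nonneg (w - a), norm_nonneg (1 - (starRingEnd ℂ) a * w)]

-- Schwarz-Pick at 0 for analytic maps into the closed unit disk
lemma schwarz_pick_zero {g : ℂ → ℂ} (hg : AnalyticOnNhd ℂ g B)
    (hb : ∀ z ∈ B, norm (g z) ≤ 1) :
    norm (deriv g 0) ≤ 1 - norm (g 0)^2 := by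
  have h0B : (0:ℂ) ∈ B := by simp
  by_cases hex : ∃ z0 ∈ B, norm (g z0) = 1
  · obtain ⟨z0, hz0, habs⟩ := hex
    have hmax : IsMaxOn (norm ∘ g) B z0 := by
      intro z hz
      simp only [Function.comp_apply, habs]
      exact hb z hz
    have heq : Set.EqOn g (Function.const ℂ (g z0)) B :=
      Complex.eqOn_of_isPreconnected_of_isMaxOn_norm (convex_ball (0:ℂ) 1).isPreconnected
        isOpen_ball hg.differentiableOn hz0 hmax
    have hd0 : deriv g 0 = 0 := by
      have : g =ᶠ[nhds (0:ℂ)] Function.const ℂ (g z0) :=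
        Filter.eventuallyEq_of_mem (isOpen_ball.mem_nhds h0B) heq
      rw [this.deriv_eq]; exact deriv_const 0 (g z0)
    have hg0 : norm (g 0) = 1 := by rw [heq h0B]; exact habs
    rw [hd0, hg0]; simp
  · push_neg at hex
    have hlt : ∀ z ∈ B, norm (g z) < 1 := fun z hz => lt_of_le_of_ne (hb z hz) (hex z hz)
    set a := g 0 with ha_def
    have ha : norm a < 1 := hlt 0 h0B
    set e : ℂ → ℂ := fun z => 1 - (starRingEnd ℂ) a * g z with he_def
    have henz : ∀ z ∈ B, e z ≠ 0 := by
      intro z hz h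
      have h1 : norm ((starRingEnd ℂ) a * g z) < 1 := by
        rw [norm_mul, Complex.norm_conj]
        calc norm a * norm (g z) ≤ norm a * 1 :=
              mul_le_mul_of_nonneg_left (hb z hz) (norm_nonneg a)
          _ < 1 := by simpa using ha
      have : (starRingEnd ℂ) a * g z = 1 := by
        have := sub_eq_zero.mp h; linear_combination -this
      rw [this] at h1; simp at h1
    have hge : AnalyticOnNhd ℂ e B := analyticOnNhd_const.sub (analyticOnNhd_const.mul hg)
    set G : ℂ → ℂ := fun z => (g z - a) / e z with hG_def
    have hG : AnalyticOnNhd ℂ G B := (hg.sub analyticOnNhd_const).div hge henz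
    have hG0 : G 0 = 0 := by simp [hG_def, ← ha_def]
    have hmaps : Set.MapsTo G B (ball (G 0) 1) := by
      intro z hz
      rw [hG0, mem_ball_zero_iff]
      exact moebius_lt ha (hlt z hz)
    have hder : ‖deriv G 0‖ ≤ 1 :=
      le_of_le_of_eq (Complex.norm_deriv_le_div_of_mapsTo_ball hG.differentiableOn (hmaps.mono_right ball_subset_closedBall) one_pos)
        (by norm_num)
    -- compute deriv G 0
    have hid : Set.EqOn (fun z => G z * e z) (fun z => g z - a) B := by
      intro z hz
      simp only [hG_def]
      exact div_mul_cancel₀ _ (henz z hz)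
    have hdG : DifferentiableAt ℂ G 0 := (hG 0 h0B).differentiableAt
    have hde : DifferentiableAt ℂ e 0 := (hge 0 h0B).differentiableAt
    have hdg : DifferentiableAt ℂ g 0 := (hg 0 h0B).differentiableAt
    have hkey : deriv G 0 * e 0 = deriv g 0 := by
      have h1 := (eqOn_deriv hid) h0B
      rw [deriv_fun_mul hdG hde] at h1
      rw [hG0, zero_mul, add_zero] at h1
      rw [h1]
      rw [deriv_fun_sub hdg (differentiableAt_const a), deriv_const, sub_zero]
    have he0 : e 0 = ((1 - norm a ^ 2 : ℝ) : ℂ) := by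
      simp only [he_def]
      rw [mul_comm, Complex.mul_conj, ← Complex.sq_norm]
      push_cast; ring
    have habs_eq : norm (deriv G 0) * (1 - norm a ^ 2) = norm (deriv g 0) := by
      rw [← hkey, norm_mul, he0, Complex.norm_real, Real.norm_eq_abs, _root_.abs_of_nonneg (by nlinarith [norm_nonneg a])]
    rw [← habs_eq]
    have h1 : 0 ≤ 1 - norm a ^ 2 := by nlinarith [norm_nonneg a]
    calc norm (deriv G 0) * (1 - norm a ^ 2) ≤ 1 * (1 - norm a ^ 2) :=
          mul_le_mul_of_nonneg_right (by simpa using hder) h1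
      _ = 1 - norm (g 0) ^ 2 := by rw [one_mul, ← ha_def]

-- nonvanishing of u = deriv f on the ball
lemma u_ne_zero {u : ℂ → ℂ} (hu : AnalyticOnNhd ℂ u B) (hu0 : u 0 = 1)
    (hcc : ∀ z ∈ B, -(1/2 : ℝ) < (1 + z * deriv u z / u z).re) :
    ∀ z ∈ B, u z ≠ 0 := by
  by_contra hcon
  push_neg at hcon
  obtain ⟨z0, hz0, huz0⟩ := hcon
  have hz0ne : z0 ≠ 0 := by rintro rfl; rw [hu0] at huz0; exact one_ne_zero huz0
  have hA : AnalyticAt ℂ u z0 := hu z0 hz0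
  have hnotev : ¬ ∀ᶠ z in nhds z0, u z = 0 := by
    intro h
    have heq : Set.EqOn u 0 B :=
      hu.eqOn_zero_of_preconnected_of_eventuallyEq_zero (convex_ball (0:ℂ) 1).isPreconnected
        hz0 h
    have := heq (by simp : (0:ℂ) ∈ B)
    rw [hu0] at this; exact one_ne_zero this
  have horder : analyticOrderAt u z0 ≠ ⊤ := fun h => hnotev (analyticOrderAt_eq_top.mp h)
  obtain ⟨n, hn⟩ := Option.ne_none_iff_exists'.mp horder
  obtain ⟨g, hgan, hgnz, hgeq⟩ := (hA.analyticOrderAt_eq_natCast (n := n)).mp hn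
  have hn1 : 1 ≤ n := by
    rcases Nat.eq_zero_or_pos n with h0 | h; swap; · exact h
    subst h0
    have := hgeq.self_of_nhds
    simp only [pow_zero, one_smul] at this
    rw [huz0] at this; exact (hgnz this.symm).elim
  -- eventual facts
  have E1 : ∀ᶠ z in nhds z0, u z = (z - z0)^n * g z := by
    filter_upwards [hgeq] with z hz; simpa [smul_eq_mul] using hz
  have E3 : ∀ᶠ z in nhds z0,
      deriv u z = (n:ℂ) * (z - z0)^(n-1) * g z + (z - z0)^n * deriv g z := by
    have h1 : deriv u =ᶠ[nhds z0] deriv (fun z => (z - z0)^n * g z) :=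
      Filter.EventuallyEq.deriv E1
    filter_upwards [h1, hgan.eventually_analyticAt] with z hz hgz
    rw [hz]
    have hd : HasDerivAt (fun w => (w - z0)^n * g w)
        ((n:ℂ) * (z - z0)^(n-1) * 1 * g z + (z - z0)^n * deriv g z) z :=
      (((hasDerivAt_id z).sub_const z0).pow n).mul hgz.differentiableAt.hasDerivAt
    rw [hd.deriv]; ring
  have E4 : ∀ᶠ z in nhds z0, g z ≠ 0 := hgan.continuousAt.eventually_ne hgnz
  set M : ℝ := norm (z0 * deriv g z0 / g z0) + 1 with hM_def
  have hM0 : 0 ≤ M := by positivity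
  have E5 : ∀ᶠ z in nhds z0, norm (z * deriv g z / g z) < M := by
    have hcont : ContinuousAt (fun z => norm (z * deriv g z / g z)) z0 := by
      apply continuous_norm.continuousAt.comp
      have hdg : ContinuousAt (deriv g) z0 := by
        have h1 : ContinuousAt (fun z => fderiv ℂ g z 1) z0 :=
          (ContinuousLinearMap.apply ℂ ℂ (1:ℂ)).continuous.continuousAt.comp
            hgan.fderiv.continuousAt
        have : (fun z => fderiv ℂ g z 1) = deriv g := funext fun z => fderiv_apply_one_eq_deriv
        rwa [this] at h1
      exact (continuousAt_id.mul hdg).div hgan.continuousAt hgnz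
    exact hcont.eventually_lt_const (by simp [hM_def])
  have hE := (E1.and (E3.and (E4.and E5)))
  -- approach along the segment towards 0
  have T : Filter.Tendsto (fun ε : ℝ => z0 * (1 - (ε:ℂ))) (nhdsWithin 0 (Set.Ioi 0)) (nhds z0) := by
    have hc : Continuous (fun ε : ℝ => z0 * (1 - (ε:ℂ))) :=
      continuous_const.mul (continuous_const.sub Complex.continuous_ofReal)
    have := hc.tendsto 0
    simp only [Complex.ofReal_zero, sub_zero, mul_one] at this
    exact this.mono_left nhdsWithin_le_nhds
  have hev : ∀ᶠ ε in nhdsWithin (0:ℝ) (Set.Ioi 0),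
      (0 < ε ∧ ε < min 1 (1/(M+10))) ∧
      (u (z0*(1-(ε:ℂ))) = ((z0*(1-(ε:ℂ))) - z0)^n * g (z0*(1-(ε:ℂ))) ∧
       (deriv u (z0*(1-(ε:ℂ))) = (n:ℂ) * ((z0*(1-(ε:ℂ))) - z0)^(n-1) * g (z0*(1-(ε:ℂ)))
          + ((z0*(1-(ε:ℂ))) - z0)^n * deriv g (z0*(1-(ε:ℂ))) ∧
        (g (z0*(1-(ε:ℂ))) ≠ 0 ∧
         norm ((z0*(1-(ε:ℂ))) * deriv g (z0*(1-(ε:ℂ))) / g (z0*(1-(ε:ℂ)))) < M))) := by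
    apply Filter.Eventually.and
    · apply Filter.Eventually.and
      · exact self_mem_nhdsWithin
      · apply eventually_nhdsWithin_of_eventually_nhds
        have : Set.Iio (min 1 (1/(M+10))) ∈ nhds (0:ℝ) :=
          Iio_mem_nhds (by positivity)
        filter_upwards [this] with ε hε; exact hε
    · exact T.eventually hE
  obtain ⟨ε, ⟨⟨hεpos, hεlt⟩, hueq, hderu, hgne, hbound⟩⟩ := hev.exists
  rw [lt_min_iff] at hεlt
  obtain ⟨hε1, hεM⟩ := hεlt
  set z : ℂ := z0 * (1 - (ε:ℂ)) with hz_def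
  have hεC : ((ε:ℂ)) ≠ 0 := by exact_mod_cast ne_of_gt hεpos
  have habs1ε : norm (1 - (ε:ℂ)) = 1 - ε := by
    rw [show (1:ℂ) - (ε:ℂ) = ((1 - ε : ℝ) : ℂ) by push_cast; ring, Complex.norm_real, Real.norm_eq_abs]
    exact _root_.abs_of_nonneg (by linarith)
  have hzB : z ∈ B := by
    rw [mem_ball_zero_iff, hz_def, norm_mul, habs1ε]
    have h1 : norm z0 < 1 := by rwa [mem_ball_zero_iff] at hz0
    nlinarith [norm_nonneg z0]
  have hzz0 : z - z0 = -(ε:ℂ) * z0 := by rw [hz_def]; ring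
  have hzz0ne : z - z0 ≠ 0 := by
    rw [hzz0]; exact mul_ne_zero (neg_ne_zero.mpr hεC) hz0ne
  have hune : u z ≠ 0 := by
    rw [hueq]; exact mul_ne_zero (pow_ne_zero _ hzz0ne) hgne
  have hpow : (z - z0)^n = (z - z0)^(n-1) * (z - z0) := by
    conv_lhs => rw [show n = (n-1)+1 from (Nat.succ_pred_eq_of_pos hn1).symm]
    rw [pow_succ]
  have hwsum : z * deriv u z / u z = (n:ℂ) * z / (z - z0) + z * deriv g z / g z := by
    rw [hderu, hueq, hpow]
    field_simp
  have hfrac : (n:ℂ) * z / (z - z0) = (-(((n:ℝ))*(1-ε)/ε) : ℝ) := by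
    rw [hzz0, hz_def]
    field_simp
    push_cast
    linear_combination ((n:ℂ) - n*ε) * mul_inv_cancel₀ hεC
  have hrebound : ((z * deriv g z / g z)).re ≤ M :=
    le_trans (Complex.re_le_norm _) (le_of_lt hbound)
  have hn1R : (1:ℝ) ≤ (n:ℝ) := by exact_mod_cast hn1
  have hinv : M + 10 ≤ 1/ε := by
    rw [le_div_iff₀ hεpos]
    have h2 : ε * (M+10) < (1/(M+10)) * (M+10) := by
      apply mul_lt_mul_of_pos_right hεM (by positivity)
    rw [one_div, inv_mul_cancel₀ (by positivity : M + 10 ≠ 0)] at h2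
    linarith [mul_comm ε (M+10)]
  have hfracR : (M + 9) * 1 ≤ ((n:ℝ))*(1-ε)/ε := by
    have h3 : (1-ε)/ε = 1/ε - 1 := by field_simp
    have h4 : (1:ℝ)*((1-ε)/ε) ≤ (n:ℝ)*((1-ε)/ε) := by
      exact mul_le_mul_of_nonneg_right hn1R (div_nonneg (by linarith) hεpos.le)
    calc (M+9)*1 = M + 9 := by ring
      _ ≤ (1-ε)/ε := by rw [h3]; linarith
      _ ≤ (n:ℝ)*((1-ε)/ε) := by linarith [h4]
      _ = (n:ℝ)*(1-ε)/ε := by ring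
  have hre : (1 + z * deriv u z / u z).re ≤ 1 - (M+9) + M := by
    rw [hwsum, hfrac]
    rw [Complex.add_re, Complex.add_re, Complex.one_re, Complex.ofReal_re]
    linarith [hrebound, hfracR]
  have := hcc z hzB
  linarith

lemma abs_lt_abs_key {U V : ℂ} (hU : U ≠ 0) (hre : -(3/2 : ℝ) < (V/U).re) :
    norm V < norm (3*U + V) := by
  set w := V / U with hw
  have hV : V = w * U := by rw [hw]; field_simp
  have h3 : 3*U + V = (3 + w) * U := by rw [hV]; ring
  rw [hV, show 3*U + w*U = (3+w)*U by ring, norm_mul, norm_mul]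
  clear_value w
  apply mul_lt_mul_of_pos_right _ (norm_pos_iff.mpr hU)
  have hsq : norm w ^ 2 < norm (3 + w) ^ 2 := by
    rw [Complex.sq_norm, Complex.sq_norm, Complex.normSq_apply, Complex.normSq_apply]
    simp only [Complex.add_re, Complex.add_im]
    have : ((3:ℂ)).re = 3 := by norm_num
    have h2 : ((3:ℂ)).im = 0 := by norm_num
    rw [this, h2]
    nlinarith [hre]
  nlinarith [norm_nonneg w, norm_nonneg (3 + w)]


set_option maxHeartbeats 1600000

/-- Hankel determinant bound 21/64 for Ozaki close-to-convex functions (α = -1/2). -/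
theorem hankel_ozaki_half (f : ℂ → ℂ) (a : ℕ → ℂ)
    (hf : AnalyticOn ℂ f (ball 0 1))
    (hf0 : f 0 = 0) (hf1 : deriv f 0 = 1)
    (hcc : ∀ z ∈ ball (0:ℂ) 1, -(1/2 : ℝ) < (1 + z * deriv (deriv f) z / deriv f z).re)
    (ha : ∀ n, a n = iteratedDeriv n f 0 / n.factorial) :
    ‖a 2 * a 4 - a 3 ^ 2‖ ≤ 21 / 64 := by
  have h0B : (0:ℂ) ∈ B := by simp
  have hfa : AnalyticOnNhd ℂ f B := (isOpen_ball.analyticOn_iff_analyticOnNhd).mp hf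
  set u : ℂ → ℂ := deriv f with hu_def
  set v : ℂ → ℂ := deriv u with hv_def
  have hu : AnalyticOnNhd ℂ u B := hfa.deriv
  have hv : AnalyticOnNhd ℂ v B := hu.deriv
  have hvv : AnalyticOnNhd ℂ (deriv v) B := hv.deriv
  have hcc' : ∀ z ∈ B, -(1/2 : ℝ) < (1 + z * v z / u z).re := hcc
  have hunz : ∀ z ∈ B, u z ≠ 0 := u_ne_zero hu hf1 hcc'
  -- the ratio has real part > -3/2
  have hre : ∀ z ∈ B, -(3/2 : ℝ) < ((z * v z) / u z).re := by
    intro z hz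
    have h := hcc' z hz
    rw [Complex.add_re, Complex.one_re] at h
    have : (z * v z / u z).re = (1 + z * v z / u z).re - 1 := by
      rw [Complex.add_re, Complex.one_re]; ring
    rw [this]; linarith
  set D : ℂ → ℂ := fun z => 3 * u z + z * v z with hD_def
  have hD : AnalyticOnNhd ℂ D B :=
    (analyticOnNhd_const.mul hu).add (analyticOnNhd_id.mul hv)
  have habsD : ∀ z ∈ B, norm (z * v z) < norm (D z) := fun z hz =>
    abs_lt_abs_key (hunz z hz) (hre z hz)
  have hDnz : ∀ z ∈ B, D z ≠ 0 := by
    intro z hz h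
    have h2 := habsD z hz
    rw [h] at h2; simp only [norm_zero] at h2
    exact absurd h2 (not_lt.mpr (norm_nonneg _))
  set ω : ℂ → ℂ := fun z => z * v z / D z with hω_def
  have hω : AnalyticOnNhd ℂ ω B := (analyticOnNhd_id.mul hv).div hD hDnz
  have hω0 : ω 0 = 0 := by simp [hω_def]
  have hωlt : ∀ z ∈ B, norm (ω z) < 1 := by
    intro z hz
    rw [hω_def]
    simp only [norm_div]
    rw [div_lt_one (norm_pos_iff.mpr (hDnz z hz))]
    exact habsD z hz
  have hid : ∀ z ∈ B, z * v z = ω z * D z := by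
    intro z hz
    rw [hω_def]
    exact (div_mul_cancel₀ _ (hDnz z hz)).symm
  set ω1 : ℂ → ℂ := dslope ω 0 with hω1_def
  have hω1 : AnalyticOnNhd ℂ ω1 B := analytic_dslope hω
  have hzω1 : ∀ z : ℂ, ω z = z * ω1 z := by
    intro z
    have := sub_smul_dslope ω 0 z
    rw [hω0, sub_zero, sub_zero, smul_eq_mul] at this
    rw [hω1_def, this]
  have hb1 : ∀ z ∈ B, norm (ω1 z) ≤ 1 := by
    intro z hz
    have hmaps : Set.MapsTo ω B (ball (ω 0) 1) := by
      rw [hω0]; intro w hw; rw [mem_ball_zero_iff]; exact hωlt w hw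
    have := Complex.norm_dslope_le_div_of_mapsTo_ball hω.differentiableOn (hmaps.mono_right ball_subset_closedBall) hz
    rwa [div_one] at this
  set d1 : ℂ := ω1 0 with hd1_def
  set d2 : ℂ := deriv ω1 0 with hd2_def
  set d3 : ℂ := deriv (deriv ω1) 0 / 2 with hd3_def
  -- master identity
  have E0 : Set.EqOn v (fun z => ω1 z * (3 * u z + z * v z)) B := by
    intro z hz
    rcases eq_or_ne z 0 with rfl | hne
    · exact eq_at_zero_of_ne (hv 0 h0B).continuousAt
        (((hω1 0 h0B).mul ((analyticAt_const.mul (hu 0 h0B)).add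
          (analyticAt_id.mul (hv 0 h0B)))).continuousAt)
        (fun w hw hw' => by
          have h1 := hid w hw
          rw [hzω1 w] at h1
          have : w * v w = w * (ω1 w * D w) := by rw [h1]; ring
          exact mul_left_cancel₀ hw' this) 
    · have h1 := hid z hz
      rw [hzω1 z] at h1
      have h2 : z * v z = z * (ω1 z * D z) := by rw [h1]; ring
      exact mul_left_cancel₀ hne h2
  have E1 : Set.EqOn (deriv v)
      (fun z => deriv ω1 z * (3 * u z + z * v z) + ω1 z * (4 * v z + z * deriv v z)) B := by
    intro z hz
    have h1 := eqOn_deriv E0 hz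
    have hd : HasDerivAt (fun w => ω1 w * (3 * u w + w * v w))
        (deriv ω1 z * (3 * u z + z * v z)
          + ω1 z * (3 * deriv u z + (1 * v z + z * deriv v z))) z :=
      (hω1 z hz).differentiableAt.hasDerivAt.mul
        ((HasDerivAt.const_mul (3:ℂ) (hu z hz).differentiableAt.hasDerivAt).add
          ((hasDerivAt_id z).mul (hv z hz).differentiableAt.hasDerivAt))
    rw [h1, hd.deriv, ← hv_def]
    ring
  have E2 : Set.EqOn (deriv (deriv v))
      (fun z => deriv (deriv ω1) z * (3 * u z + z * v z)
        + deriv ω1 z * (3 * v z + (1 * v z + z * deriv v z))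
        + (deriv ω1 z * (4 * v z + z * deriv v z)
          + ω1 z * (4 * deriv v z + (1 * deriv v z + z * deriv (deriv v) z)))) B := by
    intro z hz
    have h1 := eqOn_deriv E1 hz
    have hd : HasDerivAt
        (fun w => deriv ω1 w * (3 * u w + w * v w) + ω1 w * (4 * v w + w * deriv v w))
        ((deriv (deriv ω1) z * (3 * u z + z * v z)
          + deriv ω1 z * (3 * deriv u z + (1 * v z + z * deriv v z)))
         + (deriv ω1 z * (4 * v z + z * deriv v z)
          + ω1 z * (4 * deriv v z + (1 * deriv v z + z * deriv (deriv v) z)))) z := by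
      apply HasDerivAt.add
      · exact (hω1.deriv z hz).differentiableAt.hasDerivAt.mul
          ((HasDerivAt.const_mul (3:ℂ) (hu z hz).differentiableAt.hasDerivAt).add
            ((hasDerivAt_id z).mul (hv z hz).differentiableAt.hasDerivAt))
      · exact (hω1 z hz).differentiableAt.hasDerivAt.mul
          ((HasDerivAt.const_mul (4:ℂ) (hv z hz).differentiableAt.hasDerivAt).add
            ((hasDerivAt_id z).mul (hvv z hz).differentiableAt.hasDerivAt))
    rw [h1, hd.deriv, ← hv_def]
  have hu0 : u 0 = 1 := hf1
  have V0 : v 0 = 3 * d1 := by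
    have h := E0 h0B
    simp only at h
    rw [h, hu0, ← hd1_def]
    ring
  have V1 : deriv v 0 = 3 * d2 + 12 * d1^2 := by
    have h := E1 h0B
    simp only at h
    rw [h, hu0, V0, ← hd1_def, ← hd2_def]
    ring
  have hdd3 : deriv (deriv ω1) 0 = 2 * d3 := by rw [hd3_def]; ring
  have V2 : deriv (deriv v) 0 = 6 * d3 + 39 * d1 * d2 + 60 * d1^3 := by
    have h := E2 h0B
    simp only at h
    rw [h, hu0, V0, V1, hdd3, ← hd1_def, ← hd2_def]
    ring
  have hit2 : iteratedDeriv 2 f = deriv (deriv f) := by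
    rw [show (2:ℕ) = 1 + 1 from rfl, iteratedDeriv_succ, iteratedDeriv_one]
  have hit3 : iteratedDeriv 3 f = deriv (deriv (deriv f)) := by
    rw [show (3:ℕ) = 2 + 1 from rfl, iteratedDeriv_succ, hit2]
  have hit4 : iteratedDeriv 4 f = deriv (deriv (deriv (deriv f))) := by
    rw [show (4:ℕ) = 3 + 1 from rfl, iteratedDeriv_succ, hit3]
  have ha2 : a 2 = 3 * d1 / 2 := by
    rw [ha 2, hit2, ← hu_def, ← hv_def, V0]
    norm_num [Nat.factorial]
  have ha3 : a 3 = (3 * d2 + 12 * d1^2) / 6 := by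
    rw [ha 3, hit3, ← hu_def, ← hv_def, V1]
    norm_num [Nat.factorial]
  have ha4 : a 4 = (6 * d3 + 39 * d1 * d2 + 60 * d1^3) / 24 := by
    rw [ha 4, hit4, ← hu_def, ← hv_def, V2]
    norm_num [Nat.factorial]
  have Hval : a 2 * a 4 - a 3 ^ 2
      = 3/8*(d1*d3) + 7/16*(d1^2*d2) - 1/4*d2^2 - 1/4*d1^4 := by
    rw [ha2, ha3, ha4]
    field_simp
    ring
  set t : ℝ := norm d1 with ht_def
  set s : ℝ := norm d2 with hs_def
  set w3 : ℝ := norm d3 with hw3_def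
  have ht0 : 0 ≤ t := norm_nonneg d1
  have hs0 : 0 ≤ s := norm_nonneg d2
  have hw30 : 0 ≤ w3 := norm_nonneg d3
  have ht1 : t ≤ 1 := by rw [ht_def, hd1_def]; exact hb1 0 h0B
  have hsp1 : s ≤ 1 - t^2 := by
    have := schwarz_pick_zero hω1 hb1
    rw [← hd1_def, ← hd2_def] at this
    rw [hs_def, ht_def]; linarith
  have habsH : norm (a 2 * a 4 - a 3 ^ 2)
      ≤ 3/8*(t*w3) + 7/16*(t^2*s) + 1/4*s^2 + 1/4*t^4 := by
    rw [Hval]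
    have e1 : norm ((3:ℂ)/8*(d1*d3)) = 3/8*(t*w3) := by
      rw [norm_mul, norm_mul, norm_div]
      norm_num [ht_def, hw3_def]
    have e2 : norm ((7:ℂ)/16*(d1^2*d2)) = 7/16*(t^2*s) := by
      rw [norm_mul, norm_mul, norm_div, norm_pow]
      norm_num [ht_def, hs_def]
    have e3 : norm ((1:ℂ)/4*d2^2) = 1/4*s^2 := by
      rw [norm_mul, norm_div, norm_pow]
      norm_num [hs_def]
    have e4 : norm ((1:ℂ)/4*d1^4) = 1/4*t^4 := by
      rw [norm_mul, norm_div, norm_pow]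
      norm_num [ht_def]
    calc norm (3/8*(d1*d3) + 7/16*(d1^2*d2) - 1/4*d2^2 - 1/4*d1^4)
        ≤ norm (3/8*(d1*d3) + 7/16*(d1^2*d2) - 1/4*d2^2) + norm ((1:ℂ)/4*d1^4) := by
          apply norm_sub_le
      _ ≤ norm (3/8*(d1*d3) + 7/16*(d1^2*d2)) + norm ((1:ℂ)/4*d2^2)
            + norm ((1:ℂ)/4*d1^4) := by
          have := norm_sub_le (3/8*(d1*d3) + 7/16*(d1^2*d2)) ((1:ℂ)/4*d2^2)
          linarith
      _ ≤ norm ((3:ℂ)/8*(d1*d3)) + norm ((7:ℂ)/16*(d1^2*d2))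
            + norm ((1:ℂ)/4*d2^2) + norm ((1:ℂ)/4*d1^4) := by
          have := norm_add_le ((3:ℂ)/8*(d1*d3)) ((7:ℂ)/16*(d1^2*d2))
          linarith
      _ = 3/8*(t*w3) + 7/16*(t^2*s) + 1/4*s^2 + 1/4*t^4 := by rw [e1, e2, e3, e4]
  by_cases hex : ∃ z0 ∈ B, norm (ω1 z0) = 1
  · -- constant case
    obtain ⟨z0, hz0, habs1⟩ := hex
    have hmax : IsMaxOn (norm ∘ ω1) B z0 := by
      intro z hz
      simp only [Function.comp_apply, habs1]
      exact hb1 z hz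
    have heq : Set.EqOn ω1 (Function.const ℂ (ω1 z0)) B :=
      Complex.eqOn_of_isPreconnected_of_isMaxOn_norm (convex_ball (0:ℂ) 1).isPreconnected
        isOpen_ball hω1.differentiableOn hz0 hmax
    have hEz : Set.EqOn (deriv ω1) (fun _ => (0:ℂ)) B := by
      intro z hz
      have : ω1 =ᶠ[nhds z] Function.const ℂ (ω1 z0) :=
        Filter.eventuallyEq_of_mem (isOpen_ball.mem_nhds hz) heq
      rw [this.deriv_eq]
      exact deriv_const z (ω1 z0)
    have hd2z : d2 = 0 := by rw [hd2_def]; exact hEz h0B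
    have hd3z : d3 = 0 := by
      rw [hd3_def]
      have := eqOn_deriv hEz h0B
      rw [this, deriv_const]
      norm_num
    have hs0' : s = 0 := by rw [hs_def, hd2z]; simp
    have hw0' : w3 = 0 := by rw [hw3_def, hd3z]; simp
    refine le_trans habsH ?_
    rw [hs0', hw0']
    nlinarith [ht0, ht1]
  · push_neg at hex
    have hlt : ∀ z ∈ B, norm (ω1 z) < 1 := fun z hz =>
      lt_of_le_of_ne (hb1 z hz) (hex z hz)
    have htlt : t < 1 := by rw [ht_def, hd1_def]; exact hlt 0 h0B
    set c : ℂ := (starRingEnd ℂ) d1 with hc_def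
    have henz : ∀ z ∈ B, (1:ℂ) - c * ω1 z ≠ 0 := by
      intro z hz h
      have h1 : norm (c * ω1 z) < 1 := by
        rw [norm_mul, hc_def, Complex.norm_conj, ← ht_def]
        calc t * norm (ω1 z) ≤ 1 * norm (ω1 z) :=
              mul_le_mul_of_nonneg_right ht1 (norm_nonneg _)
          _ < 1 := by simpa using hlt z hz
      have h2 : c * ω1 z = 1 := by linear_combination -(sub_eq_zero.mp h)
      rw [h2] at h1; simp at h1
    set ψ : ℂ → ℂ := fun z => (ω1 z - d1) / (1 - c * ω1 z) with hψ_def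
    have hψ : AnalyticOnNhd ℂ ψ B :=
      (hω1.sub analyticOnNhd_const).div
        (analyticOnNhd_const.sub (analyticOnNhd_const.mul hω1)) henz
    have hψ0 : ψ 0 = 0 := by
      rw [hψ_def]; simp only [← hd1_def]; simp
    have hψlt : ∀ z ∈ B, norm (ψ z) < 1 := by
      intro z hz
      rw [hψ_def]
      exact moebius_lt (by rw [← ht_def] at *; exact htlt) (hlt z hz)
    set ω2 : ℂ → ℂ := dslope ψ 0 with hω2_def
    have hω2 : AnalyticOnNhd ℂ ω2 B := analytic_dslope hψ
    have hb2 : ∀ z ∈ B, norm (ω2 z) ≤ 1 := by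
      intro z hz
      have hmaps : Set.MapsTo ψ B (ball (ψ 0) 1) := by
        rw [hψ0]; intro w hw; rw [mem_ball_zero_iff]; exact hψlt w hw
      have := Complex.norm_dslope_le_div_of_mapsTo_ball hψ.differentiableOn (hmaps.mono_right ball_subset_closedBall) hz
      rwa [div_one] at this
    have hzψ : ∀ z : ℂ, ψ z = z * ω2 z := by
      intro z
      have := sub_smul_dslope ψ 0 z
      rw [hψ0, sub_zero, sub_zero, smul_eq_mul] at this
      rw [hω2_def, this]
    have sp2 : norm (deriv ω2 0) ≤ 1 - norm (ω2 0)^2 :=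
      schwarz_pick_zero hω2 hb2
    -- coefficient identities for ψ
    have hidψ : Set.EqOn (fun z => ψ z * (1 - c * ω1 z)) (fun z => ω1 z - d1) B := by
      intro z hz
      simp only [hψ_def]
      exact div_mul_cancel₀ _ (henz z hz)
    have Ep1 : Set.EqOn (fun z => deriv ψ z * (1 - c * ω1 z) + ψ z * (0 - c * deriv ω1 z))
        (deriv ω1) B := by
      intro z hz
      have h1 := eqOn_deriv hidψ hz
      have hd : HasDerivAt (fun w => ψ w * (1 - c * ω1 w))
          (deriv ψ z * (1 - c * ω1 z) + ψ z * (0 - c * deriv ω1 z)) z :=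
        (hψ z hz).differentiableAt.hasDerivAt.mul
          ((hasDerivAt_const z (1:ℂ)).sub
            (HasDerivAt.const_mul c (hω1 z hz).differentiableAt.hasDerivAt))
      have h2 : deriv (fun w => ω1 w - d1) z = deriv ω1 z :=
        ((hω1 z hz).differentiableAt.hasDerivAt.sub_const d1).deriv
      simp only []
      rw [← hd.deriv, h1, h2]
    have I1 : deriv ψ 0 * (1 - c * d1) = d2 := by
      have h := Ep1 h0B
      simp only at h
      rw [hψ0, ← hd1_def, ← hd2_def] at h
      linear_combination h
    have I2 : deriv (deriv ψ) 0 * (1 - c * d1) + 2 * (deriv ψ 0) * (0 - c * d2) = 2 * d3 := by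
      have h1 := eqOn_deriv Ep1 h0B
      have hd : HasDerivAt (fun w => deriv ψ w * (1 - c * ω1 w) + ψ w * (0 - c * deriv ω1 w))
          ((deriv (deriv ψ) 0 * (1 - c * ω1 0) + deriv ψ 0 * (0 - c * deriv ω1 0))
            + (deriv ψ 0 * (0 - c * deriv ω1 0) + ψ 0 * (0 - c * deriv (deriv ω1) 0))) 0 := by
        apply HasDerivAt.add
        · exact (hψ.deriv 0 h0B).differentiableAt.hasDerivAt.mul
            ((hasDerivAt_const 0 (1:ℂ)).sub
              (HasDerivAt.const_mul c (hω1 0 h0B).differentiableAt.hasDerivAt))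
        · exact (hψ 0 h0B).differentiableAt.hasDerivAt.mul
            ((hasDerivAt_const 0 (0:ℂ)).sub
              (HasDerivAt.const_mul c (hω1.deriv 0 h0B).differentiableAt.hasDerivAt))
      rw [hd.deriv] at h1
      rw [hψ0, hdd3, ← hd1_def, ← hd2_def] at h1
      linear_combination h1
    have Eψz : Set.EqOn (deriv ψ) (fun z => ω2 z + z * deriv ω2 z) B := by
      intro z hz
      have hfun : ψ = fun w => w * ω2 w := funext hzψ
      rw [hfun]
      have hd : HasDerivAt (fun w => w * ω2 w) (1 * ω2 z + z * deriv ω2 z) z :=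
        (hasDerivAt_id z).mul (hω2 z hz).differentiableAt.hasDerivAt
      rw [hd.deriv]; ring
    have J1 : deriv ψ 0 = ω2 0 := by
      have h := Eψz h0B
      simp only at h
      rw [h]; ring
    have J2 : deriv (deriv ψ) 0 = 2 * deriv ω2 0 := by
      have h1 := eqOn_deriv Eψz h0B
      have hd : HasDerivAt (fun z => ω2 z + z * deriv ω2 z)
          (deriv ω2 0 + (1 * deriv ω2 0 + 0 * deriv (deriv ω2) 0)) 0 :=
        (hω2 0 h0B).differentiableAt.hasDerivAt.add
          ((hasDerivAt_id 0).mul (hω2.deriv 0 h0B).differentiableAt.hasDerivAt)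
      rw [hd.deriv] at h1
      rw [h1]; ring
    -- numeric conclusions
    have hq : (1:ℂ) - c * d1 = ((1 - t^2 : ℝ) : ℂ) := by
      rw [hc_def, mul_comm, Complex.mul_conj, ht_def, Complex.sq_norm]
      push_cast; ring
    have hq0 : (0:ℝ) < 1 - t^2 := by have h := pow_lt_one₀ ht0 htlt two_ne_zero; linarith
    have hqC : ((1 - t^2 : ℝ) : ℂ) ≠ 0 := Complex.ofReal_ne_zero.mpr (ne_of_gt hq0)
    have hψ'0 : deriv ψ 0 = d2 / ((1 - t^2 : ℝ) : ℂ) := by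
      rw [eq_div_iff hqC, ← hq]; exact I1
    have hω20 : norm (ω2 0) = s / (1 - t^2) := by
      rw [← J1, hψ'0, norm_div, Complex.norm_real, Real.norm_eq_abs, _root_.abs_of_pos hq0, hs_def]
    have hX : deriv ω2 0 * ((1 - t^2 : ℝ) : ℂ) - d3 = c * d2^2 / ((1 - t^2 : ℝ) : ℂ) := by
      rw [hq, hψ'0, J2] at I2
      field_simp at I2 ⊢
      linear_combination I2
    have habsX : norm (deriv ω2 0 * ((1 - t^2 : ℝ) : ℂ)) ≤ (1 - (s/(1-t^2))^2) * (1-t^2) := by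
      rw [norm_mul, Complex.norm_real, Real.norm_eq_abs, _root_.abs_of_pos hq0]
      apply mul_le_mul_of_nonneg_right _ hq0.le
      rw [← hω20]; exact sp2
    have habsfr : norm (c * d2^2 / ((1 - t^2 : ℝ) : ℂ)) = t * s^2 / (1 - t^2) := by
      rw [norm_div, norm_mul, norm_pow, Complex.norm_real, Real.norm_eq_abs, _root_.abs_of_pos hq0,
        hc_def, Complex.norm_conj, ← ht_def, ← hs_def]
    have habs3 : w3 ≤ (1 - (s/(1-t^2))^2) * (1-t^2) + t * s^2 / (1 - t^2) := by
      have h1 : w3 = norm (deriv ω2 0 * ((1 - t^2 : ℝ) : ℂ)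
          - (deriv ω2 0 * ((1 - t^2 : ℝ) : ℂ) - d3)) := by
        rw [hw3_def]; congr 1; ring
      rw [h1]
      calc norm (deriv ω2 0 * ((1 - t^2 : ℝ) : ℂ)
              - (deriv ω2 0 * ((1 - t^2 : ℝ) : ℂ) - d3))
          ≤ norm (deriv ω2 0 * ((1 - t^2 : ℝ) : ℂ))
            + norm (deriv ω2 0 * ((1 - t^2 : ℝ) : ℂ) - d3) :=
            norm_sub_le _ _
        _ ≤ (1 - (s/(1-t^2))^2) * (1-t^2) + t * s^2 / (1 - t^2) := by
            rw [hX, habsfr]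
            linarith [habsX]
    have h1t : (0:ℝ) < 1 + t := by linarith
    have key : w3 ≤ (1 - t^2) - s^2/(1+t) := by
      have hident : (1 - (s/(1-t^2))^2) * (1-t^2) + t * s^2 / (1 - t^2)
          = (1 - t^2) - s^2/(1+t) := by
        field_simp
        ring
      linarith [habs3, hident.symm.le, hident.le]
    have hw_ineq : w3 * (1+t) ≤ (1 - t^2)*(1+t) - s^2 := by
      have h2 : ((1 - t^2) - s^2/(1+t)) * (1+t) = (1 - t^2)*(1+t) - s^2 := by
        field_simp
      calc w3 * (1+t) ≤ ((1 - t^2) - s^2/(1+t)) * (1+t) :=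
            mul_le_mul_of_nonneg_right key h1t.le
        _ = (1 - t^2)*(1+t) - s^2 := h2
    refine le_trans habsH ?_
    have := final_ineq t s w3 ht0 hs0 hw30 ht1 hsp1 hw_ineq
    linarith
end

section
/- If f(z) = z + a₂z² + a₃z³ + ⋯ is analytic on the unit disk and zf'(z)/f(z) is subordinate to q(z) = √(1+z²) + z, then |a₂a₄ - a₃²| ≤ 1/4, and this bound is sharp. -/
open Metric Filter Complex

noncomputable section HankelAux

lemma analyticAt_deriv' {f : ℂ → ℂ} {x : ℂ} (h : AnalyticAt ℂ f x) : AnalyticAt ℂ (deriv f) x := by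
  obtain ⟨s, hs, h2⟩ := h.exists_mem_nhds_analyticOnNhd
  exact h2.deriv x (mem_of_mem_nhds hs)

lemma ev_deriv_mul {f g : ℂ → ℂ} (hf : AnalyticAt ℂ f 0) (hg : AnalyticAt ℂ g 0) :
    deriv (fun z => f z * g z) =ᶠ[nhds 0] fun z => deriv f z * g z + f z * deriv g z := by
  filter_upwards [hf.eventually_analyticAt, hg.eventually_analyticAt] with z hfz hgz
  exact deriv_mul hfz.differentiableAt hgz.differentiableAt

lemma ev_deriv_add {f g : ℂ → ℂ} (hf : AnalyticAt ℂ f 0) (hg : AnalyticAt ℂ g 0) :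
    deriv (fun z => f z + g z) =ᶠ[nhds 0] fun z => deriv f z + deriv g z := by
  filter_upwards [hf.eventually_analyticAt, hg.eventually_analyticAt] with z hfz hgz
  exact deriv_add hfz.differentiableAt hgz.differentiableAt

lemma ev_deriv_id_mul {f : ℂ → ℂ} (hf : AnalyticAt ℂ f 0) :
    deriv (fun z => z * f z) =ᶠ[nhds 0] fun z => f z + z * deriv f z := by
  filter_upwards [hf.eventually_analyticAt] with z hfz
  rw [deriv_fun_mul differentiableAt_fun_id hfz.differentiableAt, deriv_id'', one_mul]

lemma ev_deriv_const_add {f : ℂ → ℂ} (c : ℂ) :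
    deriv (fun z => c + f z) =ᶠ[nhds 0] fun z => deriv f z := by
  filter_upwards with z
  exact deriv_const_add c

lemma dslope_mul_eq {u : ℂ → ℂ} (h0 : u 0 = 0) : ∀ z : ℂ, z * dslope u 0 z = u z := by
  intro z
  have := sub_smul_dslope u 0 z
  simpa [h0] using this

lemma analyticOnNhd_dslope {u : ℂ → ℂ} (hu : AnalyticOnNhd ℂ u (ball 0 1)) (h0 : u 0 = 0) :
    AnalyticOnNhd ℂ (dslope u 0) (ball 0 1) := by
  intro z hz
  rcases eq_or_ne z 0 with rfl | hne
  · obtain ⟨p, hp⟩ := hu 0 (by simp)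
    exact (hp.has_fpower_series_dslope_fslope).analyticAt
  · have h1 : AnalyticAt ℂ (fun w => (w - 0)⁻¹ • (u w - u 0)) z := by
      apply AnalyticAt.fun_smul
      · exact (AnalyticAt.sub (analyticAt_id) analyticAt_const).inv (by simpa using hne)
      · exact (hu z hz).sub analyticAt_const
    apply h1.congr
    filter_upwards [isOpen_ne.mem_nhds (x := z) (by simpa using hne)] with w hw
    rw [dslope_of_ne _ (by simpa using hw)]
    rfl

lemma schwarz_dslope {u : ℂ → ℂ} (hu : AnalyticOnNhd ℂ u (ball 0 1))
    (hb : ∀ z ∈ ball (0:ℂ) 1, ‖u z‖ ≤ 1) (h0 : u 0 = 0) :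
    ∀ z ∈ ball (0:ℂ) 1, ‖dslope u 0 z‖ ≤ 1 := by
  intro z hz
  have key : ∀ ε : ℝ, 0 < ε → ‖dslope u 0 z‖ ≤ 1 + ε := by
    intro ε hε
    have := Complex.norm_dslope_le_div_of_mapsTo_ball (c := 0) (R₁ := 1) (R₂ := 1 + ε)
      (hu.differentiableOn) ?_ hz
    · simpa using this
    · intro w hw
      simp only [mem_closedBall, h0, dist_eq_norm, sub_zero]
      exact (hb w hw).trans (by linarith : (1:ℝ) ≤ 1 + ε)
  exact le_of_forall_pos_le_add key

lemma const_of_abs_eq_one {u : ℂ → ℂ} (hu : AnalyticOnNhd ℂ u (ball 0 1))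
    (hb : ∀ z ∈ ball (0:ℂ) 1, ‖u z‖ ≤ 1) (h1 : ‖u 0‖ = 1) :
    ∀ z ∈ ball (0:ℂ) 1, u z = u 0 := by
  intro z hz
  have := Complex.eqOn_of_isPreconnected_of_isMaxOn_norm (convex_ball (0:ℂ) 1).isPreconnected
    isOpen_ball hu.differentiableOn (by simp : (0:ℂ) ∈ ball (0:ℂ) 1) ?_ hz
  · exact this
  · intro w hw
    simp only [Function.comp]
    rw [Set.mem_setOf_eq]
    calc ‖u w‖ ≤ 1 := hb w hw
    _ = ‖u 0‖ := h1.symm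

lemma mobius_norm_le {a b : ℂ} (ha : ‖a‖ ≤ 1) (hb : ‖b‖ ≤ 1) :
    ‖b - a‖ ≤ ‖1 - (starRingEnd ℂ) a * b‖ := by
  have h1 : Complex.normSq (b - a) ≤ Complex.normSq (1 - (starRingEnd ℂ) a * b) := by
    have ha' : Complex.normSq a ≤ 1 := by
      rw [Complex.normSq_eq_norm_sq]; nlinarith [norm_nonneg a, ha]
    have hb' : Complex.normSq b ≤ 1 := by
      rw [Complex.normSq_eq_norm_sq]; nlinarith [norm_nonneg b, hb]
    simp only [Complex.normSq_apply, Complex.sub_re, Complex.sub_im, Complex.mul_re,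
      Complex.mul_im, Complex.one_re, Complex.one_im, Complex.conj_re, Complex.conj_im] at *
    nlinarith [sq_nonneg (a.re*b.re + a.im*b.im), sq_nonneg (a.re*b.im - a.im*b.re)]
  have := Real.sqrt_le_sqrt h1
  simpa [Complex.norm_def] using this

lemma SP {u : ℂ → ℂ} (hu : AnalyticOnNhd ℂ u (ball 0 1))
    (hb : ∀ z ∈ ball (0:ℂ) 1, ‖u z‖ ≤ 1) :
    ‖deriv u 0‖ ≤ 1 - ‖u 0‖ ^ 2 := by
  have h0mem : (0:ℂ) ∈ ball (0:ℂ) 1 := by simp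
  have hle : ‖u 0‖ ≤ 1 := hb 0 h0mem
  rcases eq_or_lt_of_le hle with h1 | h1
  · -- constant case
    have hconst := const_of_abs_eq_one hu hb h1
    have hev : u =ᶠ[nhds 0] fun _ : ℂ => u 0 := by
      filter_upwards [isOpen_ball.mem_nhds h0mem] with z hz using hconst z hz
    have : deriv u 0 = deriv (fun _ : ℂ => u 0) 0 := hev.deriv_eq
    rw [this, deriv_const, norm_zero, h1]
    norm_num
  · set a := u 0 with ha
    set den : ℂ → ℂ := fun z => 1 - (starRingEnd ℂ) a * u z with hden_def
    have hden : ∀ z ∈ ball (0:ℂ) 1, den z ≠ 0 := by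
      intro z hz h
      have h2 : ‖(starRingEnd ℂ) a * u z‖ < 1 := by
        rw [norm_mul, RCLike.norm_conj]
        calc ‖a‖ * ‖u z‖ ≤ ‖a‖ * 1 := by
              apply mul_le_mul_of_nonneg_left (hb z hz) (norm_nonneg _)
        _ = ‖a‖ := mul_one _
        _ < 1 := h1
      rw [sub_eq_zero] at h
      rw [← h] at h2
      simp at h2
    set w : ℂ → ℂ := fun z => (u z - a) / den z with hw_def
    have hwa : AnalyticOnNhd ℂ w (ball 0 1) := by
      intro z hz
      exact ((hu z hz).sub analyticAt_const).div
        (analyticAt_const.sub (analyticAt_const.mul (hu z hz))) (hden z hz)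
    have hw0 : w 0 = 0 := by simp [hw_def, ← ha]
    have hwb : ∀ z ∈ ball (0:ℂ) 1, ‖w z‖ ≤ 1 := by
      intro z hz
      rw [hw_def]
      simp only [norm_div]
      apply div_le_one_of_le₀ (mobius_norm_le hle (hb z hz)) (norm_nonneg _)
    have hds := schwarz_dslope hwa hwb hw0 0 h0mem
    rw [dslope_same] at hds
    -- compute deriv w 0
    have hu' : HasDerivAt u (deriv u 0) 0 := (hu 0 h0mem).differentiableAt.hasDerivAt
    have hden' : HasDerivAt den (-((starRingEnd ℂ) a * deriv u 0)) 0 := by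
      simpa using ((hu'.const_mul ((starRingEnd ℂ) a)).const_sub 1)
    have hw' : HasDerivAt w ((deriv u 0 * den 0 - (u 0 - a) * (-((starRingEnd ℂ) a * deriv u 0)))
        / den 0 ^ 2) 0 := (hu'.sub_const a).div hden' (hden 0 h0mem)
    have hsimp : (deriv u 0 * den 0 - (u 0 - a) * (-((starRingEnd ℂ) a * deriv u 0)))
        / den 0 ^ 2 = deriv u 0 / den 0 := by
      rw [← ha]
      field_simp [hden 0 h0mem]
      ring
    rw [hsimp] at hw'
    have hdw : deriv w 0 = deriv u 0 / den 0 := hw'.deriv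
    rw [hdw] at hds
    have hden0 : den 0 = ((1 - Complex.normSq a : ℝ) : ℂ) := by
      simp [hden_def, ← ha, ← Complex.normSq_eq_conj_mul_self]
    have hns : Complex.normSq a = ‖a‖ ^ 2 := by
      rw [Complex.normSq_eq_norm_sq]
    have hpos : (0:ℝ) < 1 - Complex.normSq a := by
      rw [hns]; nlinarith [norm_nonneg a]
    rw [hden0, norm_div] at hds
    have : ‖((1 - Complex.normSq a : ℝ) : ℂ)‖ = 1 - Complex.normSq a := by
      rw [Complex.norm_real, Real.norm_eq_abs, abs_of_pos hpos]
    rw [this, div_le_one hpos] at hds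
    rw [← hns]
    exact hds

lemma ev_deriv2_mul {p q : ℂ → ℂ} (hp : AnalyticAt ℂ p 0) (hq : AnalyticAt ℂ q 0) :
    deriv (deriv (fun z => p z * q z)) =ᶠ[nhds 0]
      fun z => (deriv (deriv p) z * q z + deriv p z * deriv q z)
        + (deriv p z * deriv q z + p z * deriv (deriv q) z) :=
  (ev_deriv_mul hp hq).deriv.trans <|
    (ev_deriv_add ((analyticAt_deriv' hp).mul hq) (hp.mul (analyticAt_deriv' hq))).trans <|
      (ev_deriv_mul (analyticAt_deriv' hp) hq).add (ev_deriv_mul hp (analyticAt_deriv' hq))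

lemma ev_deriv3_mul {p q : ℂ → ℂ} (hp : AnalyticAt ℂ p 0) (hq : AnalyticAt ℂ q 0) :
    deriv (deriv (deriv (fun z => p z * q z))) =ᶠ[nhds 0]
      fun z => ((deriv (deriv (deriv p)) z * q z + deriv (deriv p) z * deriv q z)
          + (deriv (deriv p) z * deriv q z + deriv p z * deriv (deriv q) z))
        + ((deriv (deriv p) z * deriv q z + deriv p z * deriv (deriv q) z)
          + (deriv p z * deriv (deriv q) z + p z * deriv (deriv (deriv q)) z)) := by
  have h1 := (ev_deriv2_mul hp hq).deriv
  refine h1.trans ?_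
  have hp1 := analyticAt_deriv' hp
  have hp2 := analyticAt_deriv' hp1
  have hq1 := analyticAt_deriv' hq
  have hq2 := analyticAt_deriv' hq1
  refine (ev_deriv_add ((hp2.mul hq).add (hp1.mul hq1)) ((hp1.mul hq1).add (hp.mul hq2))).trans ?_
  exact ((ev_deriv_add (hp2.mul hq) (hp1.mul hq1)).trans
      ((ev_deriv_mul hp2 hq).add (ev_deriv_mul hp1 hq1))).add
    ((ev_deriv_add (hp1.mul hq1) (hp.mul hq2)).trans
      ((ev_deriv_mul hp1 hq1).add (ev_deriv_mul hp hq2)))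

lemma ev_deriv4_mul {p q : ℂ → ℂ} (hp : AnalyticAt ℂ p 0) (hq : AnalyticAt ℂ q 0) :
    deriv (deriv (deriv (deriv (fun z => p z * q z)))) =ᶠ[nhds 0]
      fun z => (((deriv (deriv (deriv (deriv p))) z * q z + deriv (deriv (deriv p)) z * deriv q z)
          + (deriv (deriv (deriv p)) z * deriv q z + deriv (deriv p) z * deriv (deriv q) z))
        + ((deriv (deriv (deriv p)) z * deriv q z + deriv (deriv p) z * deriv (deriv q) z)
          + (deriv (deriv p) z * deriv (deriv q) z + deriv p z * deriv (deriv (deriv q)) z)))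
        + (((deriv (deriv (deriv p)) z * deriv q z + deriv (deriv p) z * deriv (deriv q) z)
          + (deriv (deriv p) z * deriv (deriv q) z + deriv p z * deriv (deriv (deriv q)) z))
        + ((deriv (deriv p) z * deriv (deriv q) z + deriv p z * deriv (deriv (deriv q)) z)
          + (deriv p z * deriv (deriv (deriv q)) z + p z * deriv (deriv (deriv (deriv q))) z))) := by
  have h1 := (ev_deriv3_mul hp hq).deriv
  refine h1.trans ?_
  have hp1 := analyticAt_deriv' hp
  have hp2 := analyticAt_deriv' hp1
  have hp3 := analyticAt_deriv' hp2
  have hq1 := analyticAt_deriv' hq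
  have hq2 := analyticAt_deriv' hq1
  have hq3 := analyticAt_deriv' hq2
  refine (ev_deriv_add (((hp3.mul hq).add (hp2.mul hq1)).add ((hp2.mul hq1).add (hp1.mul hq2)))
    (((hp2.mul hq1).add (hp1.mul hq2)).add ((hp1.mul hq2).add (hp.mul hq3)))).trans ?_
  refine EventuallyEq.add ?_ ?_
  · refine (ev_deriv_add ((hp3.mul hq).add (hp2.mul hq1)) ((hp2.mul hq1).add (hp1.mul hq2))).trans ?_
    exact ((ev_deriv_add (hp3.mul hq) (hp2.mul hq1)).trans
        ((ev_deriv_mul hp3 hq).add (ev_deriv_mul hp2 hq1))).add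
      ((ev_deriv_add (hp2.mul hq1) (hp1.mul hq2)).trans
        ((ev_deriv_mul hp2 hq1).add (ev_deriv_mul hp1 hq2)))
  · refine (ev_deriv_add ((hp2.mul hq1).add (hp1.mul hq2)) ((hp1.mul hq2).add (hp.mul hq3))).trans ?_
    exact ((ev_deriv_add (hp2.mul hq1) (hp1.mul hq2)).trans
        ((ev_deriv_mul hp2 hq1).add (ev_deriv_mul hp1 hq2))).add
      ((ev_deriv_add (hp1.mul hq2) (hp.mul hq3)).trans
        ((ev_deriv_mul hp1 hq2).add (ev_deriv_mul hp hq3)))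

-- id-mul towers

lemma ev_idmul2 {r : ℂ → ℂ} (hr : AnalyticAt ℂ r 0) :
    deriv (deriv (fun z => z * r z)) =ᶠ[nhds 0]
      fun z => deriv r z + (deriv r z + z * deriv (deriv r) z) :=
  (ev_deriv_id_mul hr).deriv.trans <|
    (ev_deriv_add hr (analyticAt_id.mul (analyticAt_deriv' hr))).trans <|
      EventuallyEq.add (EventuallyEq.refl _ _) (ev_deriv_id_mul (analyticAt_deriv' hr))

lemma ev_idmul3 {r : ℂ → ℂ} (hr : AnalyticAt ℂ r 0) :
    deriv (deriv (deriv (fun z => z * r z))) =ᶠ[nhds 0]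
      fun z => deriv (deriv r) z + (deriv (deriv r) z
        + (deriv (deriv r) z + z * deriv (deriv (deriv r)) z)) := by
  have hr1 := analyticAt_deriv' hr
  have hr2 := analyticAt_deriv' hr1
  refine (ev_idmul2 hr).deriv.trans ?_
  refine (ev_deriv_add hr1 (hr1.add (analyticAt_id.mul hr2))).trans ?_
  refine EventuallyEq.add (EventuallyEq.refl _ _) ?_
  refine (ev_deriv_add hr1 (analyticAt_id.mul hr2)).trans ?_
  exact EventuallyEq.add (EventuallyEq.refl _ _) (ev_deriv_id_mul hr2)

lemma ev_idmul4 {r : ℂ → ℂ} (hr : AnalyticAt ℂ r 0) :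
    deriv (deriv (deriv (deriv (fun z => z * r z)))) =ᶠ[nhds 0]
      fun z => deriv (deriv (deriv r)) z + (deriv (deriv (deriv r)) z
        + (deriv (deriv (deriv r)) z + (deriv (deriv (deriv r)) z
          + z * deriv (deriv (deriv (deriv r))) z))) := by
  have hr1 := analyticAt_deriv' hr
  have hr2 := analyticAt_deriv' hr1
  have hr3 := analyticAt_deriv' hr2
  refine (ev_idmul3 hr).deriv.trans ?_
  refine (ev_deriv_add hr2 (hr2.add (hr2.add (analyticAt_id.mul hr3)))).trans ?_
  refine EventuallyEq.add (EventuallyEq.refl _ _) ?_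
  refine (ev_deriv_add hr2 (hr2.add (analyticAt_id.mul hr3))).trans ?_
  refine EventuallyEq.add (EventuallyEq.refl _ _) ?_
  refine (ev_deriv_add hr2 (analyticAt_id.mul hr3)).trans ?_
  exact EventuallyEq.add (EventuallyEq.refl _ _) (ev_deriv_id_mul hr3)

lemma coeffs {f g : ℂ → ℂ} (hf : AnalyticAt ℂ f 0) (hg : AnalyticAt ℂ g 0)
    (hE : (fun z => z * deriv f z) =ᶠ[nhds 0] fun z => f z * g z)
    (hf0 : f 0 = 0) (hf1 : deriv f 0 = 1) (hg0 : g 0 = 1) :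
    deriv (deriv f) 0 = 2 * deriv g 0 ∧
    2 * deriv (deriv (deriv f)) 0 = 6 * (deriv g 0)^2 + 3 * deriv (deriv g) 0 ∧
    3 * deriv (deriv (deriv (deriv f))) 0 = 12 * (deriv g 0)^3
      + 18 * deriv g 0 * deriv (deriv g) 0 + 4 * deriv (deriv (deriv g)) 0 := by
  have hf1a := analyticAt_deriv' hf
  have E2 := ((ev_idmul2 hf1a).symm.trans (hE.deriv.deriv)).trans (ev_deriv2_mul hf hg)
  have E3 := ((ev_idmul3 hf1a).symm.trans (hE.deriv.deriv.deriv)).trans (ev_deriv3_mul hf hg)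
  have E4 := ((ev_idmul4 hf1a).symm.trans (hE.deriv.deriv.deriv.deriv)).trans (ev_deriv4_mul hf hg)
  have e2 := E2.eq_of_nhds
  have e3 := E3.eq_of_nhds
  have e4 := E4.eq_of_nhds
  simp only [hf0, hf1, hg0, zero_mul, mul_zero, mul_one, one_mul, add_zero, zero_add] at e2 e3 e4
  have h2 : deriv (deriv f) 0 = 2 * deriv g 0 := by linear_combination e2
  have h3 : 2 * deriv (deriv (deriv f)) 0 = 6 * (deriv g 0)^2 + 3 * deriv (deriv g) 0 := by
    linear_combination e3 + 3 * deriv g 0 * e2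
  exact ⟨h2, h3, by linear_combination e4 + 2 * deriv g 0 * h3 + 6 * deriv (deriv g) 0 * h2⟩

lemma gvals {ω : ℂ → ℂ} (hω : AnalyticAt ℂ ω 0) (hω0 : ω 0 = 0) :
    AnalyticAt ℂ (fun z => (1 + ω z ^ 2) ^ ((1:ℂ)/2) + ω z) 0 ∧
    (fun z => (1 + ω z ^ 2) ^ ((1:ℂ)/2) + ω z) 0 = 1 ∧
    deriv (fun z => (1 + ω z ^ 2) ^ ((1:ℂ)/2) + ω z) 0 = deriv ω 0 ∧
    deriv (deriv (fun z => (1 + ω z ^ 2) ^ ((1:ℂ)/2) + ω z)) 0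
      = (deriv ω 0)^2 + deriv (deriv ω) 0 ∧
    deriv (deriv (deriv (fun z => (1 + ω z ^ 2) ^ ((1:ℂ)/2) + ω z))) 0
      = 3 * deriv ω 0 * deriv (deriv ω) 0 + deriv (deriv (deriv ω)) 0 := by
  set h : ℂ → ℂ := fun z => (1 + ω z ^ 2) ^ ((1:ℂ)/2) with hh_def
  have hmem : (1 : ℂ) + ω 0 ^ 2 ∈ Complex.slitPlane := by
    simp [hω0, Complex.mem_slitPlane_iff]
  have hh : AnalyticAt ℂ h 0 := (analyticAt_const.add (hω.pow 2)).cpow analyticAt_const hmem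
  have h0 : h 0 = 1 := by simp [hh_def, hω0]
  have hsmall : ∀ᶠ z in nhds 0, ‖ω z‖ < 1 := by
    have ht : Filter.Tendsto ω (nhds 0) (nhds 0) := by
      simpa [hω0] using hω.continuousAt.tendsto
    have := ht (Metric.ball_mem_nhds (0:ℂ) one_pos)
    filter_upwards [this] with z hz
    simpa [Complex.dist_eq] using hz
  have EH0 : (fun z => h z * h z) =ᶠ[nhds 0] fun z => 1 + ω z * ω z := by
    filter_upwards [hsmall] with z hz
    have hne : (1 : ℂ) + ω z ^ 2 ≠ 0 := by
      intro hc
      have h1 : ((1 : ℂ) + ω z ^ 2).re = 0 := by rw [hc]; simp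
      have h2 : |(ω z ^ 2).re| ≤ ‖ω z ^ 2‖ := Complex.abs_re_le_norm _
      have h3 : ‖ω z ^ 2‖ < 1 := by
        rw [norm_pow]; nlinarith [norm_nonneg (ω z)]
      simp only [Complex.add_re, Complex.one_re] at h1
      rw [abs_le] at h2
      linarith
    calc h z * h z = (1 + ω z ^ 2) ^ ((1:ℂ)/2 + 1/2) := (Complex.cpow_add _ _ hne).symm
    _ = (1 + ω z ^ 2) ^ (1:ℂ) := by norm_num
    _ = 1 + ω z * ω z := by rw [Complex.cpow_one]; ring
  have hDN : deriv (fun z => (1:ℂ) + ω z * ω z) = deriv (fun z => ω z * ω z) :=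
    funext fun z => deriv_const_add 1
  have E1 : deriv (fun z => h z * h z) =ᶠ[nhds 0] deriv (fun z => ω z * ω z) :=
    EH0.deriv.trans (Filter.EventuallyEq.of_eq hDN)
  have EH1 := (ev_deriv_mul hh hh).symm.trans (E1.trans (ev_deriv_mul hω hω))
  have EH2 := (ev_deriv2_mul hh hh).symm.trans (E1.deriv.trans (ev_deriv2_mul hω hω))
  have EH3 := (ev_deriv3_mul hh hh).symm.trans (E1.deriv.deriv.trans (ev_deriv3_mul hω hω))
  have e1 := EH1.eq_of_nhds
  have e2 := EH2.eq_of_nhds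
  have e3 := EH3.eq_of_nhds
  simp only [h0, hω0, zero_mul, mul_zero, mul_one, one_mul, add_zero, zero_add] at e1 e2 e3
  have hd1 : deriv h 0 = 0 := by linear_combination e1 / 2
  have hd2 : deriv (deriv h) 0 = (deriv ω 0)^2 := by
    rw [hd1] at e2; linear_combination e2 / 2
  have hd3 : deriv (deriv (deriv h)) 0 = 3 * deriv ω 0 * deriv (deriv ω) 0 := by
    rw [hd1, hd2] at e3; linear_combination e3 / 2
  have hω1 := analyticAt_deriv' hω
  have hω2 := analyticAt_deriv' hω1
  have hh1 := analyticAt_deriv' hh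
  have hh2 := analyticAt_deriv' hh1
  have G1 : deriv (fun z => h z + ω z) =ᶠ[nhds 0] fun z => deriv h z + deriv ω z :=
    ev_deriv_add hh hω
  have G2 : deriv (deriv (fun z => h z + ω z)) =ᶠ[nhds 0]
      fun z => deriv (deriv h) z + deriv (deriv ω) z :=
    G1.deriv.trans (ev_deriv_add hh1 hω1)
  have G3 : deriv (deriv (deriv (fun z => h z + ω z))) =ᶠ[nhds 0]
      fun z => deriv (deriv (deriv h)) z + deriv (deriv (deriv ω)) z :=
    G2.deriv.trans (ev_deriv_add hh2 hω2)
  refine ⟨hh.add hω, by simp [h0, hω0], ?_, ?_, ?_⟩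
  · have := G1.eq_of_nhds; rw [this, hd1, zero_add]
  · have := G2.eq_of_nhds; rw [this, hd2]
  · have := G3.eq_of_nhds; rw [this, hd3]

lemma ev_deriv_const_mul {v : ℂ → ℂ} (b : ℂ) (hv : AnalyticAt ℂ v 0) :
    deriv (fun z => b * v z) =ᶠ[nhds 0] fun z => b * deriv v z := by
  filter_upwards [hv.eventually_analyticAt] with z hz
  exact deriv_const_mul b hz.differentiableAt

lemma deriv_vals_of_dslope {u v : ℂ → ℂ} (hv : AnalyticAt ℂ v 0) (huv : ∀ z, u z = z * v z) :
    deriv u 0 = v 0 ∧ deriv (deriv u) 0 = 2 * deriv v 0 ∧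
    deriv (deriv (deriv u)) 0 = 3 * deriv (deriv v) 0 := by
  have hu_eq : u = fun z => z * v z := funext huv
  subst hu_eq
  have e1 := (ev_deriv_id_mul hv).eq_of_nhds
  have e2 := (ev_idmul2 hv).eq_of_nhds
  have e3 := (ev_idmul3 hv).eq_of_nhds
  simp only [zero_mul, add_zero] at e1 e2 e3
  exact ⟨e1, by rw [e2]; ring, by rw [e3]; ring⟩

lemma schwarz_coeffs {ω : ℂ → ℂ} {c1 c2 c3 : ℂ} (hω : AnalyticOnNhd ℂ ω (ball 0 1))
    (hω0 : ω 0 = 0) (hb : ∀ z ∈ ball (0:ℂ) 1, ‖ω z‖ ≤ 1)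
    (hc1 : deriv ω 0 = c1) (hc2 : deriv (deriv ω) 0 = 2 * c2)
    (hc3 : deriv (deriv (deriv ω)) 0 = 6 * c3) :
    ‖c1‖ ≤ 1 ∧
    ‖c2‖ ≤ 1 - (‖c1‖)^2 ∧
    ‖c3 * ((1 - ‖c1‖^2 : ℝ) : ℂ) + (starRingEnd ℂ) c1 * c2^2‖
      ≤ (1 - (‖c1‖)^2)^2 - (‖c2‖)^2 ∧
    (‖c1‖ = 1 → c2 = 0 ∧ c3 = 0) := by
  have h0mem : (0:ℂ) ∈ ball (0:ℂ) 1 := by simp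
  set v : ℂ → ℂ := dslope ω 0 with hv_def
  have hva : AnalyticOnNhd ℂ v (ball 0 1) := analyticOnNhd_dslope hω hω0
  have hvb : ∀ z ∈ ball (0:ℂ) 1, ‖v z‖ ≤ 1 := schwarz_dslope hω hb hω0
  have huv : ∀ z, ω z = z * v z := fun z => (dslope_mul_eq hω0 z).symm
  obtain ⟨d1, d2, d3⟩ := deriv_vals_of_dslope (hva 0 h0mem) huv
  have hv0 : v 0 = c1 := by rw [← d1, hc1]
  have hdv0 : deriv v 0 = c2 := mul_left_cancel₀ two_ne_zero (d2.symm.trans hc2)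
  have hddv0 : deriv (deriv v) 0 = 2 * c3 := by
    have h3 := d3.symm.trans hc3
    have h4 : (3:ℂ) * deriv (deriv v) 0 = 3 * (2 * c3) := by linear_combination h3
    exact mul_left_cancel₀ three_ne_zero h4
  have B1 : ‖c1‖ ≤ 1 := by
    rw [← hv0]; simpa using hvb 0 h0mem
  rcases lt_or_eq_of_le B1 with hx | hx
  · -- nondegenerate case
    set b : ℂ := -((starRingEnd ℂ) c1) with hb_def
    set den : ℂ → ℂ := fun z => 1 + b * v z with hden_def
    have hden_ne : ∀ z ∈ ball (0:ℂ) 1, den z ≠ 0 := by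
      intro z hz h
      have h2 : ‖b * v z‖ < 1 := by
        rw [norm_mul, hb_def, norm_neg, RCLike.norm_conj]
        calc ‖c1‖ * ‖v z‖ ≤ ‖c1‖ * 1 := by
              exact mul_le_mul_of_nonneg_left (hvb z hz) (norm_nonneg _)
        _ = ‖c1‖ := mul_one _
        _ < 1 := by simpa using hx
      have h3 : b * v z = -1 := by linear_combination h
      rw [h3] at h2
      simp at h2
    have hdena : AnalyticOnNhd ℂ den (ball 0 1) := by
      intro z hz
      exact analyticAt_const.add (analyticAt_const.mul (hva z hz))
    set w : ℂ → ℂ := fun z => (v z - c1) / den z with hw_def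
    have hwa : AnalyticOnNhd ℂ w (ball 0 1) := by
      intro z hz
      exact ((hva z hz).sub analyticAt_const).div (hdena z hz) (hden_ne z hz)
    have hw0 : w 0 = 0 := by simp [hw_def, hv0]
    have hwb : ∀ z ∈ ball (0:ℂ) 1, ‖w z‖ ≤ 1 := by
      intro z hz
      rw [hw_def]
      simp only [norm_div]
      apply div_le_one_of_le₀ ?_ (norm_nonneg _)
      have := mobius_norm_le (b := v z) (a := c1)
        (by simpa using B1) (hvb z hz)
      calc ‖v z - c1‖ ≤ ‖1 - (starRingEnd ℂ) c1 * v z‖ := this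
      _ = ‖den z‖ := by rw [hden_def, hb_def]; ring_nf
    set t : ℂ → ℂ := dslope w 0 with ht_def
    have hta : AnalyticOnNhd ℂ t (ball 0 1) := analyticOnNhd_dslope hwa hw0
    have htb : ∀ z ∈ ball (0:ℂ) 1, ‖t z‖ ≤ 1 := schwarz_dslope hwa hwb hw0
    have hwt : ∀ z, w z = z * t z := fun z => (dslope_mul_eq hw0 z).symm
    obtain ⟨dt1, dt2, _⟩ := deriv_vals_of_dslope (hta 0 h0mem) hwt
    -- identity w * den = v - c1 near 0
    have EW0 : (fun z => w z * den z) =ᶠ[nhds 0] fun z => v z - c1 := by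
      filter_upwards [isOpen_ball.mem_nhds h0mem] with z hz
      rw [hw_def]
      field_simp [hden_ne z hz]
    have hw0a : AnalyticAt ℂ w 0 := hwa 0 h0mem
    have hden0a : AnalyticAt ℂ den 0 := hdena 0 h0mem
    have hv0a : AnalyticAt ℂ v 0 := hva 0 h0mem
    have hDsub : deriv (fun z => v z - c1) = deriv v := funext fun z => deriv_sub_const c1
    have ev_d1 : deriv den =ᶠ[nhds 0] fun z => b * deriv v z := by
      have h1 : deriv den = deriv (fun z => b * v z) :=
        funext fun x => by rw [hden_def]; exact deriv_const_add 1
      rw [h1]; exact ev_deriv_const_mul b hv0a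
    have ev_d2 : deriv (deriv den) =ᶠ[nhds 0] fun z => b * deriv (deriv v) z :=
      ev_d1.deriv.trans (ev_deriv_const_mul b (analyticAt_deriv' hv0a))
    have EW1 := (ev_deriv_mul hw0a hden0a).symm.trans
      (EW0.deriv.trans (Filter.EventuallyEq.of_eq hDsub))
    have EW2 := (ev_deriv2_mul hw0a hden0a).symm.trans
      (EW0.deriv.deriv.trans (Filter.EventuallyEq.of_eq (congrArg deriv hDsub)))
    have e1 := EW1.eq_of_nhds
    have e2 := EW2.eq_of_nhds
    have hden0v : den 0 = 1 - (starRingEnd ℂ) c1 * c1 := by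
      show 1 + b * v 0 = _
      rw [hv0, hb_def]; ring
    have hdd1 : deriv den 0 = b * c2 := by rw [ev_d1.eq_of_nhds, hdv0]
    have hdd2 : deriv (deriv den) 0 = b * (2 * c3) := by rw [ev_d2.eq_of_nhds, hddv0]
    simp only [hw0, hv0, hdv0, hddv0, hden0v, hdd1, hdd2, zero_mul, mul_zero,
      add_zero, zero_add] at e1 e2
    -- e1 : deriv w 0 * (1 - conj c1 * c1) = c2
    -- from dt1 : deriv w 0 = t 0
    set S : ℂ := 1 - (starRingEnd ℂ) c1 * c1 with hS_def
    have hrS : S = ((1 - (‖c1‖)^2 : ℝ) : ℂ) := by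
      rw [hS_def]
      have : (starRingEnd ℂ) c1 * c1 = (Complex.normSq c1 : ℂ) := by
        rw [← Complex.normSq_eq_conj_mul_self]
      rw [this, Complex.normSq_eq_norm_sq]
      push_cast
      ring
    have hrpos : (0:ℝ) < 1 - (‖c1‖)^2 := by nlinarith [norm_nonneg c1]
    have habsS : ‖S‖ = 1 - (‖c1‖)^2 := by
      rw [hrS, Complex.norm_real, Real.norm_eq_abs, abs_of_pos hrpos]
    have ht0 : t 0 * S = c2 := by rw [← dt1]; linear_combination e1
    have habs_t0 : ‖t 0‖ ≤ 1 := by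
      simpa using htb 0 h0mem
    have B2 : ‖c2‖ ≤ 1 - (‖c1‖)^2 := by
      rw [← ht0, norm_mul, habsS]
      nlinarith [norm_nonneg (t 0), hrpos]
    refine ⟨B1, B2, ?_, by intro h; exact absurd h (ne_of_lt hx)⟩
    -- B3
    have hSP := SP hta htb
    -- e2 : deriv (deriv w) 0 * S + deriv w 0 * (b*c2) + (deriv w 0 * (b*c2) + 0) = 2*c3
    have hw2 : deriv (deriv w) 0 * S = 2*c3 + 2 * (starRingEnd ℂ) c1 * c2 * t 0 := by
      rw [dt1, hb_def] at e2
      linear_combination e2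
    have hdt0 : deriv t 0 * S * S = c3 * S + (starRingEnd ℂ) c1 * c2^2 := by
      have : deriv (deriv w) 0 = 2 * deriv t 0 := dt2
      rw [this] at hw2
      -- 2 Dt0 * S = 2c3 + 2 conj c1 c2 t0 ; multiply by S and use t0*S = c2
      have h5 : (2 * deriv t 0 * S) * S = (2*c3 + 2 * (starRingEnd ℂ) c1 * c2 * t 0) * S := by
        rw [hw2]
      have h6 : t 0 * S = c2 := ht0
      -- expand
      have h7 : 2 * (deriv t 0 * S * S) = 2 * (c3 * S + (starRingEnd ℂ) c1 * c2^2) := by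
        linear_combination h5 + 2 * (starRingEnd ℂ) c1 * c2 * h6
      exact mul_left_cancel₀ two_ne_zero h7
    have key : ‖c3 * ((1 - ‖c1‖^2 : ℝ) : ℂ)
        + (starRingEnd ℂ) c1 * c2^2‖ = ‖deriv t 0‖ * (1 - (‖c1‖)^2)^2 := by
      rw [← hrS, ← hdt0, norm_mul, norm_mul, habsS]
      ring
    rw [key]
    have hSP' : ‖deriv t 0‖ ≤ 1 - (‖t 0‖)^2 := by
      simpa using hSP
    have habs_c2 : ‖t 0‖ * (1 - (‖c1‖)^2) = ‖c2‖ := by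
      rw [← ht0, norm_mul, habsS]
    nlinarith [norm_nonneg (t 0), norm_nonneg (deriv t 0), hrpos,
      sq_nonneg (‖t 0‖), habs_c2]
  · -- degenerate case |c1| = 1
    have h1 : ‖v 0‖ = 1 := by simp [hv0, ← hx]
    have hconst := const_of_abs_eq_one hva hvb h1
    have hev : v =ᶠ[nhds 0] fun _ : ℂ => v 0 := by
      filter_upwards [isOpen_ball.mem_nhds h0mem] with z hz using hconst z hz
    have hd : deriv v =ᶠ[nhds 0] fun _ : ℂ => 0 := by
      refine hev.deriv.trans (Filter.EventuallyEq.of_eq ?_)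
      funext z; exact deriv_const z (v 0)
    have hc2z : c2 = 0 := by rw [← hdv0, hd.eq_of_nhds]
    have hc3z : c3 = 0 := by
      have h2 : deriv (deriv v) 0 = 0 := by
        have := hd.deriv.eq_of_nhds
        simpa using this
      have := hddv0.symm.trans h2
      have h4 : (2:ℂ) * c3 = 0 := by rw [← hddv0, h2]
      simpa using h4
    refine ⟨B1, ?_, ?_, fun _ => ⟨hc2z, hc3z⟩⟩
    · rw [hc2z, hx]; norm_num
    · rw [hc2z, hc3z, hx]; norm_num

lemma real_ineq (x y A : ℝ) (hx0 : 0 ≤ x) (hx1 : x < 1) (hy0 : 0 ≤ y) (hy : y ≤ 1 - x^2)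
    (hA : A * (1 - x^2) ≤ x * ((1-x^2)^2 - y^2) + x^2 * y^2) :
    7*x^4 + 4*x^2*y + 16*A + 12*y^2 ≤ 12 := by
  have hu : 0 < 1 - x^2 := by nlinarith
  nlinarith [mul_nonneg hy0 (sub_nonneg.2 hy), mul_nonneg hx0 hy0, sq_nonneg (1-x^2-y),
    mul_nonneg (mul_nonneg hx0 hx0) hy0, sq_nonneg x, sq_nonneg y, sq_nonneg (x*y),
    mul_nonneg (mul_nonneg hx0 hy0) hy0, mul_pos hu hu, sq_nonneg (x+1), sq_nonneg (x-1),
    mul_nonneg (mul_nonneg hu.le hy0) hy0, mul_nonneg (mul_nonneg hu.le hx0) hy0]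

lemma part1 (f ω : ℂ → ℂ) (a : ℕ → ℂ)
    (hf : AnalyticOn ℂ f (ball 0 1)) (hf0 : f 0 = 0) (hf1 : deriv f 0 = 1)
    (hω : AnalyticOn ℂ ω (ball 0 1)) (hω0 : ω 0 = 0)
    (hωlt : ∀ z ∈ ball (0:ℂ) 1, ‖ω z‖ < 1)
    (heq : ∀ z ∈ ball (0:ℂ) 1, z ≠ 0 →
      z * deriv f z / f z = (1 + ω z ^ 2) ^ ((1 : ℂ) / 2) + ω z)
    (ha : ∀ n, a n = iteratedDeriv n f 0 / n.factorial) :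
    ‖a 2 * a 4 - a 3 ^ 2‖ ≤ 1 / 4 := by
  have h0mem : (0:ℂ) ∈ ball (0:ℂ) 1 := by simp
  have hfN : AnalyticOnNhd ℂ f (ball 0 1) := (isOpen_ball.analyticOn_iff_analyticOnNhd).1 hf
  have hωN : AnalyticOnNhd ℂ ω (ball 0 1) := (isOpen_ball.analyticOn_iff_analyticOnNhd).1 hω
  have hfa : AnalyticAt ℂ f 0 := hfN 0 h0mem
  have hωa : AnalyticAt ℂ ω 0 := hωN 0 h0mem
  -- the functional equation as germ at 0
  have hFne : ∀ᶠ z in nhds 0, dslope f 0 z ≠ 0 := by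
    have hFa : AnalyticAt ℂ (dslope f 0) 0 := analyticOnNhd_dslope hfN hf0 0 h0mem
    apply hFa.continuousAt.eventually_ne
    rw [dslope_same, hf1]
    exact one_ne_zero
  have E0 : (fun z => z * deriv f z) =ᶠ[nhds 0]
      fun z => f z * ((1 + ω z ^ 2) ^ ((1:ℂ)/2) + ω z) := by
    filter_upwards [isOpen_ball.mem_nhds h0mem, hFne] with z hz hFz
    rcases eq_or_ne z 0 with rfl | hne
    · simp [hf0]
    · have hfz : f z ≠ 0 := by
        rw [← dslope_mul_eq hf0 z]
        exact mul_ne_zero hne hFz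
      have := heq z hz hne
      field_simp at this
      rw [this]
  obtain ⟨hga, hg0, hg1, hg2, hg3⟩ := gvals hωa hω0
  obtain ⟨q2, q3, q4⟩ := coeffs hfa hga E0 hf0 hf1 hg0
  set c1 : ℂ := deriv ω 0 with hc1_def
  set c2 : ℂ := deriv (deriv ω) 0 / 2 with hc2_def
  set c3 : ℂ := deriv (deriv (deriv ω)) 0 / 6 with hc3_def
  have hc2 : deriv (deriv ω) 0 = 2 * c2 := by rw [hc2_def]; ring
  have hc3 : deriv (deriv (deriv ω)) 0 = 6 * c3 := by rw [hc3_def]; ring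
  obtain ⟨B1, B2, B3, B4⟩ := schwarz_coeffs hωN hω0
    (fun z hz => by simpa using (hωlt z hz).le) rfl hc2 hc3
  -- explicit derivative values
  have hF2 : deriv (deriv f) 0 = 2 * c1 := by rw [q2, hg1]
  have hF3 : deriv (deriv (deriv f)) 0 = (9*c1^2 + 6*c2)/2 := by
    rw [hg1, hg2, hc2] at q3
    linear_combination q3 / 2
  have hF4 : deriv (deriv (deriv (deriv f))) 0 = 10*c1^3 + 20*c1*c2 + 8*c3 := by
    rw [hg1, hg2, hg3, hc2, hc3] at q4
    linear_combination q4 / 3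
  have hit2 : iteratedDeriv 2 f 0 = deriv (deriv f) 0 := by
    simp [iteratedDeriv_succ', iteratedDeriv_one]
  have hit3 : iteratedDeriv 3 f 0 = deriv (deriv (deriv f)) 0 := by
    simp [iteratedDeriv_succ', iteratedDeriv_one]
  have hit4 : iteratedDeriv 4 f 0 = deriv (deriv (deriv (deriv f))) 0 := by
    simp [iteratedDeriv_succ', iteratedDeriv_one]
  have key : a 2 * a 4 - a 3 ^ 2
      = (-7*c1^4 + 4*c1^2*c2 + 16*c1*c3 - 12*c2^2)/48 := by
    rw [ha 2, ha 3, ha 4, hit2, hit3, hit4, hF2, hF3, hF4]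
    norm_num [Nat.factorial]
    ring
  -- now the modulus estimate
  set x : ℝ := ‖c1‖ with hx_def
  set y : ℝ := ‖c2‖ with hy_def
  have hx0 : 0 ≤ x := norm_nonneg c1
  have hy0 : 0 ≤ y := norm_nonneg c2
  have habs : ‖-7*c1^4 + 4*c1^2*c2 + 16*c1*c3 - 12*c2^2‖
      ≤ 7*x^4 + 4*x^2*y + 16 * ‖c1*c3‖ + 12*y^2 := by
    calc ‖(-7*c1^4 + 4*c1^2*c2 + 16*c1*c3) - 12*c2^2‖
        ≤ ‖-7*c1^4 + 4*c1^2*c2 + 16*c1*c3‖ + ‖12*c2^2‖ := by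
          exact norm_sub_le _ _
    _ ≤ (‖-7*c1^4 + 4*c1^2*c2‖ + ‖16*c1*c3‖) + ‖12*c2^2‖ := by
          gcongr; exact norm_add_le _ _
    _ ≤ ((‖-7*c1^4‖ + ‖4*c1^2*c2‖) + ‖16*c1*c3‖)
          + ‖12*c2^2‖ := by gcongr; exact norm_add_le _ _
    _ = 7*x^4 + 4*x^2*y + 16 * ‖c1*c3‖ + 12*y^2 := by
          simp [norm_mul, norm_pow, hx_def, hy_def]
          ring
  have main : ‖-7*c1^4 + 4*c1^2*c2 + 16*c1*c3 - 12*c2^2‖ ≤ 12 := by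
    rcases lt_or_eq_of_le B1 with hx1 | hx1
    · -- nondegenerate
      have hρ : (0:ℝ) < 1 - x^2 := by nlinarith
      have hA : ‖c1*c3‖ * (1 - x^2) ≤ x * ((1-x^2)^2 - y^2) + x^2 * y^2 := by
        have hsplit : c1*c3*((1 - x^2 : ℝ) : ℂ)
            = c1*(c3*((1 - x^2 : ℝ) : ℂ) + (starRingEnd ℂ) c1 * c2^2)
              - (c1 * (starRingEnd ℂ) c1) * c2^2 := by ring
        have h1 : ‖c1*c3*((1 - x^2 : ℝ) : ℂ)‖
            ≤ x * ((1-x^2)^2 - y^2) + x^2 * y^2 := by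
          rw [hsplit]
          calc ‖c1*(c3*((1 - x^2 : ℝ) : ℂ) + (starRingEnd ℂ) c1 * c2^2)
                - (c1 * (starRingEnd ℂ) c1) * c2^2‖
              ≤ ‖c1*(c3*((1 - x^2 : ℝ) : ℂ) + (starRingEnd ℂ) c1 * c2^2)‖
                + ‖(c1 * (starRingEnd ℂ) c1) * c2^2‖ := norm_sub_le _ _
          _ ≤ x * ((1-x^2)^2 - y^2) + x^2 * y^2 := by
              have t1 : ‖c1*(c3*((1 - x^2 : ℝ) : ℂ) + (starRingEnd ℂ) c1 * c2^2)‖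
                  ≤ x * ((1-x^2)^2 - y^2) := by
                rw [norm_mul]
                exact mul_le_mul_of_nonneg_left B3 hx0
              have t2 : ‖(c1 * (starRingEnd ℂ) c1) * c2^2‖ = x^2*y^2 := by
                rw [norm_mul, norm_mul, norm_pow, Complex.norm_conj]
                ring
              rw [t2]
              linarith
        rw [norm_mul, Complex.norm_real, Real.norm_eq_abs, abs_of_pos hρ] at h1
        exact h1
      have := real_ineq x y (‖c1*c3‖) hx0 hx1 hy0 B2 hA
      linarith [habs]
    · -- degenerate |c1| = 1
      obtain ⟨hc2z, hc3z⟩ := B4 hx1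
      have hN : (-7*c1^4 + 4*c1^2*(0:ℂ) + 16*c1*0 - 12*(0:ℂ)^2) = -(7*c1^4) := by ring
      rw [hc2z, hc3z, hN]
      have habs7 : ‖-(7*c1^4)‖ = 7 * x^4 := by
        rw [norm_neg, norm_mul, norm_pow]
        norm_num [hx_def]
      rw [habs7, hx1]
      norm_num
  rw [key, norm_div]
  have h48 : ‖(48 : ℂ)‖ = 48 := by norm_num
  rw [h48]
  linarith [main]

lemma re_cpow_half {w : ℂ} (hw : 0 < w.re) : 0 < (w ^ ((1:ℂ)/2)).re := by
  have hw0 : w ≠ 0 := by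
    intro h; rw [h] at hw; simp at hw
  rw [Complex.cpow_def_of_ne_zero hw0, Complex.exp_re]
  apply mul_pos (Real.exp_pos _)
  have him : (Complex.log w * ((1:ℂ)/2)).im = w.arg / 2 := by
    rw [Complex.mul_im]
    simp [Complex.log_im]
    ring
  rw [him]
  have harg : |w.arg| < Real.pi / 2 := Complex.abs_arg_lt_pi_div_two_iff.2 (Or.inl hw)
  rw [abs_lt] at harg
  apply Real.cos_pos_of_mem_Ioo
  constructor <;> [linarith; linarith]

lemma slit_one_add {z : ℂ} (hz : z ∈ ball (0:ℂ) 1) : 0 < ((1:ℂ) + z^4).re := by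
  have h1 : ‖z‖ < 1 := by simpa [Complex.dist_eq] using hz
  have h2 : ‖z^4‖ < 1 := by
    rw [norm_pow]
    have h0 := norm_nonneg z
    nlinarith [pow_lt_one₀ h0 h1 (by norm_num : 4 ≠ 0)]
  have h3 : |(z^4).re| ≤ ‖z^4‖ := Complex.abs_re_le_norm _
  rw [abs_le] at h3
  simp only [Complex.add_re, Complex.one_re]
  linarith

def Rq : ℂ → ℂ := fun z => (1 + z^4) ^ ((1:ℂ)/2)

def Gq : ℂ → ℂ := fun z => z^2/2 + (Rq z - 1)/2 - Complex.log ((1 + Rq z)/2) / 2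

def fq : ℂ → ℂ := fun z => z * Complex.exp (Gq z)

lemma Rq_re_pos {z : ℂ} (hz : z ∈ ball (0:ℂ) 1) : 0 < (Rq z).re :=
  re_cpow_half (slit_one_add hz)

lemma Rq_ne {z : ℂ} (hz : z ∈ ball (0:ℂ) 1) : Rq z ≠ 0 := by
  intro h
  have := Rq_re_pos hz
  rw [h] at this; simp at this

lemma Rq_one_add_ne {z : ℂ} (hz : z ∈ ball (0:ℂ) 1) : 1 + Rq z ≠ 0 := by
  intro h
  have h2 := Rq_re_pos hz
  have : ((1:ℂ) + Rq z).re = 1 + (Rq z).re := by simp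
  rw [h] at this
  simp at this
  linarith

lemma Rq_slit {z : ℂ} (hz : z ∈ ball (0:ℂ) 1) : ((1 + Rq z)/2) ∈ Complex.slitPlane := by
  rw [Complex.mem_slitPlane_iff]
  left
  have h2 := Rq_re_pos hz
  have : (((1:ℂ) + Rq z)/2).re = (1 + (Rq z).re)/2 := by
    rw [Complex.div_re]
    simp [Complex.normSq]
    ring
  rw [this]
  linarith

lemma Rq_sq {z : ℂ} (hz : z ∈ ball (0:ℂ) 1) : Rq z * Rq z = 1 + z^4 := by
  have hne : (1:ℂ) + z^4 ≠ 0 := by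
    intro h
    have := slit_one_add hz
    rw [h] at this; simp at this
  rw [Rq]
  rw [← Complex.cpow_add _ _ hne]
  norm_num

lemma Rq_hasDeriv {z : ℂ} (hz : z ∈ ball (0:ℂ) 1) : HasDerivAt Rq (2*z^3 / Rq z) z := by
  have h1 : HasDerivAt (fun z : ℂ => 1 + z^4) (4*z^3) z := by
    have := (hasDerivAt_pow 4 z).const_add 1
    exact this.congr_deriv (by norm_num)
  have hslit : ((1:ℂ) + z^4) ∈ Complex.slitPlane := by
    rw [Complex.mem_slitPlane_iff]; exact Or.inl (slit_one_add hz)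
  have h2 : HasDerivAt (fun w : ℂ => (fun z : ℂ => 1 + z^4) w ^ ((1:ℂ)/2))
      (((1:ℂ)/2) * ((1 + z^4) ^ ((1:ℂ)/2 - 1)) * (4*z^3)) z :=
    h1.cpow_const (c := (1:ℂ)/2) hslit
  convert h2 using 1
  · rfl
  have hne : (1:ℂ) + z^4 ≠ 0 := Complex.slitPlane_ne_zero hslit
  have h3 : ((1:ℂ) + z^4) ^ ((1:ℂ)/2 - 1) = (Rq z)⁻¹ := by
    have : ((1:ℂ)/2 - 1) = -((1:ℂ)/2) := by norm_num
    rw [this, Complex.cpow_neg]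
    rfl
  rw [h3]
  field_simp [Rq_ne hz]
  ring

lemma Gq_hasDeriv {z : ℂ} (hz : z ∈ ball (0:ℂ) 1) :
    HasDerivAt Gq (z + (2*z^3 / Rq z)/2 - ((2*z^3 / Rq z)/2 / ((1 + Rq z)/2)) / 2) z := by
  have hR := Rq_hasDeriv hz
  have h1 : HasDerivAt (fun z : ℂ => z^2/2) z z := by
    have := (hasDerivAt_pow 2 z).div_const 2
    norm_num at this
    convert this using 1
  have h2 : HasDerivAt (fun z => (Rq z - 1)/2) ((2*z^3 / Rq z)/2) z := (hR.sub_const 1).div_const 2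
  have h3 : HasDerivAt (fun z => (1 + Rq z)/2) ((2*z^3 / Rq z)/2) z := (hR.const_add 1).div_const 2
  have h4 : HasDerivAt (fun z => Complex.log ((1 + Rq z)/2))
      ((2*z^3 / Rq z)/2 / ((1 + Rq z)/2)) z := h3.clog (Rq_slit hz)
  exact ((h1.add h2).sub (h4.div_const 2))

lemma Gq_deriv_key {z : ℂ} (hz : z ∈ ball (0:ℂ) 1) :
    z * (z + (2*z^3 / Rq z)/2 - ((2*z^3 / Rq z)/2 / ((1 + Rq z)/2)) / 2) = Rq z + z^2 - 1 := by
  have hR := Rq_ne hz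
  have h1R := Rq_one_add_ne hz
  have hsq := Rq_sq hz
  have hsub : (2*z^3 / Rq z)/2 / ((1 + Rq z)/2) / 2 = z^3 / (Rq z * (1 + Rq z)) := by
    field_simp
  rw [hsub]
  field_simp [hR, h1R]
  ring_nf
  linear_combination (-Rq z) * hsq

lemma Rq_analytic {z : ℂ} (hz : z ∈ ball (0:ℂ) 1) : AnalyticAt ℂ Rq z := by
  apply AnalyticAt.cpow (analyticAt_const.add (analyticAt_id.pow 4)) analyticAt_const
  rw [Complex.mem_slitPlane_iff]
  exact Or.inl (slit_one_add hz)

lemma Gq_analytic {z : ℂ} (hz : z ∈ ball (0:ℂ) 1) : AnalyticAt ℂ Gq z := by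
  have hR := Rq_analytic hz
  apply AnalyticAt.sub
  · exact ((analyticAt_id.pow 2).div analyticAt_const two_ne_zero).add
      ((hR.sub analyticAt_const).div analyticAt_const two_ne_zero)
  · exact (((analyticAt_const.add hR).div analyticAt_const two_ne_zero).clog
      (Rq_slit hz)).div analyticAt_const two_ne_zero

lemma fq_analytic : AnalyticOnNhd ℂ fq (ball 0 1) := fun z hz =>
  analyticAt_id.mul (Gq_analytic hz).cexp

lemma Rq_zero : Rq 0 = 1 := by
  rw [Rq]
  norm_num

lemma Gq_zero : Gq 0 = 0 := by
  rw [Gq, Rq_zero]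
  norm_num

lemma fq_hasDeriv {z : ℂ} (hz : z ∈ ball (0:ℂ) 1) :
    HasDerivAt fq (Complex.exp (Gq z) + z * (Complex.exp (Gq z)
      * (z + (2*z^3 / Rq z)/2 - ((2*z^3 / Rq z)/2 / ((1 + Rq z)/2)) / 2))) z := by
  have hG := Gq_hasDeriv hz
  have hE := hG.cexp
  have := (hasDerivAt_id' z).mul hE
  exact this.congr_deriv (by ring)

lemma fq_deriv_zero : deriv fq 0 = 1 := by
  have h0 : (0:ℂ) ∈ ball (0:ℂ) 1 := by simp
  have := (fq_hasDeriv h0).deriv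
  rw [this, Gq_zero]
  simp

lemma fq_eq {z : ℂ} (hz : z ∈ ball (0:ℂ) 1) (hne : z ≠ 0) :
    z * deriv fq z / fq z = (1 + (z^2)^2) ^ ((1:ℂ)/2) + z^2 := by
  have hd := (fq_hasDeriv hz).deriv
  have hfz : fq z ≠ 0 := mul_ne_zero hne (Complex.exp_ne_zero _)
  have hkey := Gq_deriv_key hz
  have hRq : (1 + (z^2)^2) ^ ((1:ℂ)/2) = Rq z := by
    rw [Rq]
    have h4 : (z^2)^2 = z^4 := by ring
    rw [h4]
  rw [hd, hRq]
  rw [div_eq_iff hfz]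
  rw [fq]
  ring_nf
  ring_nf at hkey
  linear_combination Complex.exp (Gq z) * z * hkey

lemma wsq_derivs : deriv (fun z : ℂ => z^2) 0 = 0 ∧ deriv (deriv (fun z : ℂ => z^2)) 0 = 2 ∧
    deriv (deriv (deriv (fun z : ℂ => z^2))) 0 = 0 := by
  have hd : deriv (fun z : ℂ => z^2) = fun z => 2*z := by
    funext z; simpa using (hasDerivAt_pow 2 z).deriv
  have hd2 : deriv (fun z : ℂ => 2*z) = fun _ => (2:ℂ) := by
    funext z; simpa using ((hasDerivAt_id z).const_mul (2:ℂ)).deriv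
  have hd3 : deriv (fun _ : ℂ => (2:ℂ)) = fun _ => (0:ℂ) := by
    funext z; exact deriv_const z 2
  refine ⟨by rw [hd]; simp, by rw [hd, hd2], by rw [hd, hd2, hd3]⟩

lemma fq_hankel : iteratedDeriv 2 fq 0 = 0 ∧ iteratedDeriv 3 fq 0 = 3 ∧
    iteratedDeriv 4 fq 0 = 0 := by
  have h0mem : (0:ℂ) ∈ ball (0:ℂ) 1 := by simp
  have hf0 : fq 0 = 0 := by simp [fq]
  have hfa : AnalyticAt ℂ fq 0 := fq_analytic 0 h0mem
  have hf1 : deriv fq 0 = 1 := fq_deriv_zero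
  have hωa : AnalyticAt ℂ (fun z : ℂ => z^2) 0 := analyticAt_id.pow 2
  have hω0 : (fun z : ℂ => z^2) 0 = 0 := by simp
  have hFne : ∀ᶠ z in nhds 0, dslope fq 0 z ≠ 0 := by
    have hFa : AnalyticAt ℂ (dslope fq 0) 0 :=
      analyticOnNhd_dslope fq_analytic hf0 0 h0mem
    apply hFa.continuousAt.eventually_ne
    rw [dslope_same, hf1]
    exact one_ne_zero
  have E0 : (fun z => z * deriv fq z) =ᶠ[nhds 0]
      fun z => fq z * ((1 + ((fun z : ℂ => z^2) z) ^ 2) ^ ((1:ℂ)/2) + (fun z : ℂ => z^2) z) := by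
    filter_upwards [isOpen_ball.mem_nhds h0mem, hFne] with z hz hFz
    rcases eq_or_ne z 0 with rfl | hne
    · simp [hf0]
    · have hfz : fq z ≠ 0 := by
        rw [← dslope_mul_eq hf0 z]
        exact mul_ne_zero hne hFz
      have := fq_eq hz hne
      field_simp at this
      rw [this]; ring
  obtain ⟨hga, hg0, hg1, hg2, hg3⟩ := gvals hωa hω0
  obtain ⟨q2, q3, q4⟩ := coeffs hfa hga E0 hf0 hf1 hg0
  obtain ⟨w1, w2, w3⟩ := wsq_derivs
  rw [w1] at hg1
  rw [w1, w2] at hg2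
  rw [w1, w2, w3] at hg3
  rw [hg1] at q2 q3 q4
  rw [hg2] at q3 q4
  rw [hg3] at q4
  have hit2 : iteratedDeriv 2 fq 0 = deriv (deriv fq) 0 := by
    simp [iteratedDeriv_succ', iteratedDeriv_one]
  have hit3 : iteratedDeriv 3 fq 0 = deriv (deriv (deriv fq)) 0 := by
    simp [iteratedDeriv_succ', iteratedDeriv_one]
  have hit4 : iteratedDeriv 4 fq 0 = deriv (deriv (deriv (deriv fq))) 0 := by
    simp [iteratedDeriv_succ', iteratedDeriv_one]
  refine ⟨by rw [hit2, q2]; ring, ?_, ?_⟩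
  · rw [hit3]
    have : (2:ℂ) * deriv (deriv (deriv fq)) 0 = 2 * 3 := by rw [q3]; ring
    exact mul_left_cancel₀ two_ne_zero this
  · rw [hit4]
    have : (3:ℂ) * deriv (deriv (deriv (deriv fq))) 0 = 3 * 0 := by rw [q4]; ring
    exact mul_left_cancel₀ three_ne_zero this

end HankelAux

/-- Sharp Hankel determinant bound 1/4 for the class 𝒮*(q), where zf'/f is subordinate
to q(z) = √(1+z²) + z. -/
theorem hankel_Sq_sharp :
    (∀ (f ω : ℂ → ℂ) (a : ℕ → ℂ),
      AnalyticOn ℂ f (ball 0 1) → f 0 = 0 → deriv f 0 = 1 →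
      AnalyticOn ℂ ω (ball 0 1) → ω 0 = 0 →
      (∀ z ∈ ball (0:ℂ) 1, ‖ω z‖ < 1) →
      (∀ z ∈ ball (0:ℂ) 1, z ≠ 0 →
        z * deriv f z / f z = (1 + ω z ^ 2) ^ ((1 : ℂ) / 2) + ω z) →
      (∀ n, a n = iteratedDeriv n f 0 / n.factorial) →
      ‖a 2 * a 4 - a 3 ^ 2‖ ≤ 1 / 4) ∧
    (∃ f ω : ℂ → ℂ, AnalyticOn ℂ f (ball 0 1) ∧ f 0 = 0 ∧ deriv f 0 = 1 ∧
      AnalyticOn ℂ ω (ball 0 1) ∧ ω 0 = 0 ∧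
      (∀ z ∈ ball (0:ℂ) 1, ‖ω z‖ < 1) ∧
      (∀ z ∈ ball (0:ℂ) 1, z ≠ 0 →
        z * deriv f z / f z = (1 + ω z ^ 2) ^ ((1 : ℂ) / 2) + ω z) ∧
      ‖(iteratedDeriv 2 f 0 / 2) * (iteratedDeriv 4 f 0 / 24)
        - (iteratedDeriv 3 f 0 / 6) ^ 2‖ = 1 / 4) := by
  constructor
  · intro f ω a hf hf0 hf1 hω hω0 hωlt heq ha
    exact part1 f ω a hf hf0 hf1 hω hω0 hωlt heq ha
  · refine ⟨fq, fun z => z^2, ?_, by simp [fq], fq_deriv_zero,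
      ?_, by simp, ?_, ?_, ?_⟩
    · exact (isOpen_ball.analyticOn_iff_analyticOnNhd).2 fq_analytic
    · exact (isOpen_ball.analyticOn_iff_analyticOnNhd).2
        (fun z _ => analyticAt_id.pow 2)
    · intro z hz
      have h1 : ‖z‖ < 1 := by simpa [Complex.dist_eq] using hz
      rw [norm_pow]
      have h0 := norm_nonneg z
      nlinarith
    · intro z hz hne
      exact fq_eq hz hne
    · obtain ⟨h2, h3, h4⟩ := fq_hankel
      rw [h2, h3, h4]
      have hval : ((0:ℂ)/2) * ((0:ℂ)/24) - ((3:ℂ)/6)^2 = ((-(1/4) : ℝ) : ℂ) := by norm_num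
      rw [hval, Complex.norm_real, Real.norm_eq_abs]
      norm_num
end

section
/- Let c₁, c₂, c₃ be complex numbers with c₁ real, 0 ≤ c₁ ≤ 1, |c₂| ≤ 1 - c₁², and |c₃| ≤ 1 - c₁² - |c₂|²/(1+c₁). Then for 0 ≤ α < 1: |c₁||c₃| + (1/2)c₁²|c₂| + (1/4)|4α² - 8α + 3|c₁⁴ + (3/4)|c₂|² ≤ 3/4. -/
/-- Key elementary inequality for the sharp bound (1-α)² for starlike functions of order α. -/
theorem key_ineq_starlike (α c₁ : ℝ) (c₂ c₃ : ℂ)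
    (hα0 : 0 ≤ α) (hα1 : α < 1)
    (h10 : 0 ≤ c₁) (h11 : c₁ ≤ 1)
    (hc2 : ‖c₂‖ ≤ 1 - c₁ ^ 2)
    (hc3 : ‖c₃‖ ≤ 1 - c₁ ^ 2 - ‖c₂‖ ^ 2 / (1 + c₁)) :
    |c₁| * ‖c₃‖ + (1 / 2) * c₁ ^ 2 * ‖c₂‖
      + (1 / 4) * |4 * α ^ 2 - 8 * α + 3| * c₁ ^ 4
      + (3 / 4) * ‖c₂‖ ^ 2 ≤ 3 / 4 := by
  set a := ‖c₃‖ with ha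
  set b := ‖c₂‖ with hb
  have ha0 : 0 ≤ a := norm_nonneg _
  have hb0 : 0 ≤ b := norm_nonneg _
  have hx : |c₁| = c₁ := abs_of_nonneg h10
  have hαb : |4 * α ^ 2 - 8 * α + 3| ≤ 3 := by
    rw [abs_le]; constructor <;> nlinarith [sq_nonneg α, sq_nonneg (2*α - 2)]
  have hpos : (0:ℝ) < 1 + c₁ := by linarith
  have hc3' : a * (1 + c₁) ≤ (1 - c₁ ^ 2) * (1 + c₁) - b ^ 2 := by
    have := (div_le_iff₀ hpos).mp (by linarith [hc3] : b ^ 2 / (1 + c₁) ≤ 1 - c₁ ^ 2 - a)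
    nlinarith [this]
  rw [hx]
  have hc14 : (1 / 4) * |4 * α ^ 2 - 8 * α + 3| * c₁ ^ 4 ≤ (3/4) * c₁ ^ 4 := by
    have h4 : (0:ℝ) ≤ c₁ ^ 4 := by positivity
    nlinarith [mul_le_mul_of_nonneg_right hαb h4]
  have key : c₁ * a + (1/2) * c₁ ^ 2 * b + (3/4) * c₁ ^ 4 + (3/4) * b ^ 2 ≤ 3/4 := by
    nlinarith [mul_le_mul_of_nonneg_left hc3' h10, sq_nonneg (b - (1 - c₁^2)),
      mul_nonneg (mul_nonneg h10 h10) (sub_nonneg.mpr hc2),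
      mul_nonneg (sub_nonneg.mpr hc2) hb0, sq_nonneg c₁, sq_nonneg (1 - c₁),
      mul_nonneg (mul_nonneg h10 hb0) hb0, sq_nonneg (c₁ * (1 - c₁))]
  linarith
end

section
/- Let c₁, c₂, c₃ be complex numbers with c₁ real, 0 ≤ c₁ ≤ 1, |c₂| ≤ 1 - c₁², and |c₃| ≤ 1 - c₁² - |c₂|²/(1+c₁). Then |c₁||c₃| + (1/4)c₁²|c₂| + (7/16)c₁⁴ + (3/4)|c₂|² ≤ 3/4 - (1/4)c₁² - (1/16)c₁⁴ ≤ 3/4. -/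
lemma key_real (t a b : ℝ) (ht0 : 0 ≤ t) (ht1 : t ≤ 1) (ha0 : 0 ≤ a) (hb0 : 0 ≤ b)
    (ha : a ≤ 1 - t ^ 2) (hb : b * (1 + t) ≤ (1 - t ^ 2) * (1 + t) - a ^ 2) :
    t * b + (1 / 4) * t ^ 2 * a + (7 / 16) * t ^ 4 + (3 / 4) * a ^ 2
      ≤ 3 / 4 - (1 / 4) * t ^ 2 - (1 / 16) * t ^ 4 := by
  nlinarith [mul_nonneg ht0 hb0, sq_nonneg (1 - t), sq_nonneg a, sq_nonneg (a - (1 - t^2)),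
    mul_nonneg ht0 ha0, mul_nonneg (mul_nonneg ht0 ht0) hb0, sq_nonneg (t*(1-t)),
    mul_nonneg ha0 ha0, sq_nonneg (t - 1), sq_nonneg (t^2 - 1), sq_nonneg (a*t),
    mul_nonneg (mul_nonneg ht0 ht0) (sq_nonneg (1 - t)),
    mul_nonneg ht0 (sq_nonneg a)]

/-- Key elementary inequality for the sharp bound 1/4 for the class 𝒮*(q). -/
theorem key_ineq_Sq (c₁ : ℝ) (c₂ c₃ : ℂ)
    (h10 : 0 ≤ c₁) (h11 : c₁ ≤ 1)
    (hc2 : ‖c₂‖ ≤ 1 - c₁ ^ 2)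
    (hc3 : ‖c₃‖ ≤ 1 - c₁ ^ 2 - ‖c₂‖ ^ 2 / (1 + c₁)) :
    |c₁| * ‖c₃‖ + (1 / 4) * c₁ ^ 2 * ‖c₂‖
        + (7 / 16) * c₁ ^ 4 + (3 / 4) * ‖c₂‖ ^ 2
      ≤ 3 / 4 - (1 / 4) * c₁ ^ 2 - (1 / 16) * c₁ ^ 4 ∧
    3 / 4 - (1 / 4) * c₁ ^ 2 - (1 / 16) * c₁ ^ 4 ≤ 3 / 4 := by
  have hpos : (0:ℝ) < 1 + c₁ := by linarith
  constructor
  · rw [abs_of_nonneg h10]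
    apply key_real c₁ (‖c₂‖) (‖c₃‖) h10 h11 (norm_nonneg _)
      (norm_nonneg _) hc2
    have key : ‖c₂‖ ^ 2 / (1 + c₁) * (1 + c₁) = ‖c₂‖ ^ 2 :=
      div_mul_cancel₀ _ (ne_of_gt hpos)
    have := mul_le_mul_of_nonneg_right hc3 (le_of_lt hpos)
    nlinarith [this]
  · nlinarith [sq_nonneg c₁, sq_nonneg (c₁^2)]
end
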